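/- arXiv:2509.17077 — 9 statements merged into one kernel-verified Lean document; each statement's English description precedes it below -/
import Mathlib

section
/- Mirroring of end-of-cycle stagnation in restarted GMRES: Let A be an n×n complex matrix, r0 a nonzero vector in ℂ^n, m ≥ 1 and 0 ≤ s ≤ m. Suppose p̂ is a polynomial of degree at most m−s with p̂(0)=1 such that ‖p̂(A)r0‖ = min{‖p(A)r0‖ : deg p ≤ m, p(0)=1} (i.e., the GMRES minimum over degree m is already attained at degree m−s, stagnation of length s at the end of the cycle). Set r_m = p̂(A)r0, the initial residual of the next restart cycle. Then min{‖p(A)r_m‖ : deg p ≤ s, p(0)=1} = ‖r_m‖, i.e., the next cycle begins with s iterations of stagnation. -/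
open Matrix Polynomial

/-- The Euclidean 2-norm of a vector in `ℂ^n`. -/
noncomputable def norm2 {n : ℕ} (v : Fin n → ℂ) : ℝ :=
  ‖(WithLp.equiv 2 (Fin n → ℂ)).symm v‖

/-- **Mirroring of end-of-cycle stagnation in restarted GMRES.**
If the GMRES minimum over polynomials of degree at most `m` (with value `1` at `0`) applied to
`r0` is already attained by a polynomial `phat` of degree at most `m - s` (stagnation of length
`s` at the end of the cycle), then, restarting with `rm = phat(A) r0`, the GMRES minimum over
polynomials of degree at most `s` applied to `rm` equals `‖rm‖`: the next cycle begins with `s`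
iterations of stagnation. -/
theorem stagnation_mirroring
    {n : ℕ} (A : Matrix (Fin n) (Fin n) ℂ) (r0 : Fin n → ℂ) (hr0 : r0 ≠ 0)
    (m s : ℕ) (hm : 1 ≤ m) (hs : s ≤ m)
    (phat : Polynomial ℂ) (hdeg : phat.natDegree ≤ m - s) (h0 : phat.eval 0 = 1)
    (hmin : ∀ p : Polynomial ℂ, p.natDegree ≤ m → p.eval 0 = 1 →
      norm2 ((aeval A phat).mulVec r0) ≤ norm2 ((aeval A p).mulVec r0))
    (rm : Fin n → ℂ) (hrm : rm = (aeval A phat).mulVec r0) :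
    sInf {x : ℝ | ∃ p : Polynomial ℂ, p.natDegree ≤ s ∧ p.eval 0 = 1 ∧
      x = norm2 ((aeval A p).mulVec rm)} = norm2 rm := by
  have hmem : norm2 rm ∈ {x : ℝ | ∃ p : Polynomial ℂ, p.natDegree ≤ s ∧ p.eval 0 = 1 ∧
      x = norm2 ((aeval A p).mulVec rm)} := by
    refine ⟨1, by simp, by simp, ?_⟩
    simp
  have hlb : ∀ x ∈ {x : ℝ | ∃ p : Polynomial ℂ, p.natDegree ≤ s ∧ p.eval 0 = 1 ∧
      x = norm2 ((aeval A p).mulVec rm)}, norm2 rm ≤ x := by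
    rintro x ⟨p, hps, hp0, rfl⟩
    have hdeg' : (p * phat).natDegree ≤ m := by
      calc (p * phat).natDegree ≤ p.natDegree + phat.natDegree := natDegree_mul_le
        _ ≤ s + (m - s) := Nat.add_le_add hps hdeg
        _ = m := by omega
    have h0' : (p * phat).eval 0 = 1 := by simp [h0, hp0]
    have := hmin (p * phat) hdeg' h0'
    rw [hrm]
    calc norm2 ((aeval A phat).mulVec r0) ≤ norm2 ((aeval A (p * phat)).mulVec r0) := this
      _ = norm2 ((aeval A p).mulVec ((aeval A phat).mulVec r0)) := by
          rw [_root_.map_mul, Matrix.mulVec_mulVec]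
  exact le_antisymm (csInf_le ⟨norm2 rm, hlb⟩ hmem) (le_csInf ⟨_, hmem⟩ hlb)
end

section
/- After s stagnating iterations at the end of a GMRES restart cycle, any subsequent cycle of length at most s provides no residual improvement: Let A be an n×n complex matrix, r0 ∈ ℂ^n nonzero, m ≥ 1, 0 ≤ s ≤ m. Suppose p̂ has degree at most m−s, p̂(0)=1, and ‖p̂(A)r0‖ = min{‖p(A)r0‖ : deg p ≤ m, p(0)=1}, and set r_m = p̂(A)r0. Then for every t with 0 ≤ t ≤ s, min{‖p(A)r_m‖ : deg p ≤ t, p(0)=1} = ‖r_m‖. -/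
open Matrix Polynomial

/-- **After `s` stagnating iterations at the end of a GMRES restart cycle, any subsequent cycle
of length at most `s` provides no residual improvement.**
If the GMRES minimum over polynomials of degree at most `m` (with value `1` at `0`) applied to
`r0` is attained by a polynomial `phat` of degree at most `m - s`, and `rm = phat(A) r0`, then
for every `t ≤ s` the GMRES minimum over polynomials of degree at most `t` applied to `rm`
equals `‖rm‖`. -/
theorem short_cycles_no_improvement
    {n : ℕ} (A : Matrix (Fin n) (Fin n) ℂ) (r0 : Fin n → ℂ) (hr0 : r0 ≠ 0)
    (m s : ℕ) (hm : 1 ≤ m) (hs : s ≤ m)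
    (phat : Polynomial ℂ) (hdeg : phat.natDegree ≤ m - s) (h0 : phat.eval 0 = 1)
    (hmin : ∀ p : Polynomial ℂ, p.natDegree ≤ m → p.eval 0 = 1 →
      norm2 ((aeval A phat).mulVec r0) ≤ norm2 ((aeval A p).mulVec r0))
    (rm : Fin n → ℂ) (hrm : rm = (aeval A phat).mulVec r0) :
    ∀ t : ℕ, t ≤ s →
      sInf {x : ℝ | ∃ p : Polynomial ℂ, p.natDegree ≤ t ∧ p.eval 0 = 1 ∧
        x = norm2 ((aeval A p).mulVec rm)} = norm2 rm := by
  intro t ht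
  have key : ∀ p : Polynomial ℂ, p.natDegree ≤ t → p.eval 0 = 1 →
      norm2 rm ≤ norm2 ((aeval A p).mulVec rm) := by
    intro p hpd hp0
    have hd : (p * phat).natDegree ≤ m := by
      calc (p * phat).natDegree ≤ p.natDegree + phat.natDegree := natDegree_mul_le
        _ ≤ t + (m - s) := Nat.add_le_add hpd hdeg
        _ ≤ s + (m - s) := Nat.add_le_add_right ht _
        _ = m := Nat.add_sub_cancel' hs
    have h0' : (p * phat).eval 0 = 1 := by simp [hp0, h0]
    have := hmin (p * phat) hd h0'
    rw [_root_.map_mul] at this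
    rw [hrm, Matrix.mulVec_mulVec]
    exact this
  apply le_antisymm
  · apply csInf_le
    · exact ⟨norm2 rm, fun x ⟨p, h1, h2, h3⟩ => h3 ▸ key p h1 h2⟩
    · refine ⟨1, by simp, by simp, ?_⟩
      simp [Matrix.one_mulVec]
  · exact le_csInf ⟨norm2 rm, 1, by simp, by simp, by simp [Matrix.one_mulVec]⟩
      fun x ⟨p, h1, h2, h3⟩ => h3 ▸ key p h1 h2
end

section
/- Rank of the restarted Krylov matrix versus end-of-cycle stagnation: Let A be an invertible n×n complex matrix, b ∈ ℂ^n, n = ℓm with ℓ, m ≥ 1, and suppose the Krylov matrix K = [b, Ab, …, A^{n−1}b] has rank n. Define the restarted GMRES residuals with cycle length m: r0^(1) = b, and for each cycle k, r_j^(k) is the unique vector of minimal Euclidean norm in {p(A)r0^(k) : deg p ≤ j, p(0)=1}, with r0^(k+1) = r_m^(k). Let K̃ = [K^(1), K^(2), …, K^(ℓ)] ∈ ℂ^{n×n} be the restarted Krylov matrix, where K^(k) = [r0^(k), A r0^(k), …, A^{m−1} r0^(k)]. Then rank(K̃) = n if and only if there is no stagnation at the end of any restart cycle, i.e., ‖r_m^(k)‖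 < ‖r_{m−1}^(k)‖ for every k = 1, …, ℓ−1. -/
open Matrix Polynomial

/-- `r` is the GMRES residual at step `j` for matrix `A` and initial residual `r0`:
it belongs to `{p(A) r0 : deg p ≤ j, p(0) = 1}` and has minimal Euclidean norm there. -/
def IsGMRESResidual {n : ℕ} (A : Matrix (Fin n) (Fin n) ℂ) (r0 : Fin n → ℂ)
    (j : ℕ) (r : Fin n → ℂ) : Prop :=
  (∃ p : Polynomial ℂ, p.natDegree ≤ j ∧ p.eval 0 = 1 ∧ r = (aeval A p).mulVec r0) ∧
  ∀ q : Polynomial ℂ, q.natDegree ≤ j → q.eval 0 = 1 →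
    norm2 r ≤ norm2 ((aeval A q).mulVec r0)

/-- The linear map `p ↦ p(A) b`. -/
noncomputable def krylovMap {n : ℕ} (A : Matrix (Fin n) (Fin n) ℂ) (b : Fin n → ℂ) :
    Polynomial ℂ →ₗ[ℂ] (Fin n → ℂ) where
  toFun p := (aeval A p).mulVec b
  map_add' p q := by simp only [map_add, Matrix.add_mulVec]
  map_smul' c p := by
    simp only [_root_.map_smul, Matrix.smul_mulVec, RingHom.id_apply]

lemma krylovMap_apply {n : ℕ} (A : Matrix (Fin n) (Fin n) ℂ) (b : Fin n → ℂ) (p : Polynomial ℂ) :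
    krylovMap A b p = (aeval A p).mulVec b := rfl

/-- Nonzero polynomials with pairwise distinct degrees are linearly independent. -/
lemma li_of_natDegree_injective {ι : Type*} [DecidableEq ι] (f : ι → Polynomial ℂ)
    (h0 : ∀ i, f i ≠ 0)
    (hd : Function.Injective fun i => (f i).natDegree) : LinearIndependent ℂ f := by
  rw [linearIndependent_iff']
  intro s
  induction s using Finset.strongInduction with
  | _ s ih =>
    intro g hg i hi
    have hsne : s.Nonempty := ⟨i, hi⟩
    obtain ⟨i₀, hi₀s, hmax⟩ := s.exists_max_image (fun i => (f i).natDegree) hsne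
    set d := (f i₀).natDegree with hd0
    have hc : ∀ j ∈ s, j ≠ i₀ → g j * (f j).coeff d = 0 := by
      intro j hjs hji
      have : (f j).natDegree < d := lt_of_le_of_ne (hmax j hjs) (fun h => hji (hd h))
      rw [Polynomial.coeff_eq_zero_of_natDegree_lt this, mul_zero]
    have hcoeff := congrArg (fun p => Polynomial.coeff p d) hg
    simp only [Polynomial.finset_sum_coeff, Polynomial.coeff_smul, smul_eq_mul,
      Polynomial.coeff_zero] at hcoeff
    rw [Finset.sum_eq_single i₀ hc (fun h => absurd hi₀s h)] at hcoeff
    have hlc : (f i₀).coeff d ≠ 0 := by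
      rw [hd0, ← Polynomial.leadingCoeff]
      exact Polynomial.leadingCoeff_ne_zero.mpr (h0 i₀)
    have hgi₀ : g i₀ = 0 := by
      rcases mul_eq_zero.mp hcoeff with h | h
      · exact h
      · exact absurd h hlc
    rcases eq_or_ne i i₀ with rfl | hne
    · exact hgi₀
    · have hsub : s.erase i₀ ⊂ s := Finset.erase_ssubset hi₀s
      refine ih _ hsub g ?_ i (Finset.mem_erase.mpr ⟨hne, hi⟩)
      rw [Finset.sum_erase_eq_sub hi₀s, hg, hgi₀, zero_smul, sub_zero]

/-- rank of the matrix with columns `f j` equals card iff the columns are independent. -/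
lemma rank_eq_card_iff_li {n' : ℕ} {ι : Type*} [Fintype ι] (f : ι → Fin n' → ℂ) :
    (Matrix.of fun i j => f j i).rank = Fintype.card ι ↔ LinearIndependent ℂ f := by
  have ht : (Matrix.of fun i j => f j i).col = f := rfl
  rw [Matrix.rank_eq_finrank_span_cols, ht, linearIndependent_iff_card_eq_finrank_span,
    Set.finrank, eq_comm]

lemma krylovMap_X_pow {n : ℕ} (A : Matrix (Fin n) (Fin n) ℂ) (b : Fin n → ℂ) (i : ℕ) :
    krylovMap A b (X ^ i) = (A ^ i).mulVec b := by
  rw [krylovMap_apply, aeval_X_pow]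

lemma poly_eq_zero_of_krylov {n : ℕ} {A : Matrix (Fin n) (Fin n) ℂ} {b : Fin n → ℂ}
    (hli : LinearIndependent ℂ fun i : Fin n => (A ^ (i : ℕ)).mulVec b)
    {p : Polynomial ℂ} (hp : p.natDegree < n) (h : krylovMap A b p = 0) : p = 0 := by
  have hrep : krylovMap A b p = ∑ i : Fin n, p.coeff i • ((A ^ (i : ℕ)).mulVec b) := by
    conv_lhs => rw [p.as_sum_range' n hp]
    rw [map_sum, ← Fin.sum_univ_eq_sum_range fun i => krylovMap A b (monomial i (p.coeff i))]
    refine Finset.sum_congr rfl fun i _ => ?_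
    rw [← smul_X_eq_monomial, _root_.map_smul, krylovMap_X_pow]
  rw [hrep] at h
  have hz := Fintype.linearIndependent_iff.mp hli _ h
  ext i
  rcases lt_or_ge i n with hin | hin
  · simpa using hz ⟨i, hin⟩
  · simp [Polynomial.coeff_eq_zero_of_natDegree_lt (lt_of_lt_of_le hp hin)]

lemma li_krylov {n : ℕ} {A : Matrix (Fin n) (Fin n) ℂ} {b : Fin n → ℂ}
    (hli : LinearIndependent ℂ fun i : Fin n => (A ^ (i : ℕ)).mulVec b)
    {ι : Type*} [Fintype ι] (P : ι → Polynomial ℂ) (hn : 0 < n)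
    (hdeg : ∀ i, (P i).natDegree < n) (hP : LinearIndependent ℂ P) :
    LinearIndependent ℂ fun i => krylovMap A b (P i) := by
  rw [Fintype.linearIndependent_iff]
  intro g hg
  have h1 : krylovMap A b (∑ i, g i • P i) = 0 := by
    rw [map_sum]
    simpa only [_root_.map_smul] using hg
  have h2 : (∑ i, g i • P i).natDegree < n := by
    refine lt_of_le_of_lt (Polynomial.natDegree_sum_le_of_forall_le _ _
      fun i _ => le_trans (natDegree_smul_le _ _) (Nat.le_sub_one_of_lt (hdeg i))) ?_
    omega
  exact Fintype.linearIndependent_iff.mp hP g (poly_eq_zero_of_krylov hli h2 h1)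

lemma eq_of_norm2_eq {n : ℕ} {u v : Fin n → ℂ} (h1 : norm2 u = norm2 v)
    (h2 : norm2 u ≤ norm2 ((2⁻¹ : ℂ) • (u + v))) : u = v := by
  set e := (WithLp.equiv 2 (Fin n → ℂ)).symm with he
  have hmid : norm2 ((2⁻¹ : ℂ) • (u + v)) = ‖(2⁻¹ : ℂ)‖ * ‖e u + e v‖ := by
    show ‖e ((2⁻¹ : ℂ) • (u + v))‖ = _
    rw [show e ((2⁻¹ : ℂ) • (u + v)) = (2⁻¹ : ℂ) • (e u + e v) from rfl, norm_smul]
  have hpar := parallelogram_law_with_norm ℂ (e u) (e v)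
  have h1' : ‖e u‖ = ‖e v‖ := h1
  have h2' : ‖e u‖ ≤ ‖(2⁻¹ : ℂ)‖ * ‖e u + e v‖ := le_trans (le_of_eq rfl) (hmid ▸ h2)
  have hhalf : ‖(2⁻¹ : ℂ)‖ = 2⁻¹ := by norm_num
  rw [hhalf] at h2'
  have hz : ‖e u - e v‖ = 0 := by
    nlinarith [norm_nonneg (e u - e v), norm_nonneg (e u + e v), norm_nonneg (e u)]
  have huv : e u = e v := by
    have := norm_eq_zero.mp hz
    rwa [sub_eq_zero] at this
  exact (WithLp.equiv 2 (Fin n → ℂ)).symm.injective huv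

lemma krylov_mul_mem_span {n N : ℕ} (A : Matrix (Fin n) (Fin n) ℂ) (b : Fin n → ℂ)
    (Q s : Polynomial ℂ) (hs : s.natDegree < N) :
    krylovMap A b (s * Q) ∈
      Submodule.span ℂ (Set.range fun i : Fin N => krylovMap A b (X ^ (i : ℕ) * Q)) := by
  rw [s.as_sum_range' N hs, Finset.sum_mul, map_sum]
  refine Submodule.sum_mem _ fun i hi => ?_
  rw [← smul_X_eq_monomial, smul_mul_assoc, _root_.map_smul]
  exact Submodule.smul_mem _ _
    (Submodule.subset_span ⟨⟨i, Finset.mem_range.mp hi⟩, rfl⟩)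

lemma not_li_of_card_gt {ι : Type*} [Fintype ι] {n : ℕ} (v : ι → Fin n → ℂ)
    (W : Submodule ℂ (Fin n → ℂ)) (hmem : ∀ i, v i ∈ W)
    (hcard : Module.finrank ℂ W < Fintype.card ι) : ¬ LinearIndependent ℂ v := by
  intro h
  have h' : LinearIndependent ℂ (fun i => (⟨v i, hmem i⟩ : W)) :=
    LinearIndependent.of_comp W.subtype h
  exact absurd h'.fintype_card_le_finrank (by omega)

/-- **Rank of the restarted Krylov matrix versus end-of-cycle stagnation.**
Let `A` be invertible, `n = ℓ * m`, and suppose the Krylov matrix `[b, Ab, …, A^{n-1}b]` has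
rank `n`.  Let `r k j` be the restarted GMRES residuals with cycle length `m`
(cycle `k = 0, …, ℓ-1`, starting residuals `rstart 0 = b`, `rstart (k+1) = r k m`).
Then the restarted Krylov matrix `K̃`, whose `(k,j)` column is `A^j rstart k`, has rank `n`
if and only if there is no stagnation at the end of any restart cycle, i.e.
`‖r k m‖ < ‖r k (m-1)‖` for every cycle `k` with `k + 1 < ℓ`. -/
theorem restarted_krylov_matrix_rank
    {n ℓ m : ℕ} (hl : 1 ≤ ℓ) (hm : 1 ≤ m) (hn : n = ℓ * m)
    (A : Matrix (Fin n) (Fin n) ℂ) (hA : IsUnit A.det)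
    (b : Fin n → ℂ)
    (hK : (Matrix.of fun (i : Fin n) (j : Fin n) => (A ^ (j : ℕ)).mulVec b i).rank = n)
    (r : ℕ → ℕ → (Fin n → ℂ)) (rstart : ℕ → (Fin n → ℂ))
    (hstart0 : rstart 0 = b)
    (hres : ∀ k j, IsGMRESResidual A (rstart k) j (r k j))
    (hrestart : ∀ k, rstart (k + 1) = r k m) :
    (Matrix.of fun (i : Fin n) (kj : Fin ℓ × Fin m) =>
        (A ^ ((kj.2 : ℕ))).mulVec (rstart (kj.1 : ℕ)) i).rank = n ↔
      ∀ k : ℕ, k + 1 < ℓ → norm2 (r k m) < norm2 (r k (m - 1)) := by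
  have hm' : 0 < m := hm
  have hn0 : 0 < n := by
    rw [hn]; exact Nat.mul_pos hl hm
  have hli : LinearIndependent ℂ fun i : Fin n => (A ^ (i : ℕ)).mulVec b :=
    (rank_eq_card_iff_li _).mp (by rw [Fintype.card_fin]; exact hK)
  choose pk hpkdeg hpk0 hpkrep using fun k => (hres k m).1
  set Q : ℕ → Polynomial ℂ := fun k => ∏ i ∈ Finset.range k, pk i with hQdef
  have hpkne : ∀ k, pk k ≠ 0 := by
    intro k h
    have := hpk0 k
    rw [h] at this
    simp at this
  have hQ0 : ∀ k, (Q k).eval 0 = 1 := by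
    intro k
    simp [hQdef, Polynomial.eval_prod, hpk0]
  have hQne : ∀ k, Q k ≠ 0 := by
    intro k h
    have := hQ0 k
    rw [h] at this
    simp at this
  have hrstart' : ∀ k, rstart k = krylovMap A b (Q k) := by
    intro k
    induction k with
    | zero => simp [hQdef, krylovMap_apply, hstart0]
    | succ k ih =>
      rw [hrestart k, hpkrep k, ih, krylovMap_apply, krylovMap_apply,
        Matrix.mulVec_mulVec, ← _root_.map_mul]
      congr 1
      rw [hQdef]
      simp only []
      rw [Finset.prod_range_succ, mul_comm]
  have hcol : ∀ (k j : ℕ), (A ^ j).mulVec (rstart k) = krylovMap A b (X ^ j * Q k) := by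
    intro k j
    rw [hrstart' k, krylovMap_apply, krylovMap_apply, Matrix.mulVec_mulVec, _root_.map_mul,
      aeval_X_pow]
  have hcard : Fintype.card (Fin ℓ × Fin m) = n := by
    simp [hn]
  have hrank : (Matrix.of fun (i : Fin n) (kj : Fin ℓ × Fin m) =>
        (A ^ ((kj.2 : ℕ))).mulVec (rstart (kj.1 : ℕ)) i).rank = n ↔
      LinearIndependent ℂ
        (fun kj : Fin ℓ × Fin m => (A ^ ((kj.2 : ℕ))).mulVec (rstart (kj.1 : ℕ))) := by
    have h := rank_eq_card_iff_li
      (fun kj : Fin ℓ × Fin m => (A ^ ((kj.2 : ℕ))).mulVec (rstart (kj.1 : ℕ)))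
    rwa [hcard] at h
  constructor
  · -- rank = n → no stagnation
    intro hr k₀ hk₀
    by_contra hstag
    push_neg at hstag
    obtain ⟨q, hqdeg, hq0, hqrep⟩ := (hres k₀ (m - 1)).1
    have hle : norm2 (r k₀ m) ≤ norm2 (r k₀ (m - 1)) := by
      rw [hqrep]
      exact (hres k₀ m).2 q (le_trans hqdeg (by omega)) hq0
    have heq : norm2 (r k₀ m) = norm2 (r k₀ (m - 1)) := le_antisymm hle hstag
    set pw : Polynomial ℂ := (2⁻¹ : ℂ) • (pk k₀ + q) with hpw
    have hpwdeg : pw.natDegree ≤ m :=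
      le_trans (natDegree_smul_le _ _)
        (le_trans (natDegree_add_le _ _) (max_le (hpkdeg k₀) (le_trans hqdeg (by omega))))
    have hpw0 : pw.eval 0 = 1 := by
      rw [hpw]
      simp [hpk0 k₀, hq0]
      norm_num
    have hmin := (hres k₀ m).2 pw hpwdeg hpw0
    have hmid : (aeval A pw).mulVec (rstart k₀) = (2⁻¹ : ℂ) • (r k₀ m + r k₀ (m - 1)) := by
      have : (aeval A pw).mulVec (rstart k₀) = krylovMap A (rstart k₀) pw := rfl
      rw [this, hpw, _root_.map_smul, map_add, krylovMap_apply, krylovMap_apply,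
        ← hpkrep k₀, ← hqrep]
    rw [hmid] at hmin
    have huv : r k₀ m = r k₀ (m - 1) := eq_of_norm2_eq heq hmin
    have hstartq : rstart (k₀ + 1) = krylovMap A b (q * Q k₀) := by
      rw [hrestart, huv, hqrep, hrstart' k₀, krylovMap_apply, krylovMap_apply,
        Matrix.mulVec_mulVec, ← _root_.map_mul]
    set N := 2 * m - 1 with hN
    set W := Submodule.span ℂ
      (Set.range fun i : Fin N => krylovMap A b (X ^ (i : ℕ) * Q k₀)) with hW
    set col : Fin ℓ × Fin m → (Fin n → ℂ) :=
      fun kj => (A ^ ((kj.2 : ℕ))).mulVec (rstart (kj.1 : ℕ)) with hcoldef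
    have hemb : ∀ tj : Fin 2 × Fin m, k₀ + (tj.1 : ℕ) < ℓ := by
      intro tj
      have := tj.1.isLt
      omega
    set emb : Fin 2 × Fin m → Fin ℓ × Fin m :=
      fun tj => (⟨k₀ + (tj.1 : ℕ), hemb tj⟩, tj.2) with hembdef
    have hembinj : Function.Injective emb := by
      rintro ⟨t1, j1⟩ ⟨t2, j2⟩ h
      have h1 : k₀ + (t1 : ℕ) = k₀ + (t2 : ℕ) := congrArg (fun p => (p.1 : ℕ)) h
      have h2 : j1 = j2 := congrArg Prod.snd h
      have h1' : t1 = t2 := Fin.ext (by omega)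
      rw [Prod.mk.injEq]
      exact ⟨h1', h2⟩
    have hmemW : ∀ tj : Fin 2 × Fin m, col (emb tj) ∈ W := by
      rintro ⟨t, j⟩
      have htlt := t.isLt
      have hjlt := j.isLt
      rcases (by omega : (t : ℕ) = 0 ∨ (t : ℕ) = 1) with ht | ht
      · have : col (emb (t, j)) = krylovMap A b (X ^ (j : ℕ) * Q k₀) := by
          rw [hcoldef, hembdef]
          simp only [ht, Nat.add_zero]
          exact hcol k₀ j
        rw [this]
        exact Submodule.subset_span ⟨⟨(j : ℕ), by omega⟩, rfl⟩
      · have hcol1 : col (emb (t, j)) = krylovMap A b ((X ^ (j : ℕ) * q) * Q k₀) := by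
          rw [hcoldef, hembdef]
          simp only [ht]
          show (A ^ (j : ℕ)).mulVec (rstart (k₀ + 1)) = _
          rw [hstartq, krylovMap_apply, krylovMap_apply, Matrix.mulVec_mulVec]
          conv_rhs => rw [mul_assoc, _root_.map_mul, aeval_X_pow]
        rw [hcol1]
        refine krylov_mul_mem_span A b (Q k₀) (X ^ (j : ℕ) * q) ?_
        have : (X ^ (j : ℕ) * q).natDegree ≤ (j : ℕ) + q.natDegree := by
          refine le_trans (natDegree_mul_le) ?_
          rw [natDegree_X_pow]
        omega
    have hWrank : Module.finrank ℂ W ≤ N := by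
      have h1 := finrank_range_le_card (R := ℂ) (fun i : Fin N => krylovMap A b (X ^ (i : ℕ) * Q k₀))
      simpa [Set.finrank] using h1
    have hnotli := not_li_of_card_gt (fun tj => col (emb tj)) W hmemW
      (by simp only [Fintype.card_prod, Fintype.card_fin]; omega)
    exact hnotli ((hrank.mp hr).comp emb hembinj)
  · -- no stagnation → rank = n
    intro hnostag
    rw [hrank]
    have hpkm : ∀ k, k + 1 < ℓ → (pk k).natDegree = m := by
      intro k hk
      by_contra hne
      have hlt : (pk k).natDegree ≤ m - 1 := by
        have := hpkdeg k
        omega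
      have hge := (hres k (m - 1)).2 (pk k) hlt (hpk0 k)
      rw [← hpkrep k] at hge
      exact absurd (hnostag k hk) (not_lt.mpr hge)
    have hQdegex : ∀ k < ℓ, (Q k).natDegree = k * m := by
      intro k hk
      rw [hQdef]
      simp only []
      rw [Polynomial.natDegree_prod _ _ (fun i _ => hpkne i)]
      rw [Finset.sum_congr rfl (fun i hi => hpkm i (by
        have := Finset.mem_range.mp hi
        omega))]
      simp [mul_comm]
    set P : Fin ℓ × Fin m → Polynomial ℂ :=
      fun kj => X ^ ((kj.2 : ℕ)) * Q (kj.1 : ℕ) with hPdef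
    have hPne : ∀ kj, P kj ≠ 0 :=
      fun kj => mul_ne_zero (pow_ne_zero _ X_ne_zero) (hQne _)
    have hPdeg : ∀ kj : Fin ℓ × Fin m, (P kj).natDegree = (kj.1 : ℕ) * m + (kj.2 : ℕ) := by
      intro kj
      rw [hPdef]
      simp only []
      rw [natDegree_mul (pow_ne_zero _ X_ne_zero) (hQne _), natDegree_X_pow,
        hQdegex _ kj.1.isLt, add_comm]
    have hdiv : ∀ kj : Fin ℓ × Fin m, ((kj.1 : ℕ) * m + (kj.2 : ℕ)) / m = (kj.1 : ℕ) := by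
      intro kj
      rw [mul_comm, Nat.mul_add_div hm', Nat.div_eq_of_lt kj.2.isLt, add_zero]
    have hPinj : Function.Injective fun kj => (P kj).natDegree := by
      intro a c hac
      simp only [hPdeg] at hac
      have h1 : (a.1 : ℕ) = (c.1 : ℕ) := by
        rw [← hdiv a, ← hdiv c, hac]
      have h2 : (a.2 : ℕ) = (c.2 : ℕ) := by
        rw [h1] at hac
        omega
      exact Prod.ext (Fin.ext h1) (Fin.ext h2)
    have hPli := li_of_natDegree_injective P hPne hPinj
    have hPdeglt : ∀ kj, (P kj).natDegree < n := by
      intro kj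
      rw [hPdeg, hn]
      have h1 := kj.1.isLt
      have h2 := kj.2.isLt
      calc (kj.1 : ℕ) * m + (kj.2 : ℕ) < ((kj.1 : ℕ) + 1) * m := by
            rw [add_mul, one_mul]
            omega
        _ ≤ ℓ * m := Nat.mul_le_mul_right m h1
    have hliK := li_krylov hli P hn0 hPdeglt hPli
    have hcols : (fun kj : Fin ℓ × Fin m => (A ^ ((kj.2 : ℕ))).mulVec (rstart (kj.1 : ℕ)))
        = fun kj => krylovMap A b (P kj) := by
      funext kj
      rw [hPdef]
      exact hcol _ _
    rw [hcols]
    exact hliK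
end

section
/- Prescribed convergence of restarted GMRES: Let m, ℓ ≥ 1 and n = ℓm. Let {f_j^(k)} (j = 0,…,m−1; k = 1,…,ℓ) be positive real numbers satisfying f_0^(1) ≥ f_1^(1) ≥ ⋯ ≥ f_{m−1}^(1) > f_0^(2) ≥ ⋯ ≥ f_{m−1}^(ℓ−1) > f_0^(ℓ) ≥ ⋯ ≥ f_{m−1}^(ℓ) > 0 (monotonically non-increasing within each cycle with strictly decreasing transitions between consecutive cycles). Then there exist a matrix A ∈ ℂ^{n×n} and a right-hand side b ∈ ℂ^n such that restarted GMRES with cycle length m applied to Ax = b with zero initial guess produces residuals satisfying ‖r_j^(k)‖ = f_j^(k) for all j = 0,…,m−1 and k = 1,…,ℓ. -/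
open Matrix Polynomial Finset

set_option linter.unusedSectionVars false
namespace GMRESAux

lemma norm2_eq {N : ℕ} (v : Fin N → ℂ) : norm2 v = Real.sqrt (∑ i, ‖v i‖ ^ 2) := by
  rw [norm2, EuclideanSpace.norm_eq]; rfl

lemma norm2_nonneg {N : ℕ} (v : Fin N → ℂ) : 0 ≤ norm2 v := norm_nonneg _

lemma sum_mulVec {N : ℕ} {α : Type*} (s : Finset α) (M : α → Matrix (Fin N) (Fin N) ℂ)
    (v : Fin N → ℂ) : (∑ t ∈ s, M t) *ᵥ v = ∑ t ∈ s, (M t) *ᵥ v :=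
  map_sum (AddMonoidHom.mk' (fun A => A *ᵥ v) (fun A B => Matrix.add_mulVec A B v)) M s

lemma aeval_mulVec {N : ℕ} (A : Matrix (Fin N) (Fin N) ℂ) (v : Fin N → ℂ)
    (q : Polynomial ℂ) (j : ℕ) (hq : q.natDegree ≤ j) :
    (aeval A q) *ᵥ v
      = q.coeff 0 • v + ∑ s ∈ range j, q.coeff (s + 1) • ((A ^ (s + 1)) *ᵥ v) := by
  rw [aeval_eq_sum_range' (Nat.lt_succ_of_le hq), sum_mulVec]
  rw [Finset.sum_range_succ']
  simp only [Matrix.smul_mulVec, pow_zero, Matrix.one_mulVec]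
  rw [add_comm]

lemma exists_gmres {N : ℕ} (A : Matrix (Fin N) (Fin N) ℂ) (r0 : Fin N → ℂ) (j : ℕ) :
    ∃ r, IsGMRESResidual A r0 j r := by
  classical
  set κ : (Fin N → ℂ) ≃ₗ[ℂ] EuclideanSpace ℂ (Fin N) :=
    (WithLp.linearEquiv 2 ℂ (Fin N → ℂ)).symm with hκdef
  have hκ : ∀ v : Fin N → ℂ, norm2 v = ‖κ v‖ := fun _ => rfl
  let L : (Fin j → ℂ) →ₗ[ℂ] EuclideanSpace ℂ (Fin N) :=
    { toFun := fun c => κ (∑ t : Fin j, c t • ((A ^ ((t : ℕ) + 1)) *ᵥ r0))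
      map_add' := by
        intro x y
        simp only [Pi.add_apply, add_smul, Finset.sum_add_distrib, map_add]
      map_smul' := by
        intro c x
        simp only [Pi.smul_apply, RingHom.id_apply]
        rw [← _root_.map_smul, Finset.smul_sum]
        simp only [smul_smul, smul_eq_mul] }
  set W : Submodule ℂ (EuclideanSpace ℂ (Fin N)) := LinearMap.range L with hW
  set u : EuclideanSpace ℂ (Fin N) := κ r0 with hu
  set p : W := W.orthogonalProjectionOnto u with hp
  have key : ∀ q : Polynomial ℂ, q.natDegree ≤ j →
      (aeval A q) *ᵥ r0 = q.coeff 0 • r0 + κ.symm (L fun t : Fin j => q.coeff ((t : ℕ) + 1)) := by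
    intro q hq
    rw [aeval_mulVec A r0 q j hq]
    congr 1
    have h1 : L (fun t : Fin j => q.coeff ((t : ℕ) + 1))
        = κ (∑ t : Fin j, q.coeff ((t : ℕ) + 1) • ((A ^ ((t : ℕ) + 1)) *ᵥ r0)) := rfl
    rw [h1, LinearEquiv.symm_apply_apply, ← Fin.sum_univ_eq_sum_range]
  refine ⟨κ.symm (u - ↑p), ?_, ?_⟩
  · obtain ⟨c, hc⟩ := LinearMap.mem_range.mp p.2
    set qp : Polynomial ℂ := 1 - ∑ t : Fin j, C (c t) * X ^ ((t : ℕ) + 1) with hqp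
    have hdeg : qp.natDegree ≤ j := by
      refine (natDegree_sub_le _ _).trans (max_le (by simp) ?_)
      refine natDegree_sum_le_of_forall_le _ _ fun t _ => ?_
      exact (natDegree_C_mul_le _ _).trans (by simpa using (t : ℕ).succ_le_of_lt t.2)
    have hcoeff : ∀ tt : Fin j, qp.coeff ((tt : ℕ) + 1) = -(c tt) := by
      intro tt
      rw [hqp, coeff_sub, coeff_one, if_neg (by omega), finset_sum_coeff]
      simp only [coeff_C_mul, coeff_X_pow]
      rw [Finset.sum_eq_single tt]
      · simp
      · intro t' _ hne
        rw [if_neg, mul_zero]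
        intro h
        exact hne (Fin.ext (by omega))
      · intro h; exact absurd (Finset.mem_univ tt) h
    refine ⟨qp, hdeg, by simp [hqp, eval_finset_sum], ?_⟩
    rw [key qp hdeg]
    have hc0 : qp.coeff 0 = 1 := by
      rw [hqp, coeff_sub, coeff_one, if_pos rfl, finset_sum_coeff]
      simp [coeff_C_mul, coeff_X_pow]
    rw [hc0, one_smul]
    have : (fun t : Fin j => qp.coeff ((t : ℕ) + 1)) = -c := by
      funext tt; rw [hcoeff tt]; rfl
    rw [this, map_neg, hc, map_sub, map_neg]
    have : κ.symm u = r0 := LinearEquiv.symm_apply_apply κ r0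
    rw [this]
    rfl
  · intro q hq hq0
    rw [key q hq, coeff_zero_eq_eval_zero, hq0, one_smul]
    set w : EuclideanSpace ℂ (Fin N) := L fun t : Fin j => q.coeff ((t : ℕ) + 1) with hwdef
    rw [hκ, hκ, LinearEquiv.apply_symm_apply, map_add, LinearEquiv.apply_symm_apply]
    have h1 : u - ↑p ∈ Wᗮ := W.sub_starProjection_mem_orthogonal u
    have h2 : (↑p + w : EuclideanSpace ℂ (Fin N)) ∈ W :=
      W.add_mem p.2 (LinearMap.mem_range_self L _)
    have hinner : inner (𝕜 := ℂ) (u - ↑p) (↑p + w : EuclideanSpace ℂ (Fin N)) = 0 :=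
      Submodule.inner_left_of_mem_orthogonal h2 h1
    have hsplit : (u + w : EuclideanSpace ℂ (Fin N)) = (u - ↑p) + (↑p + w) := by abel
    have hpyth : ‖u + w‖ ^ 2 = ‖u - (↑p : EuclideanSpace ℂ (Fin N))‖ ^ 2 + ‖(↑p + w : EuclideanSpace ℂ (Fin N))‖ ^ 2 := by
      rw [hsplit]
      have := norm_add_sq_eq_norm_sq_add_norm_sq_of_inner_eq_zero _ _ hinner
      rw [pow_two, pow_two, pow_two]
      exact this
    nlinarith [norm_nonneg (u + w), norm_nonneg (u - (↑p : EuclideanSpace ℂ (Fin N))),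
      sq_nonneg ‖(↑p + w : EuclideanSpace ℂ (Fin N))‖]

section Construction

variable (m ℓ : ℕ) (f : ℕ → ℕ → ℝ)

/-- concatenated prescribed residual norms, `g (k*m+j) = f k j`, zero beyond `n = ℓ*m`. -/
noncomputable def g (i : ℕ) : ℝ := if i < ℓ * m then f (i / m) (i % m) else 0

noncomputable def aa (i : ℕ) : ℝ := Real.sqrt (g m ℓ f i ^ 2 - g m ℓ f (i + 1) ^ 2)

noncomputable def tail (s : ℕ) : Fin (ℓ * m) → ℂ :=
  fun i => if s ≤ (i : ℕ) then (aa m ℓ f i : ℂ) else 0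

def ee (t : ℕ) : Fin (ℓ * m) → ℂ := fun i => if (i : ℕ) = t then 1 else 0

noncomputable def col (t : ℕ) : Fin (ℓ * m) → ℂ :=
  if (t + 1) % m = 0 then
    ((aa m ℓ f t : ℂ))⁻¹ • (ee m ℓ (t / m * m) - ee m ℓ (t + 1)
      - ∑ s ∈ Finset.range (m - 1), (aa m ℓ f (t / m * m + s) : ℂ) • ee m ℓ (t / m * m + s + 1))
  else ee m ℓ (t + 1)

noncomputable def Amat : Matrix (Fin (ℓ * m)) (Fin (ℓ * m)) ℂ :=
  Matrix.of fun i j => col m ℓ f (j : ℕ) i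

variable {m ℓ : ℕ} {f : ℕ → ℕ → ℝ}

lemma g_eval (hm : 1 ≤ m) {k j : ℕ} (hk : k < ℓ) (hj : j < m) :
    g m ℓ f (k * m + j) = f k j := by
  have hlt : k * m + j < ℓ * m := by
    calc k * m + j < k * m + m := by omega
    _ = (k + 1) * m := by ring
    _ ≤ ℓ * m := Nat.mul_le_mul_right m hk
  have hd : (k * m + j) / m = k := by
    rw [mul_comm k m, Nat.mul_add_div (by omega), Nat.div_eq_of_lt hj, add_zero]
  have hmod : (k * m + j) % m = j := by
    rw [mul_comm k m, Nat.mul_add_mod, Nat.mod_eq_of_lt hj]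
  rw [g, if_pos hlt, hd, hmod]

lemma g_nonneg (hm : 1 ≤ m) (hpos : ∀ k < ℓ, ∀ j < m, 0 < f k j) (i : ℕ) :
    0 ≤ g m ℓ f i := by
  rw [g]
  split_ifs with h
  · exact le_of_lt (hpos _ ((Nat.div_lt_iff_lt_mul (by omega)).mpr h) _ (Nat.mod_lt _ (by omega)))
  · exact le_refl _

section WithHyps

variable (hm : 1 ≤ m)
    (hpos : ∀ k < ℓ, ∀ j < m, 0 < f k j)
    (hmono : ∀ k < ℓ, ∀ j : ℕ, j + 1 < m → f k (j + 1) ≤ f k j)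
    (htrans : ∀ k : ℕ, k + 1 < ℓ → f (k + 1) 0 < f k (m - 1))
include hm hpos hmono htrans

lemma g_anti (i : ℕ) : g m ℓ f (i + 1) ≤ g m ℓ f i := by
  by_cases h : i + 1 < ℓ * m
  · have hi : i < ℓ * m := by omega
    obtain ⟨q, r, hr, hqr⟩ : ∃ q r, r < m ∧ i = q * m + r :=
      ⟨i / m, i % m, Nat.mod_lt _ (by omega), by rw [mul_comm]; exact (Nat.div_add_mod i m).symm⟩
    subst hqr
    have hq : q < ℓ := by
      by_contra hq
      push_neg at hq
      have : ℓ * m ≤ q * m := Nat.mul_le_mul_right m hq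
      omega
    by_cases hr1 : r + 1 < m
    · rw [g_eval hm hq hr, show q * m + r + 1 = q * m + (r + 1) by ring, g_eval hm hq hr1]
      exact hmono q hq r hr1
    · have hrm : r = m - 1 := by omega
      have hq1 : q + 1 < ℓ := by
        by_contra hqq
        push_neg at hqq
        have h2 : ℓ * m ≤ (q + 1) * m := Nat.mul_le_mul_right m hqq
        have h3 : q * m + r + 1 = (q + 1) * m := by rw [add_mul, one_mul]; omega
        omega
      have h1 : q * m + r + 1 = (q + 1) * m + 0 := by rw [add_mul, one_mul]; omega
      rw [g_eval hm hq hr, h1, g_eval hm hq1 (by omega), hrm]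
      exact le_of_lt (htrans q hq1)
  · rw [g, if_neg h]
    exact g_nonneg hm hpos i

lemma aa_sq (i : ℕ) : aa m ℓ f i ^ 2 = g m ℓ f i ^ 2 - g m ℓ f (i + 1) ^ 2 := by
  rw [aa, Real.sq_sqrt]
  have h1 := g_anti hm hpos hmono htrans i
  have h2 := g_nonneg hm hpos (i + 1)
  nlinarith

lemma aa_bd_pos {k : ℕ} (hk : k < ℓ) : 0 < aa m ℓ f (k * m + (m - 1)) := by
  rw [aa, Real.sqrt_pos]
  have h1 : g m ℓ f (k * m + (m - 1)) = f k (m - 1) := g_eval hm hk (by omega)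
  have h2 : k * m + (m - 1) + 1 = (k + 1) * m + 0 := by rw [add_mul, one_mul]; omega
  have hlt : g m ℓ f ((k + 1) * m + 0) < f k (m - 1) := by
    by_cases hk1 : k + 1 < ℓ
    · rw [g_eval hm hk1 (by omega)]
      exact htrans k hk1
    · have hge : ℓ * m ≤ (k + 1) * m + 0 := by
        have h4 : ℓ ≤ k + 1 := by omega
        have h5 := Nat.mul_le_mul_right m h4
        omega
      rw [g, if_neg (by omega)]
      exact hpos k hk _ (by omega)
  have hnn := g_nonneg hm hpos ((k + 1) * m + 0)
  rw [h2, h1]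
  nlinarith

end WithHyps

end Construction

section MatrixLemmas

variable {m ℓ : ℕ} {f : ℕ → ℕ → ℝ}

lemma ee_zero {t : ℕ} (ht : ℓ * m ≤ t) : ee m ℓ t = (0 : Fin (ℓ * m) → ℂ) := by
  funext i
  rw [ee, if_neg (by have := i.2; omega)]
  rfl

lemma tail_zero {s : ℕ} (hs : ℓ * m ≤ s) : tail m ℓ f s = (0 : Fin (ℓ * m) → ℂ) := by
  funext i
  rw [tail, if_neg (by have := i.2; omega)]
  rfl

lemma mulVec_eq_sum_col (v : Fin (ℓ * m) → ℂ) :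
    Amat m ℓ f *ᵥ v = ∑ j : Fin (ℓ * m), v j • col m ℓ f (j : ℕ) := by
  funext i
  rw [Finset.sum_apply]
  simp only [Matrix.mulVec, dotProduct, Amat, Matrix.of_apply, Pi.smul_apply, smul_eq_mul]
  exact Finset.sum_congr rfl fun j _ => mul_comm _ _

lemma mulVec_ee {t : ℕ} (ht : t < ℓ * m) :
    Amat m ℓ f *ᵥ ee m ℓ t = col m ℓ f t := by
  rw [mulVec_eq_sum_col]
  rw [Finset.sum_eq_single (⟨t, ht⟩ : Fin (ℓ * m))]
  · rw [ee, if_pos rfl, one_smul]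
  · intro j _ hne
    rw [ee]
    have : (j : ℕ) ≠ t := fun h => hne (Fin.ext h)
    rw [if_neg this, zero_smul]
  · intro h; exact absurd (Finset.mem_univ _) h

lemma mulVec_ee_succ {t : ℕ} (ht : t < ℓ * m) (hbd : (t + 1) % m ≠ 0) :
    Amat m ℓ f *ᵥ ee m ℓ t = ee m ℓ (t + 1) := by
  rw [mulVec_ee ht, col, if_neg hbd]

section WithHyps2

variable (hm : 1 ≤ m)
    (hpos : ∀ k < ℓ, ∀ j < m, 0 < f k j)
    (hmono : ∀ k < ℓ, ∀ j : ℕ, j + 1 < m → f k (j + 1) ≤ f k j)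
    (htrans : ∀ k : ℕ, k + 1 < ℓ → f (k + 1) 0 < f k (m - 1))
include hm hpos hmono htrans

lemma block_sum {k : ℕ} (hk : k < ℓ) :
    ∑ s ∈ Finset.range m, (aa m ℓ f (k * m + s) : ℂ) • col m ℓ f (k * m + s)
      = ee m ℓ (k * m) - ee m ℓ (k * m + m) := by
  obtain ⟨m', rfl⟩ : ∃ m', m = m' + 1 := ⟨m - 1, by omega⟩
  rw [Finset.sum_range_succ]
  have hstep : ∀ s ∈ Finset.range m',
      (aa (m' + 1) ℓ f (k * (m' + 1) + s) : ℂ) • col (m' + 1) ℓ f (k * (m' + 1) + s)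
      = (aa (m' + 1) ℓ f (k * (m' + 1) + s) : ℂ) • ee (m' + 1) ℓ (k * (m' + 1) + s + 1) := by
    intro s hs
    rw [Finset.mem_range] at hs
    congr 1
    rw [col, if_neg]
    have h1 : k * (m' + 1) + s + 1 = (s + 1) + k * (m' + 1) := by ring
    rw [h1, Nat.add_mul_mod_self_right, Nat.mod_eq_of_lt (by omega)]
    omega
  rw [Finset.sum_congr rfl hstep]
  -- the boundary column
  have hbd : (k * (m' + 1) + m' + 1) % (m' + 1) = 0 := by
    have h1 : k * (m' + 1) + m' + 1 = (k + 1) * (m' + 1) := by ring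
    rw [h1, Nat.mul_mod_left]
  have hdiv : (k * (m' + 1) + m') / (m' + 1) = k := by
    rw [mul_comm k (m' + 1), Nat.mul_add_div (by omega), Nat.div_eq_of_lt (by omega), add_zero]
  have hapos : (aa (m' + 1) ℓ f (k * (m' + 1) + m') : ℂ) ≠ 0 := by
    have := aa_bd_pos hm hpos hmono htrans hk (k := k)
    simp only [Nat.add_sub_cancel] at this
    exact_mod_cast ne_of_gt this
  rw [col, if_pos hbd, hdiv, smul_inv_smul₀ hapos]
  have h2 : k * (m' + 1) + m' + 1 = k * (m' + 1) + (m' + 1) := by ring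
  rw [h2]
  simp only [Nat.add_sub_cancel]
  abel

lemma mulVec_tail {k : ℕ} (hk : k < ℓ) :
    Amat m ℓ f *ᵥ tail m ℓ f (k * m) = ee m ℓ (k * m) := by
  rw [mulVec_eq_sum_col]
  have h1 : ∑ j : Fin (ℓ * m), tail m ℓ f (k * m) j • col m ℓ f (j : ℕ)
      = ∑ t ∈ Finset.range (ℓ * m),
          (if k * m ≤ t then (aa m ℓ f t : ℂ) else 0) • col m ℓ f t := by
    rw [← Fin.sum_univ_eq_sum_range (fun t => (if k * m ≤ t then (aa m ℓ f t : ℂ) else 0) • col m ℓ f t)]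
    exact Finset.sum_congr rfl fun j _ => by rw [tail]
  rw [h1]
  have h2 : ∑ t ∈ Finset.range (ℓ * m),
        (if k * m ≤ t then (aa m ℓ f t : ℂ) else 0) • col m ℓ f t
      = ∑ t ∈ Finset.Ico (k * m) (ℓ * m), (aa m ℓ f t : ℂ) • col m ℓ f t := by
    rw [Finset.range_eq_Ico]
    rw [← Finset.sum_Ico_consecutive _ (Nat.zero_le (k * m)) (Nat.mul_le_mul_right m (le_of_lt hk))]
    have hz : ∑ t ∈ Finset.Ico 0 (k * m),
        (if k * m ≤ t then (aa m ℓ f t : ℂ) else 0) • col m ℓ f t = 0 := by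
      refine Finset.sum_eq_zero fun t ht => ?_
      rw [Finset.mem_Ico] at ht
      rw [if_neg (by omega), zero_smul]
    rw [hz, zero_add]
    exact Finset.sum_congr rfl fun t ht => by
      rw [Finset.mem_Ico] at ht
      rw [if_pos ht.1]
  rw [h2]
  -- double sum over blocks
  have h3 : ∀ K, k ≤ K → K ≤ ℓ →
      ∑ t ∈ Finset.Ico (k * m) (K * m), (aa m ℓ f t : ℂ) • col m ℓ f t
        = ee m ℓ (k * m) - ee m ℓ (K * m) := by
    intro K hkK hKl
    induction K, hkK using Nat.le_induction with
    | base => simp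
    | succ K hkK ih =>
      rw [← Finset.sum_Ico_consecutive _ (Nat.mul_le_mul_right m hkK)
            (Nat.mul_le_mul_right m (Nat.le_succ K)),
        ih (by omega)]
      have h4 : ∑ t ∈ Finset.Ico (K * m) ((K + 1) * m), (aa m ℓ f t : ℂ) • col m ℓ f t
          = ∑ s ∈ Finset.range m, (aa m ℓ f (K * m + s) : ℂ) • col m ℓ f (K * m + s) := by
        rw [Finset.sum_Ico_eq_sum_range]
        have h5 : (K + 1) * m - K * m = m := by rw [add_mul, one_mul]; omega
        rw [h5]
      rw [h4, block_sum hm hpos hmono htrans (by omega)]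
      have h6 : K * m + m = (K + 1) * m := by ring
      rw [h6]
      abel
  rw [h3 ℓ (le_of_lt hk) (le_refl ℓ), ee_zero (le_refl _), sub_zero]

lemma pow_mulVec_tail {k : ℕ} (hk : k < ℓ) {s : ℕ} (hs : s < m) :
    (Amat m ℓ f ^ (s + 1)) *ᵥ tail m ℓ f (k * m) = ee m ℓ (k * m + s) := by
  induction s with
  | zero => rw [pow_one, mulVec_tail hm hpos hmono htrans hk, add_zero]
  | succ s ih =>
    rw [pow_succ', ← Matrix.mulVec_mulVec, ih (by omega)]
    have ht : k * m + s < ℓ * m := by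
      have h1 : k * m + m ≤ ℓ * m := by
        calc k * m + m = (k + 1) * m := by ring
        _ ≤ ℓ * m := Nat.mul_le_mul_right m hk
      omega
    have hbd : (k * m + s + 1) % m ≠ 0 := by
      have h1 : k * m + s + 1 = (s + 1) + k * m := by ring
      rw [h1, Nat.add_mul_mod_self_right, Nat.mod_eq_of_lt (by omega)]
      omega
    rw [mulVec_ee_succ ht hbd, add_assoc]

end WithHyps2

end MatrixLemmas

section NormLemmas

variable {m ℓ : ℕ} {f : ℕ → ℕ → ℝ}
variable (hm : 1 ≤ m)
    (hpos : ∀ k < ℓ, ∀ j < m, 0 < f k j)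
    (hmono : ∀ k < ℓ, ∀ j : ℕ, j + 1 < m → f k (j + 1) ≤ f k j)
    (htrans : ∀ k : ℕ, k + 1 < ℓ → f (k + 1) 0 < f k (m - 1))
include hm hpos hmono htrans

lemma sum_sq_tail {s : ℕ} (hs : s ≤ ℓ * m) :
    ∑ i : Fin (ℓ * m), ‖tail m ℓ f s i‖ ^ 2 = g m ℓ f s ^ 2 := by
  have h1 : ∀ i : Fin (ℓ * m),
      ‖tail m ℓ f s i‖ ^ 2 = if s ≤ (i : ℕ) then aa m ℓ f (i : ℕ) ^ 2 else 0 := by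
    intro i
    rw [tail]
    split_ifs with h
    · rw [Complex.norm_real, Real.norm_eq_abs, sq_abs]
    · simp
  rw [Finset.sum_congr rfl fun i _ => h1 i]
  rw [Fin.sum_univ_eq_sum_range (fun t => if s ≤ t then aa m ℓ f t ^ 2 else 0)]
  have h2 : ∑ t ∈ Finset.range (ℓ * m), (if s ≤ t then aa m ℓ f t ^ 2 else 0)
      = ∑ t ∈ Finset.Ico s (ℓ * m), aa m ℓ f t ^ 2 := by
    rw [Finset.range_eq_Ico, ← Finset.sum_Ico_consecutive _ (Nat.zero_le s) hs]
    have hz : ∑ t ∈ Finset.Ico 0 s, (if s ≤ t then aa m ℓ f t ^ 2 else 0) = 0 :=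
      Finset.sum_eq_zero fun t ht => by
        rw [Finset.mem_Ico] at ht; rw [if_neg (by omega)]
    rw [hz, zero_add]
    exact Finset.sum_congr rfl fun t ht => by
      rw [Finset.mem_Ico] at ht; rw [if_pos ht.1]
  rw [h2, Finset.sum_congr rfl fun t _ => aa_sq hm hpos hmono htrans t]
  rw [Finset.sum_Ico_eq_sub _ hs, Finset.sum_range_sub' (fun t => g m ℓ f t ^ 2),
    Finset.sum_range_sub' (fun t => g m ℓ f t ^ 2)]
  have hgn : g m ℓ f (ℓ * m) = 0 := by rw [g, if_neg (lt_irrefl _)]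
  rw [hgn]
  ring

lemma norm2_tail {s : ℕ} (hs : s ≤ ℓ * m) : norm2 (tail m ℓ f s) = g m ℓ f s := by
  rw [norm2_eq, sum_sq_tail hm hpos hmono htrans hs, Real.sqrt_sq (g_nonneg hm hpos s)]

lemma isGMRES_tail {k j : ℕ} (hk : k < ℓ) (hj : j ≤ m) :
    IsGMRESResidual (Amat m ℓ f) (tail m ℓ f (k * m)) j (tail m ℓ f (k * m + j)) := by
  have hsum_ee : ∀ (c : ℕ → ℂ) (i : Fin (ℓ * m)),
      (∑ s ∈ Finset.range j, c s • ee m ℓ (k * m + s)) i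
        = if k * m ≤ (i : ℕ) ∧ (i : ℕ) < k * m + j then c ((i : ℕ) - k * m) else 0 := by
    intro c i
    rw [Finset.sum_apply]
    by_cases hc : k * m ≤ (i : ℕ) ∧ (i : ℕ) < k * m + j
    · rw [if_pos hc, Finset.sum_eq_single ((i : ℕ) - k * m)]
      · rw [Pi.smul_apply, ee, if_pos (by omega), smul_eq_mul, mul_one]
      · intro s _ hne
        rw [Pi.smul_apply, ee, if_neg (by omega), smul_eq_mul, mul_zero]
      · intro hmem
        exact absurd (Finset.mem_range.mpr (by omega)) hmem
    · rw [if_neg hc]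
      refine Finset.sum_eq_zero fun s hs => ?_
      rw [Finset.mem_range] at hs
      rw [Pi.smul_apply, ee, if_neg (by omega), smul_eq_mul, mul_zero]
  constructor
  · -- the optimal polynomial
    set qp : Polynomial ℂ :=
      1 - ∑ s ∈ Finset.range j, C ((aa m ℓ f (k * m + s) : ℂ)) * X ^ (s + 1) with hqp
    have hdeg : qp.natDegree ≤ j := by
      refine (natDegree_sub_le _ _).trans (max_le (by simp) ?_)
      refine natDegree_sum_le_of_forall_le _ _ fun s hs => ?_
      rw [Finset.mem_range] at hs
      exact (natDegree_C_mul_le _ _).trans (by simpa using hs)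
    have hc0 : qp.coeff 0 = 1 := by
      rw [hqp, coeff_sub, coeff_one, if_pos rfl, finset_sum_coeff]
      simp [coeff_C_mul, coeff_X_pow]
    have hcoeff : ∀ s ∈ Finset.range j, qp.coeff (s + 1) = -(aa m ℓ f (k * m + s) : ℂ) := by
      intro s hs
      rw [hqp, coeff_sub, coeff_one, if_neg (by omega), finset_sum_coeff]
      simp only [coeff_C_mul, coeff_X_pow]
      rw [Finset.sum_eq_single s]
      · rw [if_pos rfl, mul_one]; ring
      · intro s' _ hne
        rw [if_neg (by omega), mul_zero]
      · intro hmem; exact absurd hs hmem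
    refine ⟨qp, hdeg, by simp [hqp, eval_finset_sum], ?_⟩
    rw [aeval_mulVec _ _ qp j hdeg, hc0, one_smul]
    have hrw : ∀ s ∈ Finset.range j,
        qp.coeff (s + 1) • ((Amat m ℓ f ^ (s + 1)) *ᵥ tail m ℓ f (k * m))
          = (-(aa m ℓ f (k * m + s) : ℂ)) • ee m ℓ (k * m + s) := by
      intro s hs
      rw [Finset.mem_range] at hs
      rw [hcoeff s (Finset.mem_range.mpr hs),
        pow_mulVec_tail hm hpos hmono htrans hk (by omega)]
    rw [Finset.sum_congr rfl hrw]
    funext i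
    rw [Pi.add_apply, hsum_ee (fun s => -(aa m ℓ f (k * m + s) : ℂ)) i]
    by_cases h1 : (i : ℕ) < k * m
    · rw [tail, if_neg (by omega), tail, if_neg (by omega), if_neg (by omega), add_zero]
    · by_cases h2 : (i : ℕ) < k * m + j
      · rw [tail, if_neg (by omega), tail, if_pos (by omega), if_pos (by omega)]
        have h3 : k * m + ((i : ℕ) - k * m) = (i : ℕ) := by omega
        rw [h3]
        ring
      · rw [tail, if_pos (by omega), tail, if_pos (by omega), if_neg (by omega), add_zero]
  · -- minimality
    intro q hq hq0
    rw [aeval_mulVec _ _ q j hq, coeff_zero_eq_eval_zero, hq0, one_smul]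
    have hrw : ∀ s ∈ Finset.range j,
        q.coeff (s + 1) • ((Amat m ℓ f ^ (s + 1)) *ᵥ tail m ℓ f (k * m))
          = q.coeff (s + 1) • ee m ℓ (k * m + s) := by
      intro s hs
      rw [Finset.mem_range] at hs
      rw [pow_mulVec_tail hm hpos hmono htrans hk (by omega)]
    rw [Finset.sum_congr rfl hrw]
    rw [norm2_eq, norm2_eq]
    refine Real.sqrt_le_sqrt (Finset.sum_le_sum fun i _ => ?_)
    by_cases hge : k * m + j ≤ (i : ℕ)
    · have heq : (tail m ℓ f (k * m)
          + ∑ s ∈ Finset.range j, q.coeff (s + 1) • ee m ℓ (k * m + s)) i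
          = tail m ℓ f (k * m + j) i := by
        rw [Pi.add_apply, hsum_ee (fun s => q.coeff (s + 1)) i, if_neg (by omega), add_zero,
          tail, tail, if_pos (by omega), if_pos (by omega)]
      rw [heq]
    · have hz : ‖tail m ℓ f (k * m + j) i‖ ^ 2 = 0 := by
        rw [tail, if_neg (by omega), norm_zero]
        ring
      rw [hz]
      exact sq_nonneg _

end NormLemmas

end GMRESAux

open GMRESAux

/-- **Prescribed convergence of restarted GMRES.**
Given positive numbers `f k j` (cycles `k = 0, …, ℓ-1`, steps `j = 0, …, m-1`) which are
non-increasing within each cycle and strictly decreasing at the transition between consecutive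
cycles, there exist `A ∈ ℂ^{n×n}` and `b ∈ ℂ^n` (with `n = ℓ m`) such that restarted GMRES
with cycle length `m` applied to `A x = b` with zero initial guess produces residuals `r k j`
(restarted via `rstart (k+1) = r k m`, `rstart 0 = b`) satisfying `‖r k j‖ = f k j`. -/
theorem prescribed_restarted_gmres_convergence
    (m ℓ : ℕ) (hm : 1 ≤ m) (hl : 1 ≤ ℓ)
    (f : ℕ → ℕ → ℝ)
    (hpos : ∀ k < ℓ, ∀ j < m, 0 < f k j)
    (hmono : ∀ k < ℓ, ∀ j : ℕ, j + 1 < m → f k (j + 1) ≤ f k j)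
    (htrans : ∀ k : ℕ, k + 1 < ℓ → f (k + 1) 0 < f k (m - 1)) :
    ∃ (A : Matrix (Fin (ℓ * m)) (Fin (ℓ * m)) ℂ) (b : Fin (ℓ * m) → ℂ)
      (r : ℕ → ℕ → (Fin (ℓ * m) → ℂ)) (rstart : ℕ → (Fin (ℓ * m) → ℂ)),
      rstart 0 = b ∧
      (∀ k j : ℕ, IsGMRESResidual A (rstart k) j (r k j)) ∧
      (∀ k : ℕ, rstart (k + 1) = r k m) ∧
      (∀ k < ℓ, ∀ j < m, norm2 (r k j) = f k j) := by
  classical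
  refine ⟨Amat m ℓ f, tail m ℓ f 0,
    (fun k j => if k < ℓ then
        (if j ≤ m then tail m ℓ f (k * m + j)
         else Classical.choose (exists_gmres (Amat m ℓ f) (tail m ℓ f (k * m)) j))
      else 0),
    (fun k => tail m ℓ f (k * m)), ?_, ?_, ?_, ?_⟩
  · show tail m ℓ f (0 * m) = tail m ℓ f 0
    rw [Nat.zero_mul]
  · intro k j
    by_cases hk : k < ℓ
    · by_cases hjm : j ≤ m
      · simp only [if_pos hk, if_pos hjm]
        exact isGMRES_tail hm hpos hmono htrans hk hjm
      · simp only [if_pos hk, if_neg hjm]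
        exact Classical.choose_spec (exists_gmres (Amat m ℓ f) (tail m ℓ f (k * m)) j)
    · simp only [if_neg hk]
      have hge : ℓ * m ≤ k * m := Nat.mul_le_mul_right m (by omega)
      show IsGMRESResidual (Amat m ℓ f) (tail m ℓ f (k * m)) j 0
      rw [tail_zero hge]
      refine ⟨⟨1, by simp, by simp, by simp [Matrix.mulVec_zero]⟩, fun q _ _ => ?_⟩
      rw [Matrix.mulVec_zero]
  · intro k
    by_cases hk : k < ℓ
    · simp only [if_pos hk, if_pos (le_refl m)]
      show tail m ℓ f ((k + 1) * m) = tail m ℓ f (k * m + m)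
      congr 1
      ring
    · simp only [if_neg hk]
      show tail m ℓ f ((k + 1) * m) = 0
      exact tail_zero (Nat.mul_le_mul_right m (by omega))
  · intro k hk j hj
    simp only [if_pos hk, if_pos (le_of_lt hj)]
    have hle : k * m + j ≤ ℓ * m := by
      have h1 : k * m + m ≤ ℓ * m := by
        calc k * m + m = (k + 1) * m := by ring
        _ ≤ ℓ * m := Nat.mul_le_mul_right m hk
      omega
    show norm2 (tail m ℓ f (k * m + j)) = f k j
    rw [norm2_tail hm hpos hmono htrans hle, g_eval hm hk hj]
end

section
/- Prescribed convergence of restarted GMRES with prescribed spectrum: Let m, ℓ ≥ 1 and n = ℓm. Let {f_j^(k)} (j = 0,…,m−1; k = 1,…,ℓ) be positive real numbers that are monotonically non-increasing within each cycle and strictly decreasing at each transition between consecutive cycles (f_{m−1}^(k) > f_0^(k+1) for k = 1,…,ℓ−1), and let λ₁, …, λ_n be arbitrary nonzero complex numbers. Then there exist a matrix A ∈ ℂ^{n×n} whose characteristic polynomial is ∏_{i=1}^n (z − λ_i) and a right-hand side b ∈ ℂ^n such that restarted GMRES with cycle length m applied to Ax = b with zero initial guess produces residuals satisfying ‖r_j^(k)‖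 = f_j^(k) for all j = 0,…,m−1 and k = 1,…,ℓ. In particular, the eigenvalues of A can be chosen independently of the prescribed residual convergence behavior. -/
open Matrix Polynomial

set_option maxHeartbeats 1000000
namespace GA
variable {n : ℕ}

noncomputable def Lmap (n : ℕ) : (Fin n → ℂ) ≃ₗ[ℂ] EuclideanSpace ℂ (Fin n) :=
  (WithLp.linearEquiv 2 ℂ (Fin n → ℂ)).symm

lemma norm2_eq (v : Fin n → ℂ) : norm2 v = ‖Lmap n v‖ := rfl

noncomputable def kry (A : Matrix (Fin n) (Fin n) ℂ) (r0 : Fin n → ℂ) (j : ℕ) :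
    Submodule ℂ (EuclideanSpace ℂ (Fin n)) :=
  Submodule.span ℂ (Set.range fun i : Fin j => Lmap n ((A ^ ((i : ℕ) + 1)).mulVec r0))

noncomputable def gres (A : Matrix (Fin n) (Fin n) ℂ) (r0 : Fin n → ℂ) (j : ℕ) :
    Fin n → ℂ :=
  (Lmap n).symm (Lmap n r0 -
    (Submodule.orthogonalProjectionOnto (kry A r0 j) (Lmap n r0) : EuclideanSpace ℂ (Fin n)))

lemma sum_mulVec {ι : Type*} (s : Finset ι) (M : ι → Matrix (Fin n) (Fin n) ℂ)
    (v : Fin n → ℂ) : (∑ i ∈ s, M i).mulVec v = ∑ i ∈ s, (M i).mulVec v := by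
  ext t
  simp only [Matrix.mulVec, dotProduct, Matrix.sum_apply, Finset.sum_apply,
    Finset.sum_mul]
  rw [Finset.sum_comm]

lemma poly_mem (A : Matrix (Fin n) (Fin n) ℂ) (r0 : Fin n → ℂ) (j : ℕ)
    (h : Polynomial ℂ) (hdeg : h.natDegree ≤ j) (h0 : h.coeff 0 = 0) :
    Lmap n ((aeval A h).mulVec r0) ∈ kry A r0 j := by
  rw [aeval_eq_sum_range' (lt_of_le_of_lt hdeg (Nat.lt_succ_self j))]
  rw [sum_mulVec, map_sum]
  rw [Finset.sum_range_succ']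
  simp only [h0, pow_zero, zero_smul, Matrix.zero_mulVec, map_zero, add_zero]
  apply Submodule.sum_mem
  intro i hi
  rw [Finset.mem_range] at hi
  rw [Matrix.smul_mulVec, _root_.map_smul]
  exact Submodule.smul_mem _ _ (Submodule.subset_span ⟨⟨i, hi⟩, rfl⟩)

lemma inner_span_zero {m : ℕ} {g : Fin m → EuclideanSpace ℂ (Fin n)} {x : EuclideanSpace ℂ (Fin n)}
    (h : ∀ i, (inner ℂ x (g i) : ℂ) = 0) :
    ∀ u ∈ Submodule.span ℂ (Set.range g), (inner ℂ x u : ℂ) = 0 := by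
  intro u hu
  obtain ⟨c, rfl⟩ := (Submodule.mem_span_range_iff_exists_fun ℂ).1 hu
  rw [inner_sum]
  simp [inner_smul_right, h]

lemma norm_le_of_inner_zero {x y : EuclideanSpace ℂ (Fin n)}
    (h : (inner ℂ x y : ℂ) = 0) : ‖x‖ ≤ ‖x + y‖ := by
  have h2 : ‖x + y‖ ^ 2 = ‖x‖ ^ 2 + ‖y‖ ^ 2 := by
    rw [@norm_add_sq ℂ]; simp [h]
  have : ‖x‖ ^ 2 ≤ ‖x + y‖ ^ 2 := by nlinarith [sq_nonneg ‖y‖]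
  exact (pow_le_pow_iff_left₀ (norm_nonneg _) (norm_nonneg _) (by norm_num)).1 this

theorem isGMRES_gres (A : Matrix (Fin n) (Fin n) ℂ) (r0 : Fin n → ℂ) (j : ℕ) :
    IsGMRESResidual A r0 j (gres A r0 j) := by
  have hproj := Submodule.coe_mem (Submodule.orthogonalProjectionOnto (kry A r0 j) (Lmap n r0))
  constructor
  · obtain ⟨c, hc⟩ := (Submodule.mem_span_range_iff_exists_fun ℂ).1 hproj
    refine ⟨1 - ∑ i : Fin j, (C (c i) * X ^ ((i : ℕ) + 1)), ?_, ?_, ?_⟩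
    · refine le_trans (natDegree_sub_le _ _) ?_
      simp only [natDegree_one, max_le_iff]
      refine ⟨Nat.zero_le _, Polynomial.natDegree_sum_le_of_forall_le _ _ ?_⟩
      intro i _
      exact le_trans (natDegree_C_mul_le _ _) (by simpa [Nat.succ_le_iff] using i.2)
    · simp [eval_finset_sum]
    · apply (Lmap n).injective
      rw [gres, LinearEquiv.apply_symm_apply, ← hc]
      rw [map_sub, _root_.map_one, map_sum]
      rw [sub_mulVec, Matrix.one_mulVec, sum_mulVec, map_sub, map_sum]
      congr 1
      refine Finset.sum_congr rfl fun i _ => ?_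
      rw [_root_.map_mul, aeval_C, aeval_X_pow, ← Algebra.smul_def, Matrix.smul_mulVec,
        _root_.map_smul]
  · intro q hq hq0
    set rr := gres A r0 j with hrr
    have hw : Lmap n ((aeval A q).mulVec r0 - rr) ∈ kry A r0 j := by
      have h1 : (aeval A q).mulVec r0 - rr
          = (aeval A (q - 1)).mulVec r0 + (r0 - rr) := by
        rw [map_sub, _root_.map_one, sub_mulVec, Matrix.one_mulVec]
        abel
      rw [h1, map_add]
      refine Submodule.add_mem _ ?_ ?_
      · refine poly_mem A r0 j _ (le_trans (natDegree_sub_le _ _) (by simpa using hq)) ?_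
        simp [coeff_sub, ← hq0, Polynomial.coeff_zero_eq_eval_zero]
      · have : Lmap n (r0 - rr)
            = (Submodule.orthogonalProjectionOnto (kry A r0 j) (Lmap n r0) : EuclideanSpace ℂ (Fin n)) := by
          rw [hrr, gres, map_sub]
          simp
        rw [this]; exact hproj
    have horth : Lmap n rr ∈ (kry A r0 j)ᗮ := by
      rw [hrr, gres]
      simpa using Submodule.sub_starProjection_mem_orthogonal (K := kry A r0 j) (Lmap n r0)
    have hinner : (inner ℂ (Lmap n rr) (Lmap n ((aeval A q).mulVec r0 - rr)) : ℂ) = 0 := by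
      exact (Submodule.mem_orthogonal' _ _).1 horth _ hw
    have : (aeval A q).mulVec r0 = rr + ((aeval A q).mulVec r0 - rr) := by abel
    rw [norm2_eq, norm2_eq, this, map_add]
    exact norm_le_of_inner_zero hinner

theorem gres_eq (A : Matrix (Fin n) (Fin n) ℂ) (r0 : Fin n → ℂ) (j : ℕ) (w : Fin n → ℂ)
    (hmem : Lmap n (r0 - w) ∈ kry A r0 j)
    (horth : ∀ i : Fin j, (inner ℂ (Lmap n w) (Lmap n ((A ^ ((i : ℕ) + 1)).mulVec r0)) : ℂ) = 0) :
    gres A r0 j = w := by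
  have : (Submodule.orthogonalProjectionOnto (kry A r0 j) (Lmap n r0) : EuclideanSpace ℂ (Fin n))
      = Lmap n (r0 - w) := by
    apply Submodule.eq_starProjection_of_mem_of_inner_eq_zero hmem
    intro u hu
    have h2 : Lmap n r0 - Lmap n (r0 - w) = Lmap n w := by
      rw [← map_sub, sub_sub_cancel]
    rw [h2]
    exact inner_span_zero horth u hu
  rw [gres, this, ← map_sub, sub_sub_cancel, LinearEquiv.symm_apply_apply]

lemma inner_Lmap {n : ℕ} (x y : Fin n → ℂ) :
    (inner ℂ (Lmap n x) (Lmap n y) : ℂ) = ∑ t, (starRingEnd ℂ) (x t) * y t := by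
  simp [Lmap, PiLp.inner_apply, RCLike.inner_apply]
  exact Finset.sum_congr rfl fun _ _ => mul_comm _ _

/-- the restarted GMRES chain of initial residuals -/
noncomputable def rchain {n : ℕ} (A : Matrix (Fin n) (Fin n) ℂ) (m : ℕ) (b : Fin n → ℂ) :
    ℕ → (Fin n → ℂ) :=
  fun k => Nat.rec b (fun _ prev => gres A prev m) k

end GA

section Constr
variable (m ℓ : ℕ) (f : ℕ → ℕ → ℝ) (lam : Fin (ℓ * m) → ℂ)

/-- prescribed residual norm at global step `t` -/
noncomputable def gfun : ℕ → ℝ := fun t => if t < ℓ * m then f (t / m) (t % m) else 0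

/-- coefficients -/
noncomputable def gam : ℕ → ℝ := fun t => Real.sqrt (gfun m ℓ f t ^ 2 - gfun m ℓ f (t + 1) ^ 2)

/-- residual vectors: cutoff `c` -/
noncomputable def rv (c : ℕ) : Fin (ℓ * m) → ℂ :=
  fun t => if c ≤ (t : ℕ) then ((gam m ℓ f t : ℝ) : ℂ) else 0

section gfacts
variable (hm : 1 ≤ m) (hl : 1 ≤ ℓ)
  (hpos : ∀ k < ℓ, ∀ j < m, 0 < f k j)
  (hmono : ∀ k < ℓ, ∀ j : ℕ, j + 1 < m → f k (j + 1) ≤ f k j)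
  (htrans : ∀ k : ℕ, k + 1 < ℓ → f (k + 1) 0 < f k (m - 1))

include hm hpos in
lemma gfun_nonneg : ∀ t, 0 ≤ gfun m ℓ f t := by
  intro t
  unfold gfun
  split
  · next h =>
    exact le_of_lt (hpos _ (Nat.div_lt_iff_lt_mul (by omega) |>.2 (by omega)) _ (Nat.mod_lt _ (by omega)))
  · exact le_refl 0

include hm hpos hmono htrans in
lemma gfun_antitone : ∀ t, gfun m ℓ f (t + 1) ≤ gfun m ℓ f t := by
  intro t
  by_cases h1 : t + 1 < ℓ * m
  · have ht : t < ℓ * m := by omega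
    set k := t / m with hk
    set i := t % m with hi
    have him : i < m := Nat.mod_lt _ (by omega)
    have hdecomp : t = i + k * m := by
      rw [hi, hk]; exact (Nat.mod_add_div' t m).symm
    have hkl : k < ℓ := (Nat.div_lt_iff_lt_mul (by omega)).2 (by omega)
    have hgt : gfun m ℓ f t = f k i := by unfold gfun; simp [ht]; rfl
    by_cases him2 : i + 1 < m
    · have e1 : (t + 1) / m = k := by
        have : t + 1 = (i + 1) + k * m := by omega
        rw [this, Nat.add_mul_div_right _ _ (by omega : 0 < m), Nat.div_eq_of_lt him2]
        omega
      have e2 : (t + 1) % m = i + 1 := by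
        have : t + 1 = (i + 1) + k * m := by omega
        rw [this, Nat.add_mul_mod_self_right, Nat.mod_eq_of_lt him2]
      have hgt1 : gfun m ℓ f (t + 1) = f k (i + 1) := by
        unfold gfun; simp [h1, e1, e2]
      rw [hgt, hgt1]
      exact hmono k hkl i him2
    · have him3 : i + 1 = m := by omega
      have hdec1 : t + 1 = (k + 1) * m := by
        rw [add_one_mul]; omega
      have e1 : (t + 1) / m = k + 1 := by
        rw [hdec1, Nat.mul_div_cancel _ (by omega : 0 < m)]
      have e2 : (t + 1) % m = 0 := by
        rw [hdec1, Nat.mul_mod_left]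
      have hkl2 : k + 1 < ℓ := by
        have : (k + 1) * m < ℓ * m := by omega
        exact Nat.lt_of_mul_lt_mul_right this
      have hgt1 : gfun m ℓ f (t + 1) = f (k + 1) 0 := by
        unfold gfun; simp [h1, e1, e2]
      rw [hgt, hgt1]
      have : i = m - 1 := by omega
      rw [this]
      exact le_of_lt (htrans k hkl2)
  · have : gfun m ℓ f (t + 1) = 0 := by unfold gfun; simp [h1]
    rw [this]
    exact gfun_nonneg m ℓ f hm hpos t

include hm hpos hmono htrans in
lemma gfun_succ_lt (t : ℕ) (h1 : t < ℓ * m) (h2 : (t + 1) % m = 0) :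
    gfun m ℓ f (t + 1) < gfun m ℓ f t := by
  set k := t / m with hk
  set i := t % m with hi
  have him : i < m := Nat.mod_lt _ (by omega)
  have hdecomp : t = i + k * m := by
    rw [hi, hk]; exact (Nat.mod_add_div' t m).symm
  have hkl : k < ℓ := (Nat.div_lt_iff_lt_mul (by omega)).2 (by omega)
  have hgt : gfun m ℓ f t = f k i := by unfold gfun; simp [h1]; rfl
  have him3 : i + 1 = m := by
    by_contra hne
    have him2 : i + 1 < m := by omega
    have : (t + 1) % m = i + 1 := by
      have : t + 1 = (i + 1) + k * m := by omega
      rw [this, Nat.add_mul_mod_self_right, Nat.mod_eq_of_lt him2]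
    omega
  have hdec1 : t + 1 = (k + 1) * m := by rw [add_one_mul]; omega
  have hieq : i = m - 1 := by omega
  by_cases hend : t + 1 < ℓ * m
  · have e1 : (t + 1) / m = k + 1 := by
      rw [hdec1, Nat.mul_div_cancel _ (by omega : 0 < m)]
    have hkl2 : k + 1 < ℓ := by
      have : (k + 1) * m < ℓ * m := by omega
      exact Nat.lt_of_mul_lt_mul_right this
    have hgt1 : gfun m ℓ f (t + 1) = f (k + 1) 0 := by
      unfold gfun; simp [hend, e1, h2]
    rw [hgt, hgt1, hieq]
    exact htrans k hkl2
  · have hgt1 : gfun m ℓ f (t + 1) = 0 := by unfold gfun; simp [hend]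
    rw [hgt, hgt1, hieq]
    exact hpos k hkl _ (by omega)

include hm hpos hmono htrans in
lemma gam_sq (t : ℕ) : gam m ℓ f t ^ 2 = gfun m ℓ f t ^ 2 - gfun m ℓ f (t + 1) ^ 2 := by
  apply Real.sq_sqrt
  have h1 := gfun_antitone m ℓ f hm hpos hmono htrans t
  have h2 := gfun_nonneg m ℓ f hm hpos (t + 1)
  nlinarith

lemma gam_nonneg (t : ℕ) : 0 ≤ gam m ℓ f t := Real.sqrt_nonneg _

include hm hpos hmono htrans in
lemma gam_pos_top (t : ℕ) (h1 : t < ℓ * m) (h2 : (t + 1) % m = 0) : 0 < gam m ℓ f t := by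
  apply Real.sqrt_pos.2
  have h3 := gfun_succ_lt m ℓ f hm hpos hmono htrans t h1 h2
  have h4 := gfun_nonneg m ℓ f hm hpos (t + 1)
  nlinarith

include hm hpos hmono htrans in
lemma sum_gam_sq (c : ℕ) (hc : c ≤ ℓ * m) :
    ∑ t : Fin (ℓ * m), (if c ≤ (t : ℕ) then gam m ℓ f t ^ 2 else 0) = gfun m ℓ f c ^ 2 := by
  rw [Fin.sum_univ_eq_sum_range (fun t => if c ≤ t then gam m ℓ f t ^ 2 else 0) (ℓ * m)]
  have key : (∑ x ∈ Finset.range (ℓ * m), (if c ≤ x then gam m ℓ f x ^ 2 else 0))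
      = ∑ x ∈ Finset.Ico c (ℓ * m), (gfun m ℓ f x ^ 2 - gfun m ℓ f (x + 1) ^ 2) := by
    rw [← Finset.sum_subset (s₁ := Finset.Ico c (ℓ * m)) (s₂ := Finset.range (ℓ * m))
        (fun x hx => Finset.mem_range.2 (Finset.mem_Ico.1 hx).2)
        (fun x hx1 hx2 => by
          rw [Finset.mem_range] at hx1
          rw [Finset.mem_Ico] at hx2
          rw [if_neg (by omega)])]
    refine Finset.sum_congr rfl fun x hx => ?_
    rw [if_pos (Finset.mem_Ico.1 hx).1, gam_sq m ℓ f hm hpos hmono htrans x]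
  rw [key, Finset.sum_Ico_eq_sub _ hc, Finset.sum_range_sub' (fun t => gfun m ℓ f t ^ 2),
    Finset.sum_range_sub' (fun t => gfun m ℓ f t ^ 2)]
  have : gfun m ℓ f (ℓ * m) = 0 := by unfold gfun; simp
  rw [this]
  ring

include hm hpos hmono htrans in
lemma norm2_rv (c : ℕ) (hc : c ≤ ℓ * m) : norm2 (rv m ℓ f c) = gfun m ℓ f c := by
  unfold norm2
  rw [EuclideanSpace.norm_eq]
  have h1 : ∀ t : Fin (ℓ * m),
      ‖((WithLp.equiv 2 (Fin (ℓ * m) → ℂ)).symm (rv m ℓ f c)) t‖ ^ 2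
        = if c ≤ (t : ℕ) then gam m ℓ f t ^ 2 else 0 := by
    intro t
    rw [WithLp.equiv_symm_apply, PiLp.toLp_apply]
    unfold rv
    split
    · rw [Complex.norm_real, Real.norm_eq_abs, abs_of_nonneg (gam_nonneg m ℓ f t)]
    · simp
  simp_rw [h1]
  rw [sum_gam_sq m ℓ f hm hpos hmono htrans c hc]
  exact Real.sqrt_sq (gfun_nonneg m ℓ f hm hpos c)

end gfacts

/-- nat helper -/
lemma succ_div_eq (hm : 1 ≤ m) (u : ℕ) (h : (u + 1) % m ≠ 0) : (u + 1) / m = u / m := by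
  have him : u % m < m := Nat.mod_lt _ (by omega)
  have hdecomp : u = u % m + u / m * m := (Nat.mod_add_div' u m).symm
  by_cases him2 : u % m + 1 < m
  · have e : u + 1 = (u % m + 1) + u / m * m := by omega
    rw [e, Nat.add_mul_div_right _ _ (by omega : 0 < m), Nat.div_eq_of_lt him2, Nat.zero_add]
  · exfalso
    have e : u + 1 = (u / m + 1) * m := by rw [add_one_mul]; omega
    rw [e, Nat.mul_mod_left] at h
    exact h rfl

lemma succ_mod_eq (hm : 1 ≤ m) (u : ℕ) (h : (u + 1) % m ≠ 0) : (u + 1) % m = u % m + 1 := by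
  have him : u % m < m := Nat.mod_lt _ (by omega)
  by_cases him2 : u % m + 1 < m
  · have e : u + 1 = (u % m + 1) + u / m * m := by
      have := (Nat.mod_add_div' u m).symm; omega
    rw [e, Nat.add_mul_mod_self_right, Nat.mod_eq_of_lt him2]
  · exfalso
    have e : u + 1 = (u / m + 1) * m := by
      have := (Nat.mod_add_div' u m).symm
      rw [add_one_mul]; omega
    rw [e, Nat.mul_mod_left] at h
    exact h rfl

/-- product of the eigenvalues in the block of `t`, up to `t` -/
noncomputable def pl (t : Fin (ℓ * m)) : ℂ :=
  ∏ s ∈ Finset.univ.filter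
    (fun s : Fin (ℓ * m) => (s : ℕ) / m = (t : ℕ) / m ∧ (s : ℕ) ≤ (t : ℕ)), lam s

noncomputable def ah (t : Fin (ℓ * m)) : ℂ := (pl m ℓ lam t)⁻¹

noncomputable def cc (t : Fin (ℓ * m)) : ℂ :=
  if ((t : ℕ) + 1) % m = 0 then -(pl m ℓ lam t) else -1

noncomputable def Bm : Matrix (Fin (ℓ * m)) (Fin (ℓ * m)) ℂ :=
  Matrix.of fun s t =>
    if s = t then lam t else if (s : ℕ) = (t : ℕ) + 1 then cc m ℓ lam t else 0

section plfacts
variable (hm : 1 ≤ m) (hlam : ∀ i, lam i ≠ 0)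

include hlam in
lemma pl_ne (t : Fin (ℓ * m)) : pl m ℓ lam t ≠ 0 :=
  Finset.prod_ne_zero_iff.2 fun s _ => hlam s

include hlam in
lemma ah_ne (t : Fin (ℓ * m)) : ah m ℓ lam t ≠ 0 :=
  inv_ne_zero (pl_ne m ℓ lam hlam t)

include hm in
lemma pl_start (t : Fin (ℓ * m)) (h : (t : ℕ) % m = 0) : pl m ℓ lam t = lam t := by
  unfold pl
  rw [show Finset.univ.filter
      (fun s : Fin (ℓ * m) => (s : ℕ) / m = (t : ℕ) / m ∧ (s : ℕ) ≤ (t : ℕ)) = {t} from ?_,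
    Finset.prod_singleton]
  ext s
  simp only [Finset.mem_filter, Finset.mem_univ, true_and, Finset.mem_singleton]
  constructor
  · rintro ⟨h1, h2⟩
    have hb : (s : ℕ) / m * m ≤ (s : ℕ) := Nat.div_mul_le_self _ _
    have ht : (t : ℕ) = (t : ℕ) / m * m := by
      have := (Nat.mod_add_div' (t : ℕ) m).symm; omega
    have hb2 : (t : ℕ) / m * m ≤ (s : ℕ) := by rw [← h1]; exact Nat.div_mul_le_self _ _
    apply Fin.ext
    omega
  · rintro rfl; exact ⟨rfl, le_rfl⟩

include hm in
lemma pl_step (t u : Fin (ℓ * m)) (hut : (t : ℕ) = (u : ℕ) + 1) (h : (t : ℕ) % m ≠ 0) :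
    pl m ℓ lam t = pl m ℓ lam u * lam t := by
  have hdiv : (t : ℕ) / m = (u : ℕ) / m := by
    rw [hut]; exact succ_div_eq m hm u (by rw [← hut]; exact h)
  unfold pl
  rw [show Finset.univ.filter
      (fun s : Fin (ℓ * m) => (s : ℕ) / m = (t : ℕ) / m ∧ (s : ℕ) ≤ (t : ℕ))
      = insert t (Finset.univ.filter
        (fun s : Fin (ℓ * m) => (s : ℕ) / m = (u : ℕ) / m ∧ (s : ℕ) ≤ (u : ℕ))) from ?_]
  · rw [Finset.prod_insert (by simp only [Finset.mem_filter]; omega), mul_comm]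
  · ext s
    simp only [Finset.mem_filter, Finset.mem_univ, true_and, Finset.mem_insert]
    constructor
    · rintro ⟨h1, h2⟩
      by_cases hst : s = t
      · exact Or.inl hst
      · have : (s : ℕ) ≠ (t : ℕ) := fun hc => hst (Fin.ext hc)
        exact Or.inr ⟨by omega, by omega⟩
    · rintro (rfl | ⟨h1, h2⟩)
      · exact ⟨rfl, le_rfl⟩
      · exact ⟨by omega, by omega⟩

include hm in
lemma B_mulVec (x : Fin (ℓ * m) → ℂ) (s : Fin (ℓ * m)) :
    (Bm m ℓ lam).mulVec x s = lam s * x s +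
      ∑ t ∈ Finset.univ.filter (fun t : Fin (ℓ * m) => (s : ℕ) = (t : ℕ) + 1),
        cc m ℓ lam t * x t := by
  unfold Matrix.mulVec dotProduct Bm
  have key : ∀ t : Fin (ℓ * m), (Matrix.of fun s t =>
      if s = t then lam t else if (s : ℕ) = (t : ℕ) + 1 then cc m ℓ lam t else 0) s t * x t
      = (if s = t then lam t * x t else 0)
        + (if (s : ℕ) = (t : ℕ) + 1 then cc m ℓ lam t * x t else 0) := by
    intro t
    by_cases h1 : s = t
    · have h2 : ¬ ((s : ℕ) = (t : ℕ) + 1) := by subst h1; omega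
      simp [h1, h2]
    · by_cases h2 : (s : ℕ) = (t : ℕ) + 1
      · simp [h1, h2, Matrix.of_apply]
      · simp [h1, h2, Matrix.of_apply]
  simp_rw [key]
  rw [Finset.sum_add_distrib, Finset.sum_ite_eq Finset.univ s (fun t => lam t * x t)]
  simp only [Finset.mem_univ, if_true]
  rw [← Finset.sum_filter]

include hm in
lemma B_mulVec_succ (x : Fin (ℓ * m) → ℂ) (s u : Fin (ℓ * m)) (h : (s : ℕ) = (u : ℕ) + 1) :
    (Bm m ℓ lam).mulVec x s = lam s * x s + cc m ℓ lam u * x u := by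
  rw [B_mulVec m ℓ lam hm x s]
  congr 1
  rw [show Finset.univ.filter (fun t : Fin (ℓ * m) => (s : ℕ) = (t : ℕ) + 1) = {u} from ?_,
    Finset.sum_singleton]
  ext t
  simp only [Finset.mem_filter, Finset.mem_univ, true_and, Finset.mem_singleton, Fin.ext_iff]
  omega

include hm in
lemma B_mulVec_zero (x : Fin (ℓ * m) → ℂ) (s : Fin (ℓ * m)) (h : (s : ℕ) = 0) :
    (Bm m ℓ lam).mulVec x s = lam s * x s := by
  rw [B_mulVec m ℓ lam hm x s]
  rw [show Finset.univ.filter (fun t : Fin (ℓ * m) => (s : ℕ) = (t : ℕ) + 1) = ∅ from ?_]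
  · simp
  · ext t
    simp only [Finset.mem_filter, Finset.mem_univ, true_and, Finset.notMem_empty, iff_false]
    omega

end plfacts

/-- more nat helpers -/
lemma top_mod (hm : 1 ≤ m) (t : ℕ) (h : (t + 1) % m = 0) : t % m = m - 1 := by
  have him : t % m < m := Nat.mod_lt _ (by omega)
  by_contra hne
  have him2 : t % m + 1 < m := by omega
  have e : t + 1 = (t % m + 1) + t / m * m := by
    have := (Nat.mod_add_div' t m).symm; omega
  rw [e, Nat.add_mul_mod_self_right, Nat.mod_eq_of_lt him2] at h
  omega

lemma mod_top_succ (hm : 1 ≤ m) (t : ℕ) (h : t % m = m - 1) : (t + 1) % m = 0 := by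
  have e : t + 1 = (t / m + 1) * m := by
    have := (Nat.mod_add_div' t m).symm
    rw [add_one_mul]; omega
  rw [e, Nat.mul_mod_left]

lemma div_eq_of_between (hm : 1 ≤ m) {k t : ℕ} (h1 : k * m ≤ t) (h2 : t < (k + 1) * m) :
    t / m = k :=
  Nat.div_eq_of_lt_le (by omega) (by omega)

/-- indicator vector -/
def ind (c : ℕ) : Fin (ℓ * m) → ℂ := fun t => if (t : ℕ) = c then 1 else 0

/-- coordinates of the initial residuals in the `uv` basis -/
noncomputable def yh (c : ℕ) : Fin (ℓ * m) → ℂ :=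
  fun t => if c ≤ (t : ℕ) then ah m ℓ lam t else 0

/-- the basis vectors (columns of `Sm`) -/
noncomputable def uv (t : Fin (ℓ * m)) : Fin (ℓ * m) → ℂ :=
  if ((t : ℕ) + 1) % m = 0 then
    (fun s => if (s : ℕ) / m = (t : ℕ) / m then
        pl m ℓ lam t * (((gam m ℓ f (s : ℕ) : ℝ) : ℂ) - (if s = t then 0 else ah m ℓ lam s))
      else 0)
  else Pi.single t 1

noncomputable def Sm : Matrix (Fin (ℓ * m)) (Fin (ℓ * m)) ℂ :=
  Matrix.of fun s t => uv m ℓ f lam t s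

section ufacts
variable (hm : 1 ≤ m) (hlam : ∀ i, lam i ≠ 0)

include hm in
lemma uv_eq_zero (t s : Fin (ℓ * m))
    (h : ¬((s : ℕ) ≤ (t : ℕ) ∧ (s : ℕ) / m = (t : ℕ) / m)) : uv m ℓ f lam t s = 0 := by
  unfold uv
  split
  · next htop =>
    by_cases hsb : (s : ℕ) / m = (t : ℕ) / m
    · exfalso
      have h1 : (t : ℕ) % m = m - 1 := top_mod m hm _ htop
      have h2 : (s : ℕ) % m < m := Nat.mod_lt _ (by omega)
      have h3 : (s : ℕ) = (s : ℕ) / m * m + (s : ℕ) % m := by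
        have := (Nat.mod_add_div' (s : ℕ) m).symm; omega
      have h4 : (t : ℕ) = (t : ℕ) / m * m + (t : ℕ) % m := by
        have := (Nat.mod_add_div' (t : ℕ) m).symm; omega
      rw [hsb] at h3
      exact h ⟨by omega, hsb⟩
    · exact if_neg hsb
  · next hnt =>
    have hst : s ≠ t := by
      intro hc; subst hc; exact h ⟨le_rfl, rfl⟩
    rw [Pi.single_apply, if_neg hst]

lemma uv_diag_nontop (t : Fin (ℓ * m)) (h : ((t : ℕ) + 1) % m ≠ 0) :
    uv m ℓ f lam t t = 1 := by
  unfold uv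
  rw [if_neg h, Pi.single_apply, if_pos rfl]

lemma uv_diag_top (t : Fin (ℓ * m)) (h : ((t : ℕ) + 1) % m = 0) :
    uv m ℓ f lam t t = pl m ℓ lam t * ((gam m ℓ f (t : ℕ) : ℝ) : ℂ) := by
  unfold uv
  rw [if_pos h]
  simp

lemma Sm_mulVec (x : Fin (ℓ * m) → ℂ) (s : Fin (ℓ * m)) :
    (Sm m ℓ f lam).mulVec x s = ∑ t, x t * uv m ℓ f lam t s := by
  simp only [Sm, Matrix.mulVec, dotProduct, Matrix.of_apply]
  exact Finset.sum_congr rfl fun t _ => mul_comm _ _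

lemma uv_nontop_ne (t s : Fin (ℓ * m)) (hnt : ((t : ℕ) + 1) % m ≠ 0) (hst : s ≠ t) :
    uv m ℓ f lam t s = 0 := by
  unfold uv
  rw [if_neg hnt, Pi.single_apply, if_neg hst]

include hm hlam in
lemma S_yh (k : ℕ) :
    (Sm m ℓ f lam).mulVec (yh m ℓ lam (k * m)) = rv m ℓ f (k * m) := by
  funext s
  rw [Sm_mulVec]
  have hsl : (s : ℕ) / m < ℓ := (Nat.div_lt_iff_lt_mul (by omega)).2 (by omega)
  have hsm : (s : ℕ) % m < m := Nat.mod_lt _ (by omega)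
  have hsd : (s : ℕ) = (s : ℕ) / m * m + (s : ℕ) % m := by
    have := (Nat.mod_add_div' (s : ℕ) m).symm; omega
  have hTlt : (s : ℕ) / m * m + (m - 1) < ℓ * m := by
    have : ((s : ℕ) / m + 1) * m ≤ ℓ * m := Nat.mul_le_mul_right m hsl
    rw [add_one_mul] at this
    omega
  set T : Fin (ℓ * m) := ⟨(s : ℕ) / m * m + (m - 1), hTlt⟩ with hT
  have hTval : (T : ℕ) = (s : ℕ) / m * m + (m - 1) := rfl
  have hTdiv : (T : ℕ) / m = (s : ℕ) / m := div_eq_of_between m hm (by omega) (by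
    rw [add_one_mul]; omega)
  have hTmod : (T : ℕ) % m = m - 1 := by
    rw [hTval, Nat.mul_comm, Nat.add_comm, Nat.add_mul_mod_self_left,
      Nat.mod_eq_of_lt (by omega)]
  have hTtop : ((T : ℕ) + 1) % m = 0 := mod_top_succ m hm _ hTmod
  have hsT : (s : ℕ) ≤ (T : ℕ) := by omega
  have hzero : ∀ t ∈ Finset.univ, t ∉ ({s, T} : Finset (Fin (ℓ * m))) →
      yh m ℓ lam (k * m) t * uv m ℓ f lam t s = 0 := by
    intro t _ ht
    simp only [Finset.mem_insert, Finset.mem_singleton] at ht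
    push_neg at ht
    by_cases htop : ((t : ℕ) + 1) % m = 0
    · rw [uv_eq_zero m ℓ f lam hm t s ?_, mul_zero]
      rintro ⟨h1, h2⟩
      have h3 : (t : ℕ) % m = m - 1 := top_mod m hm _ htop
      have htd : (t : ℕ) = (t : ℕ) / m * m + (t : ℕ) % m := by
        have := (Nat.mod_add_div' (t : ℕ) m).symm; omega
      have h4 : (t : ℕ) / m * m = (s : ℕ) / m * m := by rw [h2]
      exact ht.2 (Fin.ext (by rw [hTval]; omega))
    · rw [uv_nontop_ne m ℓ f lam t s htop (fun hc => ht.1 hc.symm), mul_zero]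
  rw [← Finset.sum_subset (Finset.subset_univ ({s, T} : Finset (Fin (ℓ * m)))) hzero]
  by_cases hsTeq : s = T
  · rw [show ({s, T} : Finset (Fin (ℓ * m))) = {s} from by
      rw [← hsTeq]; exact Finset.insert_eq_self.2 (Finset.mem_singleton_self s)]
    rw [Finset.sum_singleton]
    have hstop : ((s : ℕ) + 1) % m = 0 := by rw [hsTeq]; exact hTtop
    rw [uv_diag_top m ℓ f lam s hstop]
    unfold yh rv
    by_cases hks : k * m ≤ (s : ℕ)
    · rw [if_pos hks, if_pos hks, ← mul_assoc]
      unfold ah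
      rw [inv_mul_cancel₀ (pl_ne m ℓ lam hlam s), one_mul]
    · rw [if_neg hks, if_neg hks, zero_mul]
  · rw [Finset.sum_pair hsTeq]
    have hsnontop : ((s : ℕ) + 1) % m ≠ 0 := by
      intro hc
      apply hsTeq
      apply Fin.ext
      have : (s : ℕ) % m = m - 1 := top_mod m hm _ hc
      rw [hTval]; omega
    rw [uv_diag_nontop m ℓ f lam s hsnontop]
    have huvT : uv m ℓ f lam T s
        = pl m ℓ lam T * (((gam m ℓ f (s : ℕ) : ℝ) : ℂ) - ah m ℓ lam s) := by
      unfold uv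
      rw [if_pos hTtop]
      show (if (s : ℕ) / m = (T : ℕ) / m then
        pl m ℓ lam T * (((gam m ℓ f (s : ℕ) : ℝ) : ℂ) - (if s = T then 0 else ah m ℓ lam s))
        else 0) = _
      rw [if_pos hTdiv.symm, if_neg hsTeq]
    unfold yh rv
    by_cases hks : k * m ≤ (s : ℕ)
    · have hkT : k * m ≤ (T : ℕ) := le_trans hks hsT
      rw [if_pos hks, if_pos hkT, if_pos hks, huvT, mul_one, ← mul_assoc]
      unfold ah
      rw [inv_mul_cancel₀ (pl_ne m ℓ lam hlam T), one_mul]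
      ring
    · have hTk : (T : ℕ) < k * m := by
        have h5 : (s : ℕ) / m < k := (Nat.div_lt_iff_lt_mul (by omega)).2 (by omega)
        have h6 : ((s : ℕ) / m + 1) * m ≤ k * m := Nat.mul_le_mul_right m h5
        rw [add_one_mul] at h6
        omega
      rw [if_neg hks, if_neg (by omega), if_neg hks]
      simp

include hm hlam in
lemma B_yh (k : ℕ) :
    (Bm m ℓ lam).mulVec (yh m ℓ lam (k * m)) = ind m ℓ (k * m) := by
  funext s
  have hkm0 : (k * m) % m = 0 := Nat.mul_mod_left k m
  by_cases h0 : (s : ℕ) = 0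
  · rw [B_mulVec_zero m ℓ lam hm _ s h0]
    unfold yh ind
    by_cases hks : k * m ≤ (s : ℕ)
    · have hskm : (s : ℕ) = k * m := by omega
      rw [if_pos hks, if_pos hskm]
      have hs0 : (s : ℕ) % m = 0 := by rw [h0]; exact Nat.zero_mod m
      unfold ah
      rw [pl_start m ℓ lam hm s hs0, mul_inv_cancel₀ (hlam s)]
    · rw [if_neg hks, if_neg (by omega), mul_zero]
  · have hu : (s : ℕ) - 1 < ℓ * m := by omega
    set u : Fin (ℓ * m) := ⟨(s : ℕ) - 1, hu⟩ with huu
    have huval : (u : ℕ) = (s : ℕ) - 1 := rfl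
    have hsu : (s : ℕ) = (u : ℕ) + 1 := by omega
    rw [B_mulVec_succ m ℓ lam hm _ s u hsu]
    unfold yh ind
    by_cases hks : k * m ≤ (s : ℕ)
    · by_cases hskm : (s : ℕ) = k * m
      · -- block start of cycle k : result 1
        have hs0 : (s : ℕ) % m = 0 := by rw [hskm]; exact hkm0
        have hku : ¬ (k * m ≤ (u : ℕ)) := by omega
        rw [if_pos hks, if_neg hku, mul_zero, add_zero, if_pos hskm]
        unfold ah
        rw [pl_start m ℓ lam hm s hs0, mul_inv_cancel₀ (hlam s)]
      · have hks' : k * m < (s : ℕ) := by omega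
        have hku : k * m ≤ (u : ℕ) := by omega
        rw [if_pos hks, if_pos hku, if_neg hskm]
        by_cases hs0 : (s : ℕ) % m = 0
        · -- interior block start: 1 - 1 = 0
          have hcc : cc m ℓ lam u = -(pl m ℓ lam u) := by
            unfold cc
            rw [if_pos (by rw [← hsu]; exact hs0)]
          rw [hcc]
          unfold ah
          rw [pl_start m ℓ lam hm s hs0, mul_inv_cancel₀ (hlam s)]
          rw [neg_mul, mul_inv_cancel₀ (pl_ne m ℓ lam hlam u)]
          ring
        · -- interior step: ah u - ah u = 0
          have hcc : cc m ℓ lam u = -1 := by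
            unfold cc
            rw [if_neg (by rw [← hsu]; exact hs0)]
          have hpls : pl m ℓ lam s = pl m ℓ lam u * lam s := pl_step m ℓ lam hm s u hsu hs0
          unfold ah
          rw [hcc, hpls, _root_.mul_inv_rev, ← mul_assoc, mul_inv_cancel₀ (hlam s), one_mul]
          ring
    · -- s before cycle k : all zero
      have hku : ¬ (k * m ≤ (u : ℕ)) := by omega
      rw [if_neg hks, if_neg hku, if_neg (by omega)]
      ring

include hm in
lemma Bpow_ind (k d : ℕ) (hd : d < m) :
    (∀ s : Fin (ℓ * m), ((s : ℕ) < k * m ∨ k * m + d < (s : ℕ)) →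
      ((Bm m ℓ lam ^ d).mulVec (ind m ℓ (k * m))) s = 0)
    ∧ (∀ s : Fin (ℓ * m), (s : ℕ) = k * m + d →
      ((Bm m ℓ lam ^ d).mulVec (ind m ℓ (k * m))) s = (-1 : ℂ) ^ d) := by
  induction d with
  | zero =>
    rw [pow_zero, Matrix.one_mulVec]
    constructor
    · intro s hs; unfold ind; rw [if_neg (by omega)]
    · intro s hs; unfold ind; rw [if_pos (by omega), pow_zero]
  | succ d IH =>
    have hd' : d < m := by omega
    obtain ⟨IH1, IH2⟩ := IH hd'
    have hstep : (Bm m ℓ lam ^ (d + 1)).mulVec (ind m ℓ (k * m))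
        = (Bm m ℓ lam).mulVec ((Bm m ℓ lam ^ d).mulVec (ind m ℓ (k * m))) := by
      rw [Matrix.mulVec_mulVec, ← pow_succ']
    rw [hstep]
    constructor
    · intro s hs
      by_cases h0 : (s : ℕ) = 0
      · rw [B_mulVec_zero m ℓ lam hm _ s h0, IH1 s (by omega), mul_zero]
      · have hu : (s : ℕ) - 1 < ℓ * m := by omega
        set u : Fin (ℓ * m) := ⟨(s : ℕ) - 1, hu⟩ with huu
        have huval : (u : ℕ) = (s : ℕ) - 1 := rfl
        have hsu : (s : ℕ) = (u : ℕ) + 1 := by omega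
        rw [B_mulVec_succ m ℓ lam hm _ s u hsu, IH1 s (by omega), IH1 u (by omega),
          mul_zero, mul_zero, add_zero]
    · intro s hs
      have h0 : (s : ℕ) ≠ 0 := by omega
      have hu : (s : ℕ) - 1 < ℓ * m := by omega
      set u : Fin (ℓ * m) := ⟨(s : ℕ) - 1, hu⟩ with huu
      have huval : (u : ℕ) = (s : ℕ) - 1 := rfl
      have hsu : (s : ℕ) = (u : ℕ) + 1 := by omega
      rw [B_mulVec_succ m ℓ lam hm _ s u hsu, IH1 s (by omega), IH2 u (by omega),
        mul_zero, zero_add]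
      have hccu : ((u : ℕ) + 1) % m ≠ 0 := by
        rw [← hsu]
        have he : (s : ℕ) = (d + 1) + k * m := by omega
        rw [he, Nat.add_mul_mod_self_right, Nat.mod_eq_of_lt hd]
        omega
      have hcc : cc m ℓ lam u = -1 := by
        unfold cc
        rw [if_neg hccu]
      rw [hcc]
      ring

include hm in
lemma wk_supp (k d : ℕ) (hd : d < m) (hk : k < ℓ) (s : Fin (ℓ * m))
    (hs : (s : ℕ) < k * m ∨ k * m + d < (s : ℕ)) :
    (Sm m ℓ f lam).mulVec ((Bm m ℓ lam ^ d).mulVec (ind m ℓ (k * m))) s = 0 := by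
  rw [Sm_mulVec]
  apply Finset.sum_eq_zero
  intro t _
  by_cases hX : ((Bm m ℓ lam ^ d).mulVec (ind m ℓ (k * m))) t = 0
  · rw [hX, zero_mul]
  · have hbt : k * m ≤ (t : ℕ) ∧ (t : ℕ) ≤ k * m + d := by
      by_contra hc
      exact hX ((Bpow_ind m ℓ lam hm k d hd).1 t (by omega))
    have htdiv : (t : ℕ) / m = k := div_eq_of_between m hm hbt.1 (by rw [add_one_mul]; omega)
    rw [uv_eq_zero m ℓ f lam hm t s ?_, mul_zero]
    rintro ⟨h1, h2⟩
    rcases hs with hs | hs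
    · rw [htdiv] at h2
      have : (s : ℕ) / m < k := (Nat.div_lt_iff_lt_mul (by omega)).2 (by omega)
      omega
    · omega

include hm in
lemma wk_top (k d : ℕ) (hd : d < m) (hk : k < ℓ) (s : Fin (ℓ * m))
    (hs : (s : ℕ) = k * m + d) :
    (Sm m ℓ f lam).mulVec ((Bm m ℓ lam ^ d).mulVec (ind m ℓ (k * m))) s
      = (-1 : ℂ) ^ d * uv m ℓ f lam s s := by
  rw [Sm_mulVec]
  rw [Finset.sum_eq_single s]
  · rw [(Bpow_ind m ℓ lam hm k d hd).2 s hs]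
  · intro t _ hts
    by_cases hX : ((Bm m ℓ lam ^ d).mulVec (ind m ℓ (k * m))) t = 0
    · rw [hX, zero_mul]
    · have hbt : k * m ≤ (t : ℕ) ∧ (t : ℕ) ≤ k * m + d := by
        by_contra hc
        exact hX ((Bpow_ind m ℓ lam hm k d hd).1 t (by omega))
      rw [uv_eq_zero m ℓ f lam hm t s ?_, mul_zero]
      rintro ⟨h1, h2⟩
      exact hts (Fin.ext (by omega))
  · intro hc
    exact absurd (Finset.mem_univ s) hc

include hm in
lemma S_triangular : (Sm m ℓ f lam).BlockTriangular id := by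
  intro s t h
  show uv m ℓ f lam t s = 0
  exact uv_eq_zero m ℓ f lam hm t s (by
    rintro ⟨h1, _⟩
    have : (t : ℕ) < (s : ℕ) := h
    omega)

include hm in
lemma S_det : (Sm m ℓ f lam).det = ∏ t, uv m ℓ f lam t t := by
  rw [Matrix.det_of_upperTriangular (S_triangular m ℓ f lam hm)]
  rfl

variable (hpos : ∀ k < ℓ, ∀ j < m, 0 < f k j)
  (hmono : ∀ k < ℓ, ∀ j : ℕ, j + 1 < m → f k (j + 1) ≤ f k j)
  (htrans : ∀ k : ℕ, k + 1 < ℓ → f (k + 1) 0 < f k (m - 1))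

include hm hlam hpos hmono htrans in
lemma uv_diag_ne (t : Fin (ℓ * m)) : uv m ℓ f lam t t ≠ 0 := by
  by_cases htop : ((t : ℕ) + 1) % m = 0
  · rw [uv_diag_top m ℓ f lam t htop]
    apply mul_ne_zero (pl_ne m ℓ lam hlam t)
    rw [Ne, Complex.ofReal_eq_zero]
    exact ne_of_gt (gam_pos_top m ℓ f hm hpos hmono htrans (t : ℕ) t.isLt htop)
  · rw [uv_diag_nontop m ℓ f lam t htop]
    exact one_ne_zero

include hm hlam hpos hmono htrans in
lemma S_det_unit : IsUnit (Sm m ℓ f lam).det := by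
  rw [isUnit_iff_ne_zero, S_det m ℓ f lam hm]
  exact Finset.prod_ne_zero_iff.2 fun t _ =>
    uv_diag_ne m ℓ f lam hm hlam hpos hmono htrans t

end ufacts

lemma charpoly_conj {N : Type*} [Fintype N] [DecidableEq N] (S B : Matrix N N ℂ)
    (h : IsUnit S.det) : (S * B * S⁻¹).charpoly = B.charpoly := by
  have hSS : S * S⁻¹ = 1 := Matrix.mul_nonsing_inv S h
  set Cm : Matrix N N ℂ →+* Matrix N N (Polynomial ℂ)
    := (Polynomial.C : ℂ →+* (Polynomial ℂ)).mapMatrix with hCm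
  have hSS' : Cm S * Cm S⁻¹ = 1 := by rw [← _root_.map_mul, hSS, _root_.map_one]
  have h1 : (S * B * S⁻¹).charmatrix = Cm S * B.charmatrix * Cm S⁻¹ := by
    show Matrix.scalar _ X - Cm (S * B * S⁻¹)
      = Cm S * (Matrix.scalar _ X - Cm B) * Cm S⁻¹
    rw [Matrix.mul_sub, Matrix.sub_mul, _root_.map_mul, _root_.map_mul]
    congr 1
    symm
    rw [← Matrix.scalar_commute (X : Polynomial ℂ) (fun r' => Commute.all X r') (Cm S),
      Matrix.mul_assoc, hSS', Matrix.mul_one]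
  unfold Matrix.charpoly
  rw [h1, Matrix.det_mul, Matrix.det_mul]
  have h2 : (Cm S).det * (Cm S⁻¹).det = 1 := by
    rw [← Matrix.det_mul, hSS', Matrix.det_one]
  rw [mul_comm ((Cm S).det) (B.charmatrix.det), mul_assoc, h2, mul_one]

section afacts
variable (hm : 1 ≤ m) (hlam : ∀ i, lam i ≠ 0)

lemma B_triangular : (Bm m ℓ lam).BlockTriangular OrderDual.toDual := by
  intro s t h
  have hst : (s : ℕ) < (t : ℕ) := h
  show (if s = t then lam t else if (s : ℕ) = (t : ℕ) + 1 then cc m ℓ lam t else 0) = 0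
  rw [if_neg (by intro hc; subst hc; omega), if_neg (by omega)]

lemma B_charpoly : (Bm m ℓ lam).charpoly = ∏ t, (X - C (lam t)) := by
  unfold Matrix.charpoly
  rw [Matrix.det_of_lowerTriangular _ ((B_triangular m ℓ lam).charmatrix)]
  refine Finset.prod_congr rfl fun t _ => ?_
  rw [Matrix.charmatrix_apply_eq]
  congr 2
  show (if t = t then lam t else _) = lam t
  rw [if_pos rfl]

/-- the final matrix -/
noncomputable def Am : Matrix (Fin (ℓ * m)) (Fin (ℓ * m)) ℂ :=
  Sm m ℓ f lam * Bm m ℓ lam * (Sm m ℓ f lam)⁻¹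

lemma A_charpoly (hdet : IsUnit (Sm m ℓ f lam).det) :
    (Am m ℓ f lam).charpoly = ∏ t, (X - C (lam t)) :=
  (charpoly_conj _ _ hdet).trans (B_charpoly m ℓ lam)

lemma A_mulVec_S (hdet : IsUnit (Sm m ℓ f lam).det) (x : Fin (ℓ * m) → ℂ) :
    (Am m ℓ f lam).mulVec ((Sm m ℓ f lam).mulVec x)
      = (Sm m ℓ f lam).mulVec ((Bm m ℓ lam).mulVec x) := by
  rw [Matrix.mulVec_mulVec, Matrix.mulVec_mulVec]
  congr 1
  unfold Am
  rw [Matrix.mul_assoc (Sm m ℓ f lam * Bm m ℓ lam), Matrix.nonsing_inv_mul _ hdet,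
    Matrix.mul_one]

lemma A_pow_mulVec (hdet : IsUnit (Sm m ℓ f lam).det) (d : ℕ) (x : Fin (ℓ * m) → ℂ) :
    (Am m ℓ f lam ^ d).mulVec ((Sm m ℓ f lam).mulVec x)
      = (Sm m ℓ f lam).mulVec ((Bm m ℓ lam ^ d).mulVec x) := by
  induction d generalizing x with
  | zero => rw [pow_zero, pow_zero, Matrix.one_mulVec, Matrix.one_mulVec]
  | succ d IH =>
    rw [pow_succ', pow_succ', ← Matrix.mulVec_mulVec, ← Matrix.mulVec_mulVec,
      IH x, A_mulVec_S m ℓ f lam hdet]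

include hm hlam in
lemma A_kry (hdet : IsUnit (Sm m ℓ f lam).det) (k i : ℕ) :
    (Am m ℓ f lam ^ (i + 1)).mulVec (rv m ℓ f (k * m))
      = (Sm m ℓ f lam).mulVec ((Bm m ℓ lam ^ i).mulVec (ind m ℓ (k * m))) := by
  rw [← S_yh m ℓ f lam hm hlam k, A_pow_mulVec m ℓ f lam hdet, pow_succ,
    ← Matrix.mulVec_mulVec, B_yh m ℓ lam hm hlam k]

end afacts
end Constr


section Final
variable (m ℓ : ℕ) (f : ℕ → ℕ → ℝ) (lam : Fin (ℓ * m) → ℂ)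
variable (hm : 1 ≤ m) (hl : 1 ≤ ℓ) (hlam : ∀ i, lam i ≠ 0)
  (hpos : ∀ k < ℓ, ∀ j < m, 0 < f k j)
  (hmono : ∀ k < ℓ, ∀ j : ℕ, j + 1 < m → f k (j + 1) ≤ f k j)
  (htrans : ∀ k : ℕ, k + 1 < ℓ → f (k + 1) 0 < f k (m - 1))

lemma vec_decomp (x : Fin (ℓ * m) → ℂ) : x = ∑ t, x t • ind m ℓ (t : ℕ) := by
  funext s
  rw [Finset.sum_apply, Finset.sum_eq_single s]
  · unfold ind
    rw [Pi.smul_apply, if_pos rfl, smul_eq_mul, mul_one]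
  · intro t _ hts
    unfold ind
    rw [Pi.smul_apply, if_neg (fun hc => hts (Fin.ext hc.symm)), smul_eq_mul, mul_zero]
  · intro hc
    exact absurd (Finset.mem_univ s) hc

include hm hlam hpos hmono htrans in
lemma ind_mem_kry (hdet : IsUnit (Sm m ℓ f lam).det) (k j : ℕ) (hk : k < ℓ) (hj : j ≤ m) :
    ∀ i : ℕ, i < j → GA.Lmap (ℓ * m) (ind m ℓ (k * m + i))
      ∈ GA.kry (Am m ℓ f lam) (rv m ℓ f (k * m)) j := by
  intro i
  induction i using Nat.strong_induction_on with
  | _ i IH =>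
  intro hi
  have him : i < m := lt_of_lt_of_le hi hj
  have hpf : k * m + i < ℓ * m := by
    have h8 : (k + 1) * m ≤ ℓ * m := Nat.mul_le_mul_right m hk
    rw [add_one_mul] at h8
    omega
  set s : Fin (ℓ * m) := ⟨k * m + i, hpf⟩ with hs
  set W : Fin (ℓ * m) → ℂ
    := (Sm m ℓ f lam).mulVec ((Bm m ℓ lam ^ i).mulVec (ind m ℓ (k * m))) with hW
  have hWmem : GA.Lmap (ℓ * m) W ∈ GA.kry (Am m ℓ f lam) (rv m ℓ f (k * m)) j := by
    rw [hW, ← A_kry m ℓ f lam hm hlam hdet k i]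
    exact Submodule.subset_span ⟨⟨i, hi⟩, rfl⟩
  have htopc : W s = (-1 : ℂ) ^ i * uv m ℓ f lam s s :=
    wk_top m ℓ f lam hm k i him hk s rfl
  have htopne : W s ≠ 0 := by
    rw [htopc]
    exact mul_ne_zero (pow_ne_zero _ (by norm_num))
      (uv_diag_ne m ℓ f lam hm hlam hpos hmono htrans s)
  have hdecomp := vec_decomp m ℓ W
  have h5 : W s • ind m ℓ (k * m + i)
      = W - ∑ t ∈ Finset.univ.erase s, W t • ind m ℓ (t : ℕ) := by
    rw [eq_sub_iff_add_eq]
    exact (Finset.add_sum_erase Finset.univ (fun t => W t • ind m ℓ (t : ℕ))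
      (Finset.mem_univ s)).trans hdecomp.symm
  have h6 : ind m ℓ (k * m + i)
      = (W s)⁻¹ • (W - ∑ t ∈ Finset.univ.erase s, W t • ind m ℓ (t : ℕ)) := by
    rw [← h5, inv_smul_smul₀ htopne]
  rw [h6, _root_.map_smul, map_sub, map_sum]
  apply Submodule.smul_mem
  apply Submodule.sub_mem _ hWmem
  apply Submodule.sum_mem
  intro t ht
  by_cases hWt : W t = 0
  · rw [_root_.map_smul, hWt, zero_smul]
    exact Submodule.zero_mem _
  · have hbt : k * m ≤ (t : ℕ) ∧ (t : ℕ) ≤ k * m + i := by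
      by_contra hc
      exact hWt (wk_supp m ℓ f lam hm k i him hk t (by omega))
    have hts : (t : ℕ) ≠ k * m + i := by
      intro hc
      exact (Finset.mem_erase.1 ht).1 (Fin.ext hc)
    have hp : (t : ℕ) = k * m + ((t : ℕ) - k * m) := by omega
    rw [_root_.map_smul, hp]
    exact Submodule.smul_mem _ _ (IH _ (by omega) (by omega))

include hm hlam hpos hmono htrans in
lemma diff_mem_kry (hdet : IsUnit (Sm m ℓ f lam).det) (k j : ℕ) (hk : k < ℓ) (hj : j ≤ m) :
    GA.Lmap (ℓ * m) (rv m ℓ f (k * m) - rv m ℓ f (k * m + j))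
      ∈ GA.kry (Am m ℓ f lam) (rv m ℓ f (k * m)) j := by
  set v : Fin (ℓ * m) → ℂ := rv m ℓ f (k * m) - rv m ℓ f (k * m + j) with hv
  rw [vec_decomp m ℓ v, map_sum]
  apply Submodule.sum_mem
  intro t _
  by_cases hvt : v t = 0
  · rw [_root_.map_smul, hvt, zero_smul]
    exact Submodule.zero_mem _
  · have hbt : k * m ≤ (t : ℕ) ∧ (t : ℕ) < k * m + j := by
      by_contra hc
      apply hvt
      rw [hv]
      show rv m ℓ f (k * m) t - rv m ℓ f (k * m + j) t = 0
      unfold rv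
      by_cases h1 : k * m ≤ (t : ℕ)
      · rw [if_pos h1, if_pos (by omega), sub_self]
      · rw [if_neg h1, if_neg (by omega), sub_self]
    have hp : (t : ℕ) = k * m + ((t : ℕ) - k * m) := by omega
    rw [_root_.map_smul, hp]
    exact Submodule.smul_mem _ _
      (ind_mem_kry m ℓ f lam hm hlam hpos hmono htrans hdet k j hk hj _ (by omega))

include hm hlam in
lemma rv_orth (hdet : IsUnit (Sm m ℓ f lam).det) (k j : ℕ) (hk : k < ℓ) (hj : j ≤ m)
    (i : Fin j) :
    (inner ℂ (GA.Lmap (ℓ * m) (rv m ℓ f (k * m + j)))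
      (GA.Lmap (ℓ * m) ((Am m ℓ f lam ^ ((i : ℕ) + 1)).mulVec (rv m ℓ f (k * m)))) : ℂ)
      = 0 := by
  rw [A_kry m ℓ f lam hm hlam hdet k (i : ℕ), GA.inner_Lmap]
  apply Finset.sum_eq_zero
  intro t _
  by_cases h1 : k * m + j ≤ (t : ℕ)
  · rw [wk_supp m ℓ f lam hm k (i : ℕ) (lt_of_lt_of_le i.isLt hj) hk t (by
      right
      have := i.isLt
      omega), mul_zero]
  · have : rv m ℓ f (k * m + j) t = 0 := by unfold rv; rw [if_neg h1]
    rw [this, map_zero, zero_mul]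

include hm hlam hpos hmono htrans in
lemma gres_rv (hdet : IsUnit (Sm m ℓ f lam).det) (k j : ℕ) (hk : k < ℓ) (hj : j ≤ m) :
    GA.gres (Am m ℓ f lam) (rv m ℓ f (k * m)) j = rv m ℓ f (k * m + j) :=
  GA.gres_eq _ _ _ _
    (diff_mem_kry m ℓ f lam hm hlam hpos hmono htrans hdet k j hk hj)
    (rv_orth m ℓ f lam hm hlam hdet k j hk hj)

include hm in
lemma gfun_eval (k j : ℕ) (hk : k < ℓ) (hj : j < m) : gfun m ℓ f (k * m + j) = f k j := by
  have hpf : k * m + j < ℓ * m := by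
    have h8 : (k + 1) * m ≤ ℓ * m := Nat.mul_le_mul_right m hk
    rw [add_one_mul] at h8
    omega
  have hdiv : (k * m + j) / m = k := div_eq_of_between m hm (by omega) (by rw [add_one_mul]; omega)
  have hmod : (k * m + j) % m = j := by
    rw [Nat.add_comm, Nat.add_mul_mod_self_right, Nat.mod_eq_of_lt hj]
  unfold gfun
  rw [if_pos hpf, hdiv, hmod]

end Final

/-- **Prescribed convergence of restarted GMRES with prescribed spectrum.**
Given positive numbers `f k j` (cycles `k = 0, …, ℓ-1`, steps `j = 0, …, m-1`) which are
non-increasing within each cycle and strictly decreasing at transitions between consecutive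
cycles, and arbitrary nonzero complex numbers `lam 0, …, lam (n-1)` (`n = ℓ m`), there exist
`A ∈ ℂ^{n×n}` with characteristic polynomial `∏ i (z - lam i)` and `b ∈ ℂ^n` such that
restarted GMRES with cycle length `m` applied to `A x = b` with zero initial guess produces
residuals `r k j` satisfying `‖r k j‖ = f k j`. -/
theorem prescribed_restarted_gmres_convergence_with_spectrum
    (m ℓ : ℕ) (hm : 1 ≤ m) (hl : 1 ≤ ℓ)
    (f : ℕ → ℕ → ℝ)
    (hpos : ∀ k < ℓ, ∀ j < m, 0 < f k j)
    (hmono : ∀ k < ℓ, ∀ j : ℕ, j + 1 < m → f k (j + 1) ≤ f k j)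
    (htrans : ∀ k : ℕ, k + 1 < ℓ → f (k + 1) 0 < f k (m - 1))
    (lam : Fin (ℓ * m) → ℂ) (hlam : ∀ i, lam i ≠ 0) :
    ∃ (A : Matrix (Fin (ℓ * m)) (Fin (ℓ * m)) ℂ) (b : Fin (ℓ * m) → ℂ)
      (r : ℕ → ℕ → (Fin (ℓ * m) → ℂ)) (rstart : ℕ → (Fin (ℓ * m) → ℂ)),
      A.charpoly = ∏ i : Fin (ℓ * m), (X - Polynomial.C (lam i)) ∧
      rstart 0 = b ∧
      (∀ k j : ℕ, IsGMRESResidual A (rstart k) j (r k j)) ∧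
      (∀ k : ℕ, rstart (k + 1) = r k m) ∧
      (∀ k < ℓ, ∀ j < m, norm2 (r k j) = f k j) := by
  have hdet : IsUnit (Sm m ℓ f lam).det := S_det_unit m ℓ f lam hm hlam hpos hmono htrans
  set A := Am m ℓ f lam with hA
  set b := rv m ℓ f (0 * m) with hb
  set rstart := GA.rchain A m b with hrstart
  set r : ℕ → ℕ → (Fin (ℓ * m) → ℂ) := fun k j => GA.gres A (rstart k) j with hr
  have hchain : ∀ k < ℓ, rstart k = rv m ℓ f (k * m) := by
    intro k hk
    induction k with
    | zero => rfl
    | succ k IHk =>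
      have hk' : k < ℓ := by omega
      show GA.gres A (rstart k) m = _
      rw [IHk hk', hA, gres_rv m ℓ f lam hm hlam hpos hmono htrans hdet k m hk' le_rfl]
      congr 1
      rw [add_one_mul]
  refine ⟨A, b, r, rstart, ?_, rfl, ?_, ?_, ?_⟩
  · exact A_charpoly m ℓ f lam hdet
  · intro k j
    exact GA.isGMRES_gres A (rstart k) j
  · intro k
    rfl
  · intro k hk j hj
    show norm2 (GA.gres A (rstart k) j) = f k j
    rw [hchain k hk, hA, gres_rv m ℓ f lam hm hlam hpos hmono htrans hdet k j hk (le_of_lt hj),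
      norm2_rv m ℓ f hm hpos hmono htrans (k * m + j) (by
        have h8 : (k + 1) * m ≤ ℓ * m := Nat.mul_le_mul_right m hk
        rw [add_one_mul] at h8
        omega),
      gfun_eval m ℓ f hm k j hk hj]
end

section
/- Rank-one update of the restarted Arnoldi relation at the final cycle: Let n = ℓm with ℓ, m ≥ 1, let Ṽ ∈ ℂ^{n×n} be invertible with last m columns V := Ṽ[:, n−m+1:n], and let H̃ ∈ ℂ^{n×n} be a matrix whose last m columns equal [0_{(n−m)×m}; H_{m×m}] (the first m rows of an upper Hessenberg matrix H̲ ∈ ℂ^{(m+1)×m} placed in the last m rows). Let ĉ ∈ ℂ^n, set u = Ṽĉ, and suppose A ∈ ℂ^{n×n} satisfies A Ṽ e_i = Ṽ H̃ e_i for i = 1,…,n−m together with A V = [V, u] H̲. Then A Ṽ = Ṽ (H̃ + c e_nᵀ), where c = h_{m+1,m} ĉ and h_{m+1,m} is the (m+1, m) entry of H̲. -/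
open Matrix

set_option maxHeartbeats 1000000

/-- **Rank-one update of the restarted Arnoldi relation at the final cycle.**
Let `n = ℓ m`, `Ṽ ∈ ℂ^{n×n}` invertible with last `m` columns `V`, and let `H̃ ∈ ℂ^{n×n}` be a
matrix whose last `m` columns consist of the first `m` rows of an upper Hessenberg matrix
`H̲ ∈ ℂ^{(m+1)×m}` placed in the last `m` rows (zeros above).  Let `u = Ṽ ĉ` and suppose
`A Ṽ e_i = Ṽ H̃ e_i` for the first `n - m` columns and `A V = [V, u] H̲`.  Then
`A Ṽ = Ṽ (H̃ + c e_nᵀ)` where `c = h_{m+1,m} ĉ`. -/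
theorem rank_one_update_final_cycle
    {n ℓ m : ℕ} (hl : 1 ≤ ℓ) (hm : 1 ≤ m) (hn : n = ℓ * m)
    (A Vt Ht : Matrix (Fin n) (Fin n) ℂ) (hVt : IsUnit Vt.det)
    (Hb : Matrix (Fin (m + 1)) (Fin m) ℂ)
    (hHess : ∀ (i : Fin (m + 1)) (j : Fin m), (j : ℕ) + 1 < (i : ℕ) → Hb i j = 0)
    (hHtlast : ∀ (i : Fin n) (j : Fin m),
      Ht i ⟨n - m + (j : ℕ), by have h1 : m ≤ n := hn ▸ Nat.le_mul_of_pos_left m hl; have h2 := j.2; omega⟩ =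
        if h : n - m ≤ (i : ℕ) then
          Hb ⟨(i : ℕ) - (n - m), by have h1 : m ≤ n := hn ▸ Nat.le_mul_of_pos_left m hl; have h2 := i.2; omega⟩ j
        else 0)
    (chat : Fin n → ℂ) (u : Fin n → ℂ) (hu : u = Vt.mulVec chat)
    (hfirst : ∀ (i j : Fin n), (j : ℕ) < n - m → (A * Vt) i j = (Vt * Ht) i j)
    (hAV : A * (Vt.submatrix id fun j : Fin m =>
        (⟨n - m + (j : ℕ), by have h1 : m ≤ n := hn ▸ Nat.le_mul_of_pos_left m hl; have h2 := j.2; omega⟩ : Fin n)) =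
      (Matrix.of fun i (j : Fin (m + 1)) =>
        if h : (j : ℕ) < m then
          Vt i ⟨n - m + (j : ℕ), by have h1 : m ≤ n := hn ▸ Nat.le_mul_of_pos_left m hl; omega⟩
        else u i) * Hb) :
    A * Vt = Vt * (Ht + Matrix.of fun (i j : Fin n) =>
      if (j : ℕ) = n - 1 then Hb (Fin.last m) ⟨m - 1, by omega⟩ * chat i else 0) := by
  have hmn : m ≤ n := hn ▸ Nat.le_mul_of_pos_left m hl
  ext i j
  rw [Matrix.mul_add, Matrix.add_apply]
  by_cases hj : (j : ℕ) < n - m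
  · have hjne : (j : ℕ) ≠ n - 1 := by omega
    rw [hfirst i j hj]
    have h0 : (Vt * Matrix.of fun (i j : Fin n) =>
        if (j : ℕ) = n - 1 then Hb (Fin.last m) ⟨m - 1, by omega⟩ * chat i else 0) i j = 0 := by
      simp [Matrix.mul_apply, hjne]
    rw [h0, add_zero]
  · push_neg at hj
    have hjm : (j : ℕ) < n := j.2
    obtain ⟨k, hjk⟩ : ∃ k : Fin m, (j : ℕ) = n - m + (k : ℕ) :=
      ⟨⟨(j : ℕ) - (n - m), by omega⟩, by simp; omega⟩
    have hjeq : j = (⟨n - m + (k : ℕ), by omega⟩ : Fin n) := Fin.ext hjk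
    have hL : (A * Vt) i j = ∑ p : Fin (m + 1),
        (if h : (p : ℕ) < m then Vt i ⟨n - m + (p : ℕ), by omega⟩ else u i) * Hb p k := by
      have h := congrFun (congrFun hAV i) k
      rw [Matrix.mul_apply, Matrix.mul_apply] at h
      simp only [Matrix.submatrix_apply, id_eq, Matrix.of_apply] at h
      rw [← hjeq] at h
      rw [Matrix.mul_apply]
      exact h
    rw [hL, Fin.sum_univ_castSucc]
    have hcs : ∀ p : Fin m, ((Fin.castSucc p : Fin (m+1)) : ℕ) = (p : ℕ) := fun p => rfl
    have hlast : ((Fin.last m : Fin (m+1)) : ℕ) = m := rfl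
    have hR1 : (Vt * Ht) i j = ∑ p : Fin m,
        (if h : ((Fin.castSucc p : Fin (m+1)) : ℕ) < m then
          Vt i ⟨n - m + ((Fin.castSucc p : Fin (m+1)) : ℕ), by omega⟩ else u i) *
          Hb (Fin.castSucc p) k := by
      have ha : n = (n - m) + m := by omega
      conv_lhs => rw [hjeq]
      rw [Matrix.mul_apply]
      refine Eq.trans (Fintype.sum_equiv (finCongr ha) _
        (fun q => Vt i (Fin.cast ha.symm q) * Ht (Fin.cast ha.symm q)
          ⟨n - m + (k : ℕ), by omega⟩) (fun q => rfl)) ?_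
      rw [Fin.sum_univ_add]
      have hz : ∀ p : Fin (n - m),
          Vt i (Fin.cast ha.symm (Fin.castAdd m p)) * Ht (Fin.cast ha.symm (Fin.castAdd m p))
            ⟨n - m + (k : ℕ), by omega⟩ = 0 := by
        intro p
        have hp : ((Fin.cast ha.symm (Fin.castAdd m p) : Fin n) : ℕ) = (p : ℕ) := rfl
        rw [hHtlast (Fin.cast ha.symm (Fin.castAdd m p)) k]
        rw [dif_neg (by rw [hp]; exact Nat.not_le.mpr p.2), mul_zero]
      rw [Finset.sum_eq_zero (fun p _ => hz p), zero_add]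
      apply Finset.sum_congr rfl
      intro p _
      have hp : ((Fin.cast ha.symm (Fin.natAdd (n-m) p) : Fin n) : ℕ) = n - m + (p : ℕ) := rfl
      rw [hHtlast (Fin.cast ha.symm (Fin.natAdd (n-m) p)) k]
      rw [dif_pos (by rw [hp]; exact Nat.le_add_right _ _),
        dif_pos (by rw [hcs]; exact p.2 : ((Fin.castSucc p : Fin (m+1)) : ℕ) < m)]
      congr 1
      congr 1
      exact Fin.ext (show n - m + (p : ℕ) - (n - m) =
        ((Fin.castSucc p : Fin (m+1)) : ℕ) by rw [hcs]; omega)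
    rw [hR1]
    congr 1
    -- last term
    rw [dif_neg (by rw [hlast]; omega : ¬ ((Fin.last m : Fin (m+1)) : ℕ) < m)]
    rw [Matrix.mul_apply]
    by_cases hje : (j : ℕ) = n - 1
    · have hkm : k = (⟨m - 1, by omega⟩ : Fin m) := Fin.ext (by simp; omega)
      have hcol : ∀ q : Fin n, (Matrix.of fun (i j : Fin n) =>
          if (j : ℕ) = n - 1 then Hb (Fin.last m) ⟨m - 1, by omega⟩ * chat i else 0) q j
          = Hb (Fin.last m) k * chat q := by
        intro q
        simp only [Matrix.of_apply, if_pos hje, hkm]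
      simp only [hcol]
      rw [hu]
      simp only [Matrix.mulVec, dotProduct]
      rw [Finset.sum_mul]
      apply Finset.sum_congr rfl
      intro q _
      ring
    · have hkz : Hb (Fin.last m) k = 0 := by
        apply hHess
        rw [hlast]
        omega
      simp only [Matrix.of_apply, if_neg hje, mul_zero, hkz]
      simp
end

section
/- Rank of the restarted block Krylov matrix versus end-of-cycle partial stagnation: Let A ∈ ℂ^{n×n} be invertible, B ∈ ℂ^{n×p}, n = ℓMp with ℓ, M ≥ 1, and suppose the block Krylov matrix 𝒦 = [B, AB, …, A^{N−1}B] ∈ ℂ^{n×n} (N = ℓM) has rank n. Define the restarted block GMRES residuals with cycle length M: R₀^(1) = B, R_j^(k) is the block GMRES residual at step j of cycle k from initial block residual R₀^(k), and R₀^(k+1) = R_M^(k). Let 𝒦̃ = [𝒦^(1), …, 𝒦^(ℓ)] ∈ ℂ^{n×n}, where 𝒦^(k) = [R₀^(k), A R₀^(k), …, A^{M−1} R₀^(k)]. Then rank(𝒦̃) = n if and only if there is no end-of-cycle stagnation in any direction, i.e., for every k = 1,…,ℓ−1 there is no nonzero u ∈ ℂ^p with R_M^(k) u = R_{M−1}^(k)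 u. -/
open Matrix

/-- The Frobenius norm of a complex matrix. -/
noncomputable def frobNorm {n p : ℕ} (M : Matrix (Fin n) (Fin p) ℂ) : ℝ :=
  Real.sqrt (∑ i, ∑ c, ‖M i c‖ ^ 2)

/-- The block Krylov subspace `K_j(A, R0)`: the span of the columns of
`[R0, A R0, …, A^{j-1} R0]`. -/
noncomputable def blockKrylov {n p : ℕ} (A : Matrix (Fin n) (Fin n) ℂ)
    (R0 : Matrix (Fin n) (Fin p) ℂ) (j : ℕ) : Submodule ℂ (Fin n → ℂ) :=
  Submodule.span ℂ {v | ∃ i : ℕ, i < j ∧ ∃ c : Fin p, v = fun r => ((A ^ i) * R0) r c}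

/-- All columns of `X` lie in the submodule `S`. -/
def colsIn {n p : ℕ} (S : Submodule ℂ (Fin n → ℂ)) (X : Matrix (Fin n) (Fin p) ℂ) : Prop :=
  ∀ c : Fin p, (fun i => X i c) ∈ S

/-- `R` is the block GMRES residual at step `j` for `A` and initial block residual `R0`:
`R = R0 - A X` for some `X` whose columns lie in the block Krylov subspace `K_j(A, R0)`, and
`R` minimizes the Frobenius norm of the residual over all such `X`. -/
def IsBlockGMRESResidual {n p : ℕ} (A : Matrix (Fin n) (Fin n) ℂ)
    (R0 : Matrix (Fin n) (Fin p) ℂ) (j : ℕ) (R : Matrix (Fin n) (Fin p) ℂ) : Prop :=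
  (∃ X : Matrix (Fin n) (Fin p) ℂ, colsIn (blockKrylov A R0 j) X ∧ R = R0 - A * X) ∧
  ∀ X' : Matrix (Fin n) (Fin p) ℂ, colsIn (blockKrylov A R0 j) X' →
    frobNorm R ≤ frobNorm (R0 - A * X')



lemma sum_sq_le_of_frobNorm_le {n p : ℕ} {X Y : Matrix (Fin n) (Fin p) ℂ}
    (h : frobNorm X ≤ frobNorm Y) :
    (∑ i, ∑ c, ‖X i c‖ ^ 2 : ℝ) ≤ ∑ i, ∑ c, ‖Y i c‖ ^ 2 := by
  have hX : (0:ℝ) ≤ ∑ i, ∑ c, ‖X i c‖ ^ 2 :=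
    Finset.sum_nonneg fun i _ => Finset.sum_nonneg fun c _ => sq_nonneg _
  have hY : (0:ℝ) ≤ ∑ i, ∑ c, ‖Y i c‖ ^ 2 :=
    Finset.sum_nonneg fun i _ => Finset.sum_nonneg fun c _ => sq_nonneg _
  have h0 : (0:ℝ) ≤ frobNorm X := Real.sqrt_nonneg _
  calc (∑ i, ∑ c, ‖X i c‖ ^ 2 : ℝ) = (frobNorm X) ^ 2 := (Real.sq_sqrt hX).symm
    _ ≤ (frobNorm Y) ^ 2 := by nlinarith
    _ = ∑ i, ∑ c, ‖Y i c‖ ^ 2 := Real.sq_sqrt hY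

lemma norm_sq_complex (z : ℂ) : (‖z‖:ℝ)^2 = Complex.normSq z := by
  rw [Complex.sq_norm]

/-- Optimality of the block GMRES residual implies columnwise orthogonality to
`A · (block Krylov space)`. -/
lemma gmres_orth {n p : ℕ} {A : Matrix (Fin n) (Fin n) ℂ}
    {R0 R : Matrix (Fin n) (Fin p) ℂ} {j : ℕ}
    (h : IsBlockGMRESResidual A R0 j R) {v : Fin n → ℂ} (hv : v ∈ blockKrylov A R0 j)
    (c : Fin p) : ∑ i, (starRingEnd ℂ) (A.mulVec v i) * R i c = 0 := by
  classical
  obtain ⟨⟨X, hX, hRX⟩, hmin⟩ := h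
  set w : Fin n → ℂ := A.mulVec v with hw
  set s : ℂ := ∑ i, (starRingEnd ℂ) (w i) * R i c with hs
  by_contra hs0
  have key : ∀ t : ℂ, (∑ i, ‖R i c‖^2 : ℝ) ≤ ∑ i, ‖R i c - t * w i‖^2 := by
    intro t
    set X' : Matrix (Fin n) (Fin p) ℂ :=
      Matrix.of (fun i d => X i d + (if d = c then t * v i else 0)) with hX'
    have hcols : colsIn (blockKrylov A R0 j) X' := by
      intro d
      by_cases hd : d = c
      · subst hd
        have := Submodule.add_mem _ (hX d) (Submodule.smul_mem _ t hv)
        convert this using 1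
        funext i
        simp [X', Pi.add_apply]
      · simpa [X', hd] using hX d
    have hsub : R0 - A * X' = Matrix.of (fun i d => R i d - (if d = c then t * w i else 0)) := by
      ext i d
      have hAX' : (A * X') i d = (A * X) i d + (if d = c then t * w i else 0) := by
        simp only [Matrix.mul_apply, X', Matrix.of_apply, mul_add]
        rw [Finset.sum_add_distrib]
        congr 1
        by_cases hd : d = c
        · simp only [hd, if_true, hw, Matrix.mulVec, dotProduct, Finset.mul_sum]
          exact Finset.sum_congr rfl (fun k _ => by ring)
        · simp [hd]
      simp only [Matrix.sub_apply, Matrix.of_apply, hAX', hRX]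
      ring
    have hle := sum_sq_le_of_frobNorm_le (hmin X' hcols)
    rw [hsub] at hle
    have hsplit : ∀ i : Fin n, (∑ d, ‖R i d - (if d = c then t * w i else 0)‖^2 : ℝ)
        = (∑ d, ‖R i d‖^2) - ‖R i c‖^2 + ‖R i c - t * w i‖^2 := by
      intro i
      rw [← Finset.sum_erase_add _ _ (Finset.mem_univ c),
          ← Finset.sum_erase_add _ (fun d => (‖R i d‖^2 : ℝ)) (Finset.mem_univ c)]
      have : ∀ d ∈ Finset.univ.erase c, (‖R i d - (if d = c then t * w i else 0)‖^2 : ℝ)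
          = ‖R i d‖^2 := by
        intro d hd
        rw [if_neg (Finset.ne_of_mem_erase hd)]
        simp
      rw [Finset.sum_congr rfl this]
      simp
    simp only [Matrix.of_apply] at hle
    rw [Finset.sum_congr rfl (fun i _ => hsplit i)] at hle
    rw [Finset.sum_add_distrib, Finset.sum_sub_distrib] at hle
    linarith
  have expand : ∀ t : ℂ, (∑ i, ‖R i c - t * w i‖^2 : ℝ)
      = (∑ i, ‖R i c‖^2) - 2 * ((starRingEnd ℂ) t * s).re + ‖t‖^2 * ∑ i, ‖w i‖^2 := by
    intro t
    have hterm : ∀ i : Fin n, (‖R i c - t * w i‖^2 : ℝ)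
        = ‖R i c‖^2 + ‖t‖^2 * ‖w i‖^2
          - 2 * ((starRingEnd ℂ) t * ((starRingEnd ℂ) (w i) * R i c)).re := by
      intro i
      rw [norm_sq_complex, Complex.normSq_sub]
      have h2 : R i c * (starRingEnd ℂ) (t * w i)
          = (starRingEnd ℂ) t * ((starRingEnd ℂ) (w i) * R i c) := by
        rw [_root_.map_mul]; ring
      rw [h2]
      rw [norm_sq_complex, norm_sq_complex, norm_sq_complex, Complex.normSq_mul]
    rw [Finset.sum_congr rfl (fun i _ => hterm i), Finset.sum_sub_distrib,
        Finset.sum_add_distrib, ← Finset.mul_sum, ← Finset.mul_sum]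
    have hres : (∑ i, ((starRingEnd ℂ) t * ((starRingEnd ℂ) (w i) * R i c)).re : ℝ)
        = ((starRingEnd ℂ) t * s).re := by
      rw [hs, Finset.mul_sum, Complex.re_sum]
    rw [hres]; ring
  -- choose a good `t`
  set W2 : ℝ := ∑ i, ‖w i‖^2 with hW2
  have hW2nn : (0:ℝ) ≤ W2 := Finset.sum_nonneg fun i _ => sq_nonneg _
  set ε : ℝ := 1 / (W2 + 1) with hε
  have hεpos : 0 < ε := by positivity
  have hεeq : ε * (W2 + 1) = 1 := by rw [hε, one_div, inv_mul_cancel₀ (ne_of_gt (by linarith))]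
  set t : ℂ := (ε:ℂ) * s with ht
  have h1 : (starRingEnd ℂ) t * s = ((ε * Complex.normSq s : ℝ) : ℂ) := by
    have hcs : (starRingEnd ℂ) s * s = (Complex.normSq s : ℂ) := by
      rw [mul_comm, Complex.mul_conj]
    rw [ht, _root_.map_mul, Complex.conj_ofReal, mul_assoc, hcs]
    push_cast
    ring
  have h2 : (‖t‖:ℝ)^2 = ε^2 * Complex.normSq s := by
    rw [norm_sq_complex, ht, Complex.normSq_mul, Complex.normSq_ofReal]
    ring
  have hkey := key t
  rw [expand t] at hkey
  rw [h1, h2] at hkey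
  have hre : (((ε * Complex.normSq s : ℝ) : ℂ)).re = ε * Complex.normSq s := Complex.ofReal_re _
  rw [hre] at hkey
  have hns : 0 < Complex.normSq s := Complex.normSq_pos.mpr hs0
  nlinarith [mul_pos hεpos hns, sq_nonneg ε, mul_pos (mul_pos hεpos hεpos) hns]

/-- **Rank of the restarted block Krylov matrix versus end-of-cycle partial stagnation.**
Let `A ∈ ℂ^{n×n}` be invertible, `n = ℓ M p`, and suppose the block Krylov matrix
`[B, AB, …, A^{ℓM-1}B]` has rank `n`.  Let `R k j` be the restarted block GMRES residuals with
cycle length `M` (`Rstart 0 = B`, `Rstart (k+1) = R k M`).  Then the restarted block Krylov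
matrix `K̃`, whose `(k, i, c)` column is the `c`-th column of `A^i Rstart k`, has rank `n` if
and only if there is no end-of-cycle stagnation in any direction, i.e., for every cycle `k`
with `k + 1 < ℓ` there is no nonzero `u ∈ ℂ^p` with `(R k M) u = (R k (M-1)) u`. -/
theorem restarted_block_krylov_matrix_rank
    {n p M ℓ : ℕ} (hp : 1 ≤ p) (hM : 1 ≤ M) (hl : 1 ≤ ℓ) (hn : n = ℓ * M * p)
    (A : Matrix (Fin n) (Fin n) ℂ) (hA : IsUnit A.det)
    (B : Matrix (Fin n) (Fin p) ℂ)
    (hK : (Matrix.of fun (i : Fin n) (jc : Fin (ℓ * M) × Fin p) =>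
        ((A ^ ((jc.1 : ℕ))) * B) i jc.2).rank = n)
    (R : ℕ → ℕ → Matrix (Fin n) (Fin p) ℂ) (Rstart : ℕ → Matrix (Fin n) (Fin p) ℂ)
    (hstart0 : Rstart 0 = B)
    (hres : ∀ k j : ℕ, IsBlockGMRESResidual A (Rstart k) j (R k j))
    (hrestart : ∀ k : ℕ, Rstart (k + 1) = R k M) :
    (Matrix.of fun (i : Fin n) (kjc : Fin ℓ × Fin M × Fin p) =>
        ((A ^ ((kjc.2.1 : ℕ))) * Rstart (kjc.1 : ℕ)) i kjc.2.2).rank = n ↔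
      ∀ k : ℕ, k + 1 < ℓ →
        ¬∃ u : Fin p → ℂ, u ≠ 0 ∧ (R k M).mulVec u = (R k (M - 1)).mulVec u := by
  classical
  have hM0 : 0 < M := hM
  have hl0 : 0 < ℓ := hl
  have hNpos : 0 < ℓ * M := Nat.mul_pos hl0 hM0
  -- the Krylov columns
  set κ : (Fin (ℓ*M) × Fin p) → (Fin n → ℂ) :=
    fun mc i => ((A ^ ((mc.1 : ℕ))) * B) i mc.2 with hκdef
  set Mk : Matrix (Fin n) (Fin (ℓ*M) × Fin p) ℂ :=
    Matrix.of fun (i : Fin n) (jc : Fin (ℓ * M) × Fin p) =>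
      ((A ^ ((jc.1 : ℕ))) * B) i jc.2 with hMkdef
  have hKrank : Mk.rank = n := hK
  have hcard : Fintype.card (Fin (ℓ*M) × Fin p) = Module.finrank ℂ (Fin n → ℂ) := by
    simp [Module.finrank_fintype_fun_eq_card, hn, Fintype.card_prod]
  have htop : ⊤ ≤ Submodule.span ℂ (Set.range κ) := by
    have h1 : Mk.rank = Module.finrank ℂ (Submodule.span ℂ (Set.range κ)) := by
      rw [Matrix.rank_eq_finrank_span_cols]
      rfl
    rw [hKrank] at h1
    have h2 : Submodule.span ℂ (Set.range κ) = ⊤ := by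
      apply Submodule.eq_top_of_finrank_eq
      rw [← h1, Module.finrank_fintype_fun_eq_card, Fintype.card_fin]
    rw [h2]
  set b : Module.Basis (Fin (ℓ*M) × Fin p) ℂ (Fin n → ℂ) :=
    basisOfTopLeSpanOfCardEqFinrank κ htop hcard with hbdef
  have hb : ⇑b = κ := coe_basisOfTopLeSpanOfCardEqFinrank κ htop hcard
  -- the filtration by Krylov levels
  set W : ℕ → Submodule ℂ (Fin n → ℂ) :=
    fun j => Submodule.span ℂ (κ '' {mc | (mc.1 : ℕ) < j}) with hWdef
  have mem_W_iff : ∀ (x : Fin n → ℂ) (j : ℕ),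
      x ∈ W j ↔ ∀ mc : Fin (ℓ*M) × Fin p, j ≤ (mc.1 : ℕ) → b.repr x mc = 0 := by
    intro x j
    simp only [hWdef]
    rw [← hb, Module.Basis.mem_span_image]
    constructor
    · intro hsupp mc hmc
      by_contra h0
      have h1 : mc ∈ (b.repr x).support := Finsupp.mem_support_iff.mpr h0
      have h2 := hsupp h1
      simp only [Set.mem_setOf_eq] at h2
      omega
    · intro h0 mc hmc
      simp only [Finset.mem_coe, Finsupp.mem_support_iff] at hmc
      simp only [Set.mem_setOf_eq]
      by_contra hns
      exact hmc (h0 mc (by omega))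
  have W_mono : ∀ {j j' : ℕ}, j ≤ j' → W j ≤ W j' := by
    intro j j' hj
    simp only [hWdef]
    apply Submodule.span_mono
    apply Set.image_mono
    intro mc hmc
    simp only [Set.mem_setOf_eq] at hmc ⊢
    omega
  have W_top : ∀ (j : ℕ), ℓ * M ≤ j → ∀ x : Fin n → ℂ, x ∈ W j := by
    intro j hj x
    rw [mem_W_iff]
    intro mc hmc
    exact absurd mc.1.isLt (by omega)
  have hAκ : ∀ (m : ℕ) (hm : m < ℓ*M) (hm1 : m + 1 < ℓ*M) (cc : Fin p),
      A.mulVec (κ (⟨m, hm⟩, cc)) = κ (⟨m+1, hm1⟩, cc) := by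
    intro m hm hm1 cc
    funext i
    simp only [hκdef, Matrix.mulVec, dotProduct]
    rw [pow_succ', Matrix.mul_assoc, Matrix.mul_apply]
  have hAW : ∀ (j : ℕ) (x : Fin n → ℂ), x ∈ W j → A.mulVec x ∈ W (j+1) := by
    intro j x hx
    have hle : W j ≤ (W (j+1)).comap A.mulVecLin := by
      simp only [hWdef]
      rw [Submodule.span_le]
      rintro v ⟨mc, hmc, rfl⟩
      simp only [Set.mem_setOf_eq] at hmc
      simp only [SetLike.mem_coe, Submodule.mem_comap, Matrix.mulVecLin_apply]
      by_cases hm1 : (mc.1 : ℕ) + 1 < ℓ*M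
      · have hA1 := hAκ (mc.1 : ℕ) mc.1.isLt hm1 mc.2
        rw [show ((⟨(mc.1 : ℕ), mc.1.isLt⟩ : Fin (ℓ*M)), mc.2) = mc from rfl] at hA1
        rw [hA1]
        apply Submodule.subset_span
        exact ⟨(⟨(mc.1:ℕ)+1, hm1⟩, mc.2), by simp only [Set.mem_setOf_eq]; omega, rfl⟩
      · exact W_top _ (by omega) _
    exact hle hx
  have hApow : ∀ (i j : ℕ) (x : Fin n → ℂ), x ∈ W j → (A^i).mulVec x ∈ W (j+i) := by
    intro i
    induction i with
    | zero =>
      intro j x hx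
      simpa [Matrix.one_mulVec] using hx
    | succ i ih =>
      intro j x hx
      have h1 := hAW (j+i) _ (ih j x hx)
      rw [pow_succ', ← Matrix.mulVec_mulVec]
      exact h1
  -- columns of the restart residuals
  set Rcol : ℕ → Fin p → (Fin n → ℂ) := fun k c i => Rstart k i c with hRcoldef
  have hgen : ∀ (k i : ℕ) (c : Fin p),
      (fun r => ((A^i) * Rstart k) r c) = (A^i).mulVec (Rcol k c) := by
    intro k i c
    funext r
    simp [hRcoldef, Matrix.mul_apply, Matrix.mulVec, dotProduct]
  have hcolsW : ∀ (k : ℕ) (c : Fin p), Rcol k c ∈ W (k*M + 1) := by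
    intro k
    induction k with
    | zero =>
      intro c
      have h1 : Rcol 0 c = κ (⟨0, hNpos⟩, c) := by
        funext i
        simp [hRcoldef, hκdef, hstart0]
      rw [h1]
      simp only [hWdef]
      apply Submodule.subset_span
      exact ⟨(⟨0,hNpos⟩, c), by simp, rfl⟩
    | succ k ih =>
      intro c
      obtain ⟨X, hX, hRX⟩ := (hres k M).1
      have hcol : Rcol (k+1) c = Rcol k c - A.mulVec (fun i => X i c) := by
        funext i
        simp [hRcoldef, hrestart k, hRX, Matrix.sub_apply, Matrix.mul_apply,
          Matrix.mulVec, dotProduct]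
      have hkM : (k+1)*M = k*M + M := by ring
      rw [hcol]
      apply Submodule.sub_mem
      · exact W_mono (by omega) (ih c)
      · have hXc : (fun i => X i c) ∈ W (k*M + M) := by
          have h1 : blockKrylov A (Rstart k) M ≤ W (k*M + M) := by
            rw [blockKrylov, Submodule.span_le]
            rintro v ⟨i, hij, cc, rfl⟩
            rw [hgen]
            exact W_mono (by omega) (hApow i (k*M+1) _ (ih cc))
          exact h1 (hX c)
        have h2 := hAW _ _ hXc
        exact W_mono (by omega) h2
  have hKryW : ∀ (k j' : ℕ), blockKrylov A (Rstart k) j' ≤ W (k*M + j') := by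
    intro k j'
    rw [blockKrylov, Submodule.span_le]
    rintro v ⟨i, hij, c, rfl⟩
    rw [hgen]
    exact W_mono (by omega) (hApow i (k*M+1) _ (hcolsW k c))
  -- the leading-coefficient matrices
  set Γ : ℕ → Matrix (Fin p) (Fin p) ℂ := fun k => Matrix.of (fun r c =>
    if h : k*M < ℓ*M then b.repr (Rcol k c) (⟨k*M, h⟩, r) else 0) with hΓdef
  have hΓ_apply : ∀ (k : ℕ) (hkM : k*M < ℓ*M) (r c : Fin p),
      Γ k r c = b.repr (Rcol k c) (⟨k*M, hkM⟩, r) := by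
    intro k hkM r c
    simp only [hΓdef, Matrix.of_apply, dif_pos hkM]
  -- coefficients of a linear combination of level-m basis vectors
  have hκcoeff : ∀ (m : Fin (ℓ*M)) (coefs : Fin p → ℂ) (mc : Fin (ℓ*M) × Fin p),
      b.repr (∑ r : Fin p, coefs r • κ (m, r)) mc
        = if mc.1 = m then coefs mc.2 else 0 := by
    intro m coefs mc
    rw [map_sum, Finsupp.finset_sum_apply]
    have hterm : ∀ r : Fin p, b.repr (coefs r • κ (m, r)) mc
        = coefs r * (if (m, r) = mc then 1 else 0) := by
      intro r
      rw [_root_.map_smul, Finsupp.smul_apply, smul_eq_mul]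
      congr 1
      have : κ (m, r) = b (m, r) := by rw [hb]
      rw [this, b.repr_self, Finsupp.single_apply]
    rw [Finset.sum_congr rfl (fun r _ => hterm r)]
    rcases mc with ⟨m', c'⟩
    by_cases hm : m' = m
    · subst hm
      simp only [Prod.mk.injEq, true_and, mul_ite, mul_one, mul_zero]
      rw [Finset.sum_ite_eq' Finset.univ c' coefs]
      simp
    · simp only [if_neg hm]
      apply Finset.sum_eq_zero
      intro r _
      rw [if_neg (by simp [Prod.ext_iff]; intro h; exact absurd h.symm hm), mul_zero]
  -- the leading-coefficient expansion
  have hLC : ∀ (k i : ℕ) (c : Fin p) (h : k*M + i < ℓ*M),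
      (A^i).mulVec (Rcol k c) - (∑ r : Fin p, Γ k r c • κ (⟨k*M+i, h⟩, r))
        ∈ W (k*M + i) := by
    intro k i
    induction i with
    | zero =>
      intro c h
      rw [mem_W_iff]
      intro mc hmc
      rw [map_sub, Finsupp.sub_apply, hκcoeff]
      have hA0 : (A^0).mulVec (Rcol k c) = Rcol k c := by
        rw [pow_zero, Matrix.one_mulVec]
      rw [hA0]
      by_cases hm : mc.1 = (⟨k*M+0, h⟩ : Fin (ℓ*M))
      · rw [if_pos hm]
        have h1 : b.repr (Rcol k c) mc = Γ k mc.2 c := by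
          rw [hΓ_apply k (by omega) mc.2 c]
          congr 1
          rw [show mc = (mc.1, mc.2) from rfl, hm]
          rfl
        rw [h1, sub_self]
      · rw [if_neg hm]
        have h1 : k*M + 1 ≤ (mc.1 : ℕ) := by
          have h2 : (mc.1 : ℕ) ≠ k*M + 0 := fun hc => hm (Fin.ext hc)
          omega
        rw [(mem_W_iff _ _).mp (hcolsW k c) mc h1, sub_zero]
    | succ i ih =>
      intro c h
      have hi : k*M + i < ℓ*M := by omega
      have hD := hAW _ _ (ih c hi)
      have hsum : A.mulVec (∑ r : Fin p, Γ k r c • κ (⟨k*M+i, hi⟩, r))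
          = ∑ r : Fin p, Γ k r c • κ (⟨k*M+i+1, h⟩, r) := by
        rw [← Matrix.coe_mulVecLin, map_sum]
        apply Finset.sum_congr rfl
        intro r _
        rw [_root_.map_smul]
        congr 1
        rw [Matrix.mulVecLin_apply, hAκ (k*M+i) hi h r]
      have hsub : A.mulVec ((A^i).mulVec (Rcol k c)
            - ∑ r : Fin p, Γ k r c • κ (⟨k*M+i, hi⟩, r))
          = (A^(i+1)).mulVec (Rcol k c) - ∑ r : Fin p, Γ k r c • κ (⟨k*M+i+1, h⟩, r) := by
        rw [Matrix.mulVec_sub, hsum, pow_succ', ← Matrix.mulVec_mulVec]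
      rw [hsub] at hD
      exact hD
  have hL2 : ∀ (k i : ℕ) (h : k*M + i < ℓ*M) (c r : Fin p),
      b.repr ((A^i).mulVec (Rcol k c)) (⟨k*M+i, h⟩, r) = Γ k r c := by
    intro k i h c r
    have h0 := (mem_W_iff _ _).mp (hLC k i c h) (⟨k*M+i, h⟩, r) (le_refl _)
    rw [map_sub, Finsupp.sub_apply, hκcoeff, if_pos rfl] at h0
    have := sub_eq_zero.mp h0
    simpa using this
  have hΓ0 : Γ 0 = 1 := by
    ext r c
    have h0M : 0*M < ℓ*M := by omega
    rw [hΓ_apply 0 h0M r c]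
    have h1 : Rcol 0 c = b (⟨0*M, h0M⟩, c) := by
      rw [hb]
      funext i
      simp [hRcoldef, hκdef, hstart0]
    rw [h1, b.repr_self, Finsupp.single_apply, Matrix.one_apply]
    by_cases hrc : r = c
    · subst hrc; simp
    · rw [if_neg (fun hE => hrc ((congrArg Prod.snd hE).symm)), if_neg hrc]
  -- mulVec helpers
  have hmv_sum : ∀ (Y : Matrix (Fin n) (Fin p) ℂ) (u : Fin p → ℂ),
      Y.mulVec u = ∑ c, u c • (fun i => Y i c) := by
    intro Y u
    funext i
    rw [Finset.sum_apply]
    simp only [Pi.smul_apply, smul_eq_mul, Matrix.mulVec, dotProduct]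
    exact Finset.sum_congr rfl (fun c _ => by ring)
  have hmulVec_mem : ∀ (S : Submodule ℂ (Fin n → ℂ)) (Y : Matrix (Fin n) (Fin p) ℂ),
      (∀ c, (fun i => Y i c) ∈ S) → ∀ u, Y.mulVec u ∈ S := by
    intro S Y hY u
    rw [hmv_sum]
    exact Submodule.sum_mem _ fun c _ => Submodule.smul_mem _ _ (hY c)
  have hrepr_mulVec : ∀ (Y : Matrix (Fin n) (Fin p) ℂ) (u : Fin p → ℂ)
      (mc : Fin (ℓ*M) × Fin p),
      b.repr (Y.mulVec u) mc = ∑ c, u c * b.repr (fun i => Y i c) mc := by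
    intro Y u mc
    rw [hmv_sum, map_sum, Finsupp.finset_sum_apply]
    exact Finset.sum_congr rfl fun c _ => by
      rw [_root_.map_smul, Finsupp.smul_apply, smul_eq_mul]
  have hΓmv : ∀ (k : ℕ) (hkM : k*M < ℓ*M) (u : Fin p → ℂ) (r : Fin p),
      (Γ k).mulVec u r = b.repr ((Rstart k).mulVec u) (⟨k*M, hkM⟩, r) := by
    intro k hkM u r
    rw [hrepr_mulVec]
    simp only [Matrix.mulVec, dotProduct]
    apply Finset.sum_congr rfl
    intro c _
    rw [hΓ_apply k hkM r c]
    have : (fun i => Rstart k i c) = Rcol k c := rfl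
    rw [this]
    ring
  -- stagnation implies singular leading coefficient
  have hstag_sing : ∀ k : ℕ, k + 1 < ℓ → ∀ u : Fin p → ℂ,
      (R k M).mulVec u = (R k (M-1)).mulVec u → (Γ (k+1)).mulVec u = 0 := by
    intro k hk u hstag
    have hkM : (k+1)*M < ℓ*M := (Nat.mul_lt_mul_right hM0).mpr hk
    have hkMeq : (k+1)*M = k*M + M := by ring
    have hmem : (Rstart (k+1)).mulVec u ∈ W ((k+1)*M) := by
      rw [hrestart k, hstag]
      obtain ⟨X', hX', hRX'⟩ := (hres k (M-1)).1
      rw [hRX']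
      have hsplit : (Rstart k - A * X').mulVec u
          = (Rstart k).mulVec u - A.mulVec (X'.mulVec u) := by
        rw [Matrix.sub_mulVec, Matrix.mulVec_mulVec]
      rw [hsplit]
      apply Submodule.sub_mem
      · exact W_mono (by omega) (hmulVec_mem _ _ (fun c => hcolsW k c) u)
      · have hz : X'.mulVec u ∈ W (k*M + (M-1)) :=
          hKryW k (M-1) (hmulVec_mem _ _ hX' u)
        have h2 := hAW _ _ hz
        exact W_mono (by omega) h2
    funext r
    rw [hΓmv (k+1) hkM u r]
    simp only [Pi.zero_apply]
    exact (mem_W_iff _ _).mp hmem _ (le_refl _)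
  -- singular leading coefficient implies stagnation (needs previous cycle nonsingular)
  have hsing_stag : ∀ k : ℕ, k+1 < ℓ → (Γ k).det ≠ 0 → ∀ u : Fin p → ℂ,
      (Γ (k+1)).mulVec u = 0 → (R k M).mulVec u = (R k (M-1)).mulVec u := by
    intro k hk hdet u hΓu
    obtain ⟨X, hX, hRX⟩ := (hres k M).1
    obtain ⟨X', hX', hRX'⟩ := (hres k (M-1)).1
    set z : Fin n → ℂ := X.mulVec u with hzdef
    set y : Fin n → ℂ := X'.mulVec u with hydef
    have hkM1 : (k+1)*M < ℓ*M := (Nat.mul_lt_mul_right hM0).mpr hk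
    have hkMeq : (k+1)*M = k*M + M := by ring
    -- the top coefficients of `A z` vanish
    have hcoefAz : ∀ r, b.repr (A.mulVec z) (⟨(k+1)*M, hkM1⟩, r) = 0 := by
      intro r
      have h1 : A.mulVec z = (Rstart k).mulVec u - (Rstart (k+1)).mulVec u := by
        rw [hrestart k, hRX, Matrix.sub_mulVec, Matrix.mulVec_mulVec]
        funext i
        simp [hzdef]
      rw [h1, map_sub, Finsupp.sub_apply]
      have e1 : b.repr ((Rstart k).mulVec u) (⟨(k+1)*M, hkM1⟩, r) = 0 :=
        (mem_W_iff _ _).mp (hmulVec_mem _ _ (fun c => hcolsW k c) u) _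
          (by show k*M+1 ≤ (k+1)*M; omega)
      have e2 : b.repr ((Rstart (k+1)).mulVec u) (⟨(k+1)*M, hkM1⟩, r) = 0 := by
        rw [← hΓmv (k+1) hkM1 u r, hΓu]
        rfl
      rw [e1, e2, sub_zero]
    -- express z in terms of the cycle-k Krylov generators
    have hzK : z ∈ blockKrylov A (Rstart k) M := hmulVec_mem _ _ hX u
    set f : Fin M × Fin p → (Fin n → ℂ) :=
      fun ic => (A^((ic.1 : ℕ))).mulVec (Rcol k ic.2) with hfdef
    have hset : blockKrylov A (Rstart k) M = Submodule.span ℂ (Set.range f) := by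
      rw [blockKrylov]
      congr 1
      ext v
      constructor
      · rintro ⟨i, hiM, c, rfl⟩
        exact ⟨(⟨i, hiM⟩, c), ((hgen k i c).symm : f (⟨i, hiM⟩, c) = _)⟩
      · rintro ⟨⟨i, c⟩, rfl⟩
        exact ⟨(i : ℕ), i.isLt, c, (hgen k (i : ℕ) c).symm⟩
    rw [hset] at hzK
    obtain ⟨d, hd⟩ := (Submodule.mem_span_range_iff_exists_fun ℂ).mp hzK
    -- top coefficients kill the leading Krylov direction
    have hMm1 : ((M:ℕ) - 1) < M := by omega
    set dt : Fin p → ℂ := fun cc => d (⟨M-1, hMm1⟩, cc) with hdtdef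
    have hdt0 : ∀ cc, dt cc = 0 := by
      have hΓdt : (Γ k).mulVec dt = 0 := by
        funext r
        have hAz : A.mulVec z = ∑ ic : Fin M × Fin p, d ic • A.mulVec (f ic) := by
          rw [← hd, ← Matrix.coe_mulVecLin, map_sum]
          apply Finset.sum_congr rfl
          intro ic _
          rw [_root_.map_smul, Matrix.mulVecLin_apply]
        have hcoef : ∀ ic : Fin M × Fin p,
            b.repr (A.mulVec (f ic)) (⟨(k+1)*M, hkM1⟩, r)
              = if (ic.1 : ℕ) = M - 1 then Γ k r ic.2 else 0 := by
          intro ic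
          have hfA : A.mulVec (f ic) = (A^((ic.1:ℕ)+1)).mulVec (Rcol k ic.2) := by
            rw [hfdef, pow_succ', ← Matrix.mulVec_mulVec]
          rw [hfA]
          by_cases hic : (ic.1 : ℕ) = M - 1
          · rw [if_pos hic]
            have hlev : k*M + ((ic.1:ℕ)+1) < ℓ*M := by omega
            have := hL2 k ((ic.1:ℕ)+1) hlev ic.2 r
            have hfin : (⟨k*M + ((ic.1:ℕ)+1), hlev⟩ : Fin (ℓ*M)) = ⟨(k+1)*M, hkM1⟩ :=
              Fin.ext (by simp; omega)
            rw [hfin] at this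
            exact this
          · rw [if_neg hic]
            have hmem2 : (A^((ic.1:ℕ)+1)).mulVec (Rcol k ic.2)
                ∈ W (k*M + 1 + ((ic.1:ℕ)+1)) :=
              hApow _ _ _ (hcolsW k ic.2)
            have hic2 : (ic.1 : ℕ) < M - 1 := by
              have := ic.1.isLt; omega
            exact (mem_W_iff _ _).mp hmem2 _
              (by show k*M+1+((ic.1:ℕ)+1) ≤ (k+1)*M; omega)
        have h0 : ∑ ic : Fin M × Fin p,
            d ic * (if (ic.1 : ℕ) = M - 1 then Γ k r ic.2 else 0)
            = b.repr (A.mulVec z) (⟨(k+1)*M, hkM1⟩, r) := by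
          rw [hAz, map_sum, Finsupp.finset_sum_apply]
          apply Finset.sum_congr rfl
          intro ic _
          rw [_root_.map_smul, Finsupp.smul_apply, smul_eq_mul, hcoef ic]
        rw [hcoefAz r] at h0
        have h2 : ∑ ic : Fin M × Fin p,
            d ic * (if (ic.1 : ℕ) = M - 1 then Γ k r ic.2 else 0)
            = ∑ cc : Fin p, d (⟨M-1, hMm1⟩, cc) * Γ k r cc := by
          rw [Fintype.sum_prod_type]
          rw [Finset.sum_eq_single (⟨M-1, hMm1⟩ : Fin M)]
          · exact Finset.sum_congr rfl (fun cc _ => by rw [if_pos rfl])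
          · intro i _ hi
            exact Finset.sum_eq_zero (fun cc _ => by
              rw [if_neg (fun hv => hi (Fin.ext hv)), mul_zero])
          · intro hmem3
            exact absurd (Finset.mem_univ _) hmem3
        rw [Pi.zero_apply]
        simp only [Matrix.mulVec, dotProduct]
        rw [show (∑ cc, Γ k r cc * dt cc) = ∑ cc, d (⟨M-1, hMm1⟩, cc) * Γ k r cc from
          Finset.sum_congr rfl (fun cc _ => by rw [hdtdef]; ring)]
        rw [← h2]
        exact h0
      intro cc
      by_contra hcc
      have : (Γ k).det = 0 :=
        Matrix.exists_mulVec_eq_zero_iff.mp ⟨dt, fun h0 => hcc (by rw [h0]; rfl), hΓdt⟩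
      exact hdet this
    -- z lies in the smaller Krylov space
    have hzK' : z ∈ blockKrylov A (Rstart k) (M-1) := by
      rw [← hd]
      apply Submodule.sum_mem
      rintro ⟨i, cc⟩ _
      by_cases hi : (i : ℕ) = M - 1
      · have hd0 : d (i, cc) = 0 := by
          have : (i, cc) = (⟨M-1, hMm1⟩, cc) := by
            rw [Prod.ext_iff]
            exact ⟨Fin.ext hi, rfl⟩
          rw [this]
          exact hdt0 cc
        rw [hd0, zero_smul]
        exact Submodule.zero_mem _
      · apply Submodule.smul_mem
        rw [blockKrylov]
        apply Submodule.subset_span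
        refine ⟨(i : ℕ), by have := i.isLt; omega, cc, ?_⟩
        rw [hgen k (i:ℕ) cc]
    -- the orthogonality argument
    have hyK : y ∈ blockKrylov A (Rstart k) (M-1) := hmulVec_mem _ _ hX' u
    set wv : Fin n → ℂ := y - z with hwvdef
    have hwvK : wv ∈ blockKrylov A (Rstart k) (M-1) := Submodule.sub_mem _ hyK hzK'
    have hKmono : blockKrylov A (Rstart k) (M-1) ≤ blockKrylov A (Rstart k) M := by
      rw [blockKrylov, blockKrylov]
      apply Submodule.span_mono
      rintro v ⟨i, hi, cc, rfl⟩
      exact ⟨i, by omega, cc, rfl⟩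
    have horth1 : ∀ cc, ∑ i, (starRingEnd ℂ) (A.mulVec wv i) * (R k M) i cc = 0 :=
      fun cc => gmres_orth (hres k M) (hKmono hwvK) cc
    have horth2 : ∀ cc, ∑ i, (starRingEnd ℂ) (A.mulVec wv i) * (R k (M-1)) i cc = 0 :=
      fun cc => gmres_orth (hres k (M-1)) hwvK cc
    set d0 : Fin n → ℂ := (R k M).mulVec u - (R k (M-1)).mulVec u with hd0def
    have hd0A : d0 = A.mulVec wv := by
      rw [hd0def, hRX, hRX', hwvdef, Matrix.sub_mulVec, Matrix.sub_mulVec,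
        ← Matrix.mulVec_mulVec, ← Matrix.mulVec_mulVec, Matrix.mulVec_sub]
      rw [← hzdef, ← hydef]
      abel
    have hcross : ∀ (Y : Matrix (Fin n) (Fin p) ℂ),
        ∑ i, (starRingEnd ℂ) (A.mulVec wv i) * (Y.mulVec u) i
          = ∑ cc, u cc * ∑ i, (starRingEnd ℂ) (A.mulVec wv i) * Y i cc := by
      intro Y
      simp only [Matrix.mulVec, dotProduct, Finset.mul_sum]
      rw [Finset.sum_comm]
      apply Finset.sum_congr rfl
      intro cc _
      apply Finset.sum_congr rfl
      intro i _
      ring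
    have hsum0 : ∑ i, (starRingEnd ℂ) (A.mulVec wv i) * d0 i = 0 := by
      have hsub : ∀ i, d0 i = (R k M).mulVec u i - (R k (M-1)).mulVec u i := by
        intro i; rw [hd0def]; rfl
      rw [Finset.sum_congr rfl (fun i _ => by rw [hsub i, mul_sub])]
      have hz1 : ∑ cc, u cc * ∑ i, (starRingEnd ℂ) (A.mulVec wv i) * (R k M) i cc = 0 :=
        Finset.sum_eq_zero (fun cc _ => by rw [horth1 cc, mul_zero])
      have hz2 : ∑ cc, u cc * ∑ i, (starRingEnd ℂ) (A.mulVec wv i) * (R k (M-1)) i cc = 0 :=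
        Finset.sum_eq_zero (fun cc _ => by rw [horth2 cc, mul_zero])
      rw [Finset.sum_sub_distrib, hcross, hcross, hz1, hz2, sub_zero]
    rw [hd0A] at hsum0
    have hd0zero : d0 = 0 := by
      rw [hd0A]
      have hnorm : ∑ i, Complex.normSq (A.mulVec wv i) = 0 := by
        have hcast : (∑ i, (Complex.normSq (A.mulVec wv i) : ℂ)) = 0 := by
          rw [← hsum0]
          apply Finset.sum_congr rfl
          intro i _
          rw [mul_comm, Complex.mul_conj]
        exact_mod_cast hcast
      funext i
      have := (Finset.sum_eq_zero_iff_of_nonneg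
        (fun i _ => Complex.normSq_nonneg (A.mulVec wv i))).mp hnorm i (Finset.mem_univ i)
      exact Complex.normSq_eq_zero.mp this
    have := sub_eq_zero.mp (hd0def ▸ hd0zero)
    exact this
  -- the reindexing equivalence between column index types
  have hdiv_lt : ∀ m : ℕ, m < ℓ*M → m / M < ℓ :=
    fun m hm => (Nat.div_lt_iff_lt_mul hM0).mpr hm
  have hmod_lt : ∀ m : ℕ, m % M < M := fun m => Nat.mod_lt _ hM0
  set σe : (Fin (ℓ*M) × Fin p) ≃ (Fin ℓ × Fin M × Fin p) :=
    { toFun := fun mc => (⟨(mc.1:ℕ)/M, hdiv_lt _ mc.1.isLt⟩,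
        ⟨(mc.1:ℕ)%M, hmod_lt _⟩, mc.2),
      invFun := fun kic => (⟨(kic.1:ℕ)*M + (kic.2.1:ℕ), by
        have h1 : ((kic.1:ℕ)+1) * M ≤ ℓ*M := Nat.mul_le_mul_right M kic.1.isLt
        have h2 : ((kic.1:ℕ)+1)*M = (kic.1:ℕ)*M + M := by ring
        have h3 := kic.2.1.isLt
        omega⟩, kic.2.2),
      left_inv := by
        rintro ⟨m, c⟩
        have hdm : ((m:ℕ)/M)*M + (m:ℕ)%M = (m:ℕ) := by
          rw [mul_comm]; exact Nat.div_add_mod _ _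
        exact Prod.ext (Fin.ext hdm) rfl
      right_inv := by
        rintro ⟨k, i, c⟩
        have e1 : ((k:ℕ)*M + (i:ℕ))/M = (k:ℕ) := by
          rw [add_comm, Nat.add_mul_div_right _ _ hM0, Nat.div_eq_of_lt i.isLt, zero_add]
        have e2 : ((k:ℕ)*M + (i:ℕ))%M = (i:ℕ) := by
          rw [add_comm, Nat.add_mul_mod_self_right, Nat.mod_eq_of_lt i.isLt]
        exact Prod.ext (Fin.ext e1) (Prod.ext (Fin.ext e2) rfl) } with hσdef
  have hσapp : ∀ m'c : Fin (ℓ*M) × Fin p,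
      σe m'c = (⟨(m'c.1:ℕ)/M, hdiv_lt _ m'c.1.isLt⟩,
        ⟨(m'c.1:ℕ)%M, hmod_lt _⟩, m'c.2) := by
    intro m'c
    rw [hσdef]
    rfl
  -- the restarted Krylov matrix
  set Kt : Matrix (Fin n) (Fin ℓ × Fin M × Fin p) ℂ :=
    Matrix.of fun (i : Fin n) (kjc : Fin ℓ × Fin M × Fin p) =>
      ((A ^ ((kjc.2.1 : ℕ))) * Rstart (kjc.1 : ℕ)) i kjc.2.2 with hKtdef
  have hKtcol : ∀ kic : Fin ℓ × Fin M × Fin p,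
      (fun i => Kt i kic) = (A^((kic.2.1:ℕ))).mulVec (Rcol (kic.1:ℕ) kic.2.2) := by
    intro kic
    funext i
    simp [hKtdef, Matrix.mul_apply, Matrix.mulVec, dotProduct, hRcoldef]
  set T : Matrix (Fin (ℓ*M) × Fin p) (Fin (ℓ*M) × Fin p) ℂ :=
    Matrix.of (fun mr m'c => b.repr (fun i => Kt i (σe m'c)) mr) with hTdef
  have hcol_level : ∀ m'c : Fin (ℓ*M) × Fin p,
      (fun i => Kt i (σe m'c)) ∈ W ((m'c.1:ℕ) + 1) := by
    intro m'c
    rw [hKtcol, hσapp m'c]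
    have hmem := hApow ((m'c.1:ℕ)%M) (((m'c.1:ℕ)/M)*M + 1) _
      (hcolsW ((m'c.1:ℕ)/M) m'c.2)
    have heq : ((m'c.1:ℕ)/M)*M + 1 + ((m'c.1:ℕ)%M) = (m'c.1:ℕ) + 1 := by
      have h2 : M * ((m'c.1:ℕ)/M) + (m'c.1:ℕ)%M = (m'c.1:ℕ) := Nat.div_add_mod _ _
      have h3 : ((m'c.1:ℕ)/M)*M = M * ((m'c.1:ℕ)/M) := Nat.mul_comm _ _
      omega
    rw [heq] at hmem
    exact hmem
  have hT_tri : T.BlockTriangular (fun mc => mc.1) := by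
    intro i j hij
    show b.repr (fun i' => Kt i' (σe j)) i = 0
    refine (mem_W_iff _ _).mp (hcol_level j) i ?_
    have hlt : (j.1:ℕ) < (i.1:ℕ) := hij
    omega
  have hT_diag : ∀ (m' : Fin (ℓ*M)) (r c : Fin p),
      T (m', r) (m', c) = Γ ((m':ℕ)/M) r c := by
    intro m' r c
    have hlt : ((m':ℕ)/M)*M + ((m':ℕ)%M) < ℓ*M := by
      have h2 : M * ((m':ℕ)/M) + (m':ℕ)%M = (m':ℕ) := Nat.div_add_mod _ _
      have h3 : ((m':ℕ)/M)*M = M * ((m':ℕ)/M) := Nat.mul_comm _ _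
      have h4 := m'.isLt
      omega
    have hl2 := hL2 ((m':ℕ)/M) ((m':ℕ)%M) hlt c r
    have hfin : (⟨((m':ℕ)/M)*M + ((m':ℕ)%M), hlt⟩ : Fin (ℓ*M)) = m' := by
      apply Fin.ext
      show ((m':ℕ)/M)*M + ((m':ℕ)%M) = (m':ℕ)
      rw [mul_comm]
      exact Nat.div_add_mod _ _
    rw [hfin] at hl2
    show b.repr (fun i => Kt i (σe (m', c))) (m', r) = _
    rw [hKtcol, hσapp]
    exact hl2
  -- factorization and rank transfer
  have hfact : Kt.submatrix id ⇑σe = Mk * T := by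
    ext i mc
    have hbs := Module.Basis.sum_repr b (fun i' => Kt i' (σe mc))
    have happ := congrFun hbs i
    rw [Finset.sum_apply] at happ
    simp only [Pi.smul_apply, smul_eq_mul, hb] at happ
    show Kt i (σe mc) = ∑ m'r, Mk i m'r * T m'r mc
    rw [← happ]
    apply Finset.sum_congr rfl
    intro m'r _
    rw [show Mk i m'r = κ m'r i from rfl,
      show T m'r mc = b.repr (fun i' => Kt i' (σe mc)) m'r from rfl]
    ring
  have hKt2rank : (Kt.submatrix id ⇑σe).rank = Kt.rank := by
    rw [Matrix.rank_eq_finrank_span_cols, Matrix.rank_eq_finrank_span_cols]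
    have hr : Set.range (Kt.submatrix id ⇑σe)ᵀ = Set.range Ktᵀ := by
      have hcomp : (Kt.submatrix id ⇑σe)ᵀ = Ktᵀ ∘ ⇑σe := rfl
      rw [hcomp]
      exact Function.Surjective.range_comp σe.surjective _
    exact congrArg (fun s => Module.finrank ℂ (Submodule.span ℂ s)) hr
  have hMkinj : Function.Injective Mk.mulVecLin := by
    have hli : LinearIndependent ℂ κ := by rw [← hb]; exact b.linearIndependent
    rw [Fintype.linearIndependent_iff] at hli
    intro x1 x2 h12
    have h0 : Mk.mulVec (x1 - x2) = 0 := by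
      have h1 : Mk.mulVecLin (x1 - x2) = 0 := by rw [map_sub, h12, sub_self]
      simpa [Matrix.mulVecLin_apply] using h1
    have hz : ∑ mc, (x1 - x2) mc • κ mc = 0 := by
      funext i
      rw [Finset.sum_apply]
      have h2 := congrFun h0 i
      simp only [Matrix.mulVec, dotProduct, Pi.zero_apply] at h2
      simp only [Pi.smul_apply, smul_eq_mul, Pi.zero_apply]
      rw [← h2]
      apply Finset.sum_congr rfl
      intro mc _
      rw [show Mk i mc = κ mc i from rfl]
      ring
    have hx := hli _ hz
    have hsub : x1 - x2 = 0 := by funext mc; exact hx mc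
    exact sub_eq_zero.mp hsub
  have hrank_T : Kt.rank = T.rank := by
    rw [← hKt2rank, hfact]
    show Module.finrank ℂ (LinearMap.range (Mk * T).mulVecLin)
      = Module.finrank ℂ (LinearMap.range T.mulVecLin)
    rw [Matrix.mulVecLin_mul, LinearMap.range_comp]
    exact (LinearEquiv.finrank_eq
      (Submodule.equivMapOfInjective Mk.mulVecLin hMkinj (LinearMap.range T.mulVecLin))).symm
  have hcardι : Fintype.card (Fin (ℓ*M) × Fin p) = n := by
    simp [Fintype.card_prod, hn, Nat.mul_assoc]
  have hrankdet : T.rank = n ↔ T.det ≠ 0 := by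
    constructor
    · intro hr
      have hrange : LinearMap.range T.mulVecLin = ⊤ := by
        apply Submodule.eq_top_of_finrank_eq
        rw [show Module.finrank ℂ (LinearMap.range T.mulVecLin) = T.rank from rfl, hr,
          Module.finrank_fintype_fun_eq_card, hcardι]
      have hsurj : Function.Surjective T.mulVec := by
        intro yv
        obtain ⟨x, hx⟩ := (LinearMap.range_eq_top.mp hrange) yv
        exact ⟨x, by rw [← Matrix.mulVecLin_apply]; exact hx⟩
      intro h0
      have hU := (Matrix.isUnit_iff_isUnit_det T).mp
        (Matrix.mulVec_surjective_iff_isUnit.mp hsurj)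
      rw [h0] at hU
      exact not_isUnit_zero hU
    · intro hdet
      rw [Matrix.rank_of_isUnit T ((Matrix.isUnit_iff_isUnit_det T).mpr
        (isUnit_iff_ne_zero.mpr hdet)), hcardι]
  have hdetT : T.det = ∏ m' : Fin (ℓ*M), (Γ ((m':ℕ)/M)).det := by
    rw [hT_tri.det_fintype]
    apply Finset.prod_congr rfl
    intro m' _
    let ep : Fin p ≃ {mc : Fin (ℓ*M) × Fin p // mc.1 = m'} :=
      { toFun := fun r => ⟨(m', r), rfl⟩
        invFun := fun a => a.1.2
        left_inv := fun r => rfl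
        right_inv := fun a => by
          rcases a with ⟨⟨m2, r2⟩, ha⟩
          have hm2 : m2 = m' := ha
          subst hm2
          rfl }
    rw [← Matrix.det_submatrix_equiv_self ep (T.toSquareBlock (fun mc => mc.1) m')]
    congr 1
    ext r c
    show T.toSquareBlock (fun mc => mc.1) m' (ep r) (ep c) = Γ ((m':ℕ)/M) r c
    exact hT_diag m' r c
  have hprod : T.det ≠ 0 ↔ ∀ k, k < ℓ → (Γ k).det ≠ 0 := by
    rw [hdetT, Finset.prod_ne_zero_iff]
    constructor
    · intro h k hk
      have hkM : k*M < ℓ*M := by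
        have h2 : (k+1)*M ≤ ℓ*M := Nat.mul_le_mul_right M hk
        have h3 : (k+1)*M = k*M+M := by ring
        omega
      have h4 := h ⟨k*M, hkM⟩ (Finset.mem_univ _)
      rwa [show ((⟨k*M, hkM⟩ : Fin (ℓ*M)) : ℕ)/M = k by
        simp [Nat.mul_div_cancel, hM0]] at h4
    · intro h m' _
      exact h _ (hdiv_lt _ m'.isLt)
  have hΓiff : (∀ k, k < ℓ → (Γ k).det ≠ 0) ↔
      (∀ k : ℕ, k + 1 < ℓ →
        ¬∃ u : Fin p → ℂ, u ≠ 0 ∧ (R k M).mulVec u = (R k (M-1)).mulVec u) := by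
    constructor
    · rintro h k hk ⟨u, hu, hstag⟩
      have h0 := hstag_sing k hk u hstag
      have hd0 : (Γ (k+1)).det = 0 := Matrix.exists_mulVec_eq_zero_iff.mp ⟨u, hu, h0⟩
      exact h (k+1) hk hd0
    · intro h k
      induction k with
      | zero =>
        intro _
        rw [hΓ0]
        simp
      | succ k ih =>
        intro hk1
        by_contra hdet0
        obtain ⟨u, hu0, hΓu⟩ := Matrix.exists_mulVec_eq_zero_iff.mpr hdet0
        exact h k hk1 ⟨u, hu0, hsing_stag k hk1 (ih (by omega)) u hΓu⟩
  rw [hrank_T, hrankdet, hprod]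
  exact hΓiff
end

section
/- Peak-plateau proportionality of GMRES residual components and FOM residuals: Let A ∈ ℂ^{n×n}, b ∈ ℂ^n nonzero, and let v₁, …, v_{m+1} ∈ ℂ^n be the orthonormal Arnoldi basis vectors: v₁ = b/‖b‖ and V ∈ ℂ^{n×(m+1)} with columns v₁,…,v_{m+1}, orthonormal, satisfies A·V[:,1:m] = V·H̲ for an upper Hessenberg H̲ ∈ ℂ^{(m+1)×m} with positive subdiagonal entries. Let r_m be the GMRES residual at step m (the minimizer of ‖b − Ax‖₂ over x ∈ span{v₁,…,v_m}). For 0 ≤ i ≤ m, suppose the FOM iterate at step i exists, i.e., there is x_i^F ∈ span{v₁,…,v_i} with r_i^F := b − A x_i^F orthogonal to span{v₁,…,v_i}. Then for each such i: |v_{i+1}^* r_m| · ‖r_i^F‖₂ = ‖r_m‖₂², i.e., the component of the GMRES residual in the direction of the (i+1)st Arnoldi vector satisfies |v_{i+1}^* r_m| / ‖r_m‖ = ‖r_m‖ / ‖r_i^F‖. -/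
open Matrix

lemma norm2_eq_sqrt {k : ℕ} (v : Fin k → ℂ) :
    norm2 v = Real.sqrt (∑ c, Complex.normSq (v c)) := by
  rw [norm2, EuclideanSpace.norm_eq]
  congr 1
  refine Finset.sum_congr rfl fun c _ => ?_
  rw [Complex.sq_norm]; rfl

lemma norm2_sq {k : ℕ} (v : Fin k → ℂ) :
    (norm2 v) ^ 2 = ∑ c, Complex.normSq (v c) := by
  rw [norm2_eq_sqrt, Real.sq_sqrt]
  exact Finset.sum_nonneg fun c _ => Complex.normSq_nonneg _

lemma dot_self_eq {k : ℕ} (v : Fin k → ℂ) :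
    star v ⬝ᵥ v = ((∑ c, Complex.normSq (v c) : ℝ) : ℂ) := by
  rw [dotProduct]
  push_cast
  refine Finset.sum_congr rfl fun c _ => ?_
  simp [Complex.normSq_eq_conj_mul_self]

lemma orth_of_min {E : Type*} [NormedAddCommGroup E] [InnerProductSpace ℂ E]
    (G W : E) (h : ∀ t : ℂ, ‖G‖ ≤ ‖G - t • W‖) : (inner ℂ G W : ℂ) = 0 := by
  by_contra hc
  set c : ℂ := inner ℂ G W with hc'
  have hcpos : 0 < ‖c‖ := norm_pos_iff.2 hc
  set s : ℝ := 1 / (‖W‖ ^ 2 + 1) with hs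
  have hWpos : (0:ℝ) < ‖W‖ ^ 2 + 1 := by positivity
  have hspos : 0 < s := by positivity
  have hexp : ‖G - ((s : ℂ) * (starRingEnd ℂ) c) • W‖ ^ 2
      = ‖G‖ ^ 2 - 2 * (s * ‖c‖ ^ 2) + s ^ 2 * ‖c‖ ^ 2 * ‖W‖ ^ 2 := by
    rw [norm_sub_sq (𝕜 := ℂ)]
    rw [inner_smul_right, ← hc']
    have h1 : RCLike.re ((s : ℂ) * (starRingEnd ℂ) c * c) = s * ‖c‖ ^ 2 := by
      rw [mul_assoc, show (starRingEnd ℂ) c * c = ((Complex.normSq c : ℝ) : ℂ) by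
        simp [Complex.normSq_eq_conj_mul_self], ← Complex.ofReal_mul]
      have : RCLike.re ((↑(s * Complex.normSq c) : ℂ)) = s * Complex.normSq c :=
        Complex.ofReal_re _
      rw [this, Complex.normSq_eq_norm_sq]
    have h2 : ‖((s : ℂ) * (starRingEnd ℂ) c) • W‖ ^ 2 = s ^ 2 * ‖c‖ ^ 2 * ‖W‖ ^ 2 := by
      rw [norm_smul, mul_pow, norm_mul, mul_pow]
      simp [abs_of_pos hspos, mul_pow]
    rw [h1, h2]
  have hle := h ((s : ℂ) * (starRingEnd ℂ) c)
  have hle2 : ‖G‖ ^ 2 ≤ ‖G - ((s : ℂ) * (starRingEnd ℂ) c) • W‖ ^ 2 :=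
    pow_le_pow_left₀ (norm_nonneg _) hle 2
  rw [hexp] at hle2
  have hsW : s * ‖W‖ ^ 2 < 1 := by
    rw [hs, div_mul_eq_mul_div, one_mul, div_lt_one hWpos]
    linarith
  nlinarith [sq_nonneg (‖c‖), hspos, mul_pos hspos (mul_pos hcpos hcpos)]

/-- **Peak-plateau proportionality of GMRES residual components and FOM residuals.**
Let `V ∈ ℂ^{n×(m+1)}` have orthonormal columns `v₁, …, v_{m+1}` with `v₁ = b/‖b‖` and
`A V[:,1:m] = V H̲` for an upper Hessenberg `H̲` with positive subdiagonal.  Let `r_m` be the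
GMRES residual at step `m` and suppose the FOM iterate at step `i ≤ m` exists: `x_i^F` lies in
`span{v₁,…,v_i}` and `r_i^F = b - A x_i^F` is orthogonal to `span{v₁,…,v_i}`.  Then
`|v_{i+1}^* r_m| ⋅ ‖r_i^F‖ = ‖r_m‖²`, i.e. `|v_{i+1}^* r_m|/‖r_m‖ = ‖r_m‖/‖r_i^F‖`. -/
theorem gmres_fom_peak_plateau
    {n m : ℕ} (hmn : m + 1 ≤ n)
    (A : Matrix (Fin n) (Fin n) ℂ) (b : Fin n → ℂ) (hb : b ≠ 0)
    (V : Matrix (Fin n) (Fin (m + 1)) ℂ) (hV : Vᴴ * V = 1)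
    (hV1 : ∀ r : Fin n, V r 0 = b r / ((norm2 b : ℝ) : ℂ))
    (Hb : Matrix (Fin (m + 1)) (Fin m) ℂ)
    (hHess : ∀ (i : Fin (m + 1)) (j : Fin m), (j : ℕ) + 1 < (i : ℕ) → Hb i j = 0)
    (hsub : ∀ j : Fin m, 0 < (Hb j.succ j).re ∧ (Hb j.succ j).im = 0)
    (hAV : A * V.submatrix id Fin.castSucc = V * Hb)
    (y : Fin m → ℂ) (rm : Fin n → ℂ)
    (hrm : rm = b - A.mulVec ((V.submatrix id Fin.castSucc).mulVec y))
    (hmin : ∀ y' : Fin m → ℂ,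
      norm2 rm ≤ norm2 (b - A.mulVec ((V.submatrix id Fin.castSucc).mulVec y')))
    (i : ℕ) (hi : i ≤ m)
    (xF : Fin n → ℂ)
    (hxF : xF ∈ Submodule.span ℂ
      {w : Fin n → ℂ | ∃ c : Fin (m + 1), (c : ℕ) < i ∧ w = fun r => V r c})
    (rF : Fin n → ℂ) (hrF : rF = b - A.mulVec xF)
    (horth : ∀ c : Fin (m + 1), (c : ℕ) < i → star (fun r => V r c) ⬝ᵥ rF = 0) :
    ‖star (fun r => V r ⟨i, by omega⟩) ⬝ᵥ rm‖ * norm2 rF = (norm2 rm) ^ 2 := by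
  classical
  -- basic orthonormality consequences
  have hdot : ∀ p q : Fin (m+1) → ℂ,
      star (V.mulVec p) ⬝ᵥ V.mulVec q = star p ⬝ᵥ q := fun p q => by
    rw [star_mulVec, dotProduct_mulVec, vecMul_vecMul, hV, vecMul_one]
  have hnorm2V : ∀ p : Fin (m+1) → ℂ, norm2 (V.mulVec p) = norm2 p := by
    intro p
    rw [norm2_eq_sqrt, norm2_eq_sqrt]
    congr 1
    have h1 := dot_self_eq (V.mulVec p)
    rw [hdot p p, dot_self_eq p] at h1
    exact_mod_cast (congrArg Complex.re h1).symm
  -- β and representation of b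
  set β : ℝ := norm2 b with hβ
  have hβ0 : β ≠ 0 := by
    intro h0
    apply hb
    have : ‖(WithLp.equiv 2 (Fin n → ℂ)).symm b‖ = 0 := h0
    have h2 := norm_eq_zero.mp this
    simpa using congrArg (WithLp.equiv 2 (Fin n → ℂ)) h2
  set be : Fin (m+1) → ℂ := Pi.single 0 (β : ℂ) with hbe
  have hbV : b = V.mulVec be := by
    funext r
    rw [hbe, mulVec_single]
    show b r = V r 0 * (β : ℂ)
    rw [hV1 r, div_mul_eq_mul_div, mul_div_assoc,
      div_self (Complex.ofReal_ne_zero.mpr hβ0), mul_one]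
  -- key identity
  have hkey : ∀ y' : Fin m → ℂ,
      b - A.mulVec ((V.submatrix id Fin.castSucc).mulVec y')
        = V.mulVec (be - Hb.mulVec y') := by
    intro y'
    have hc : A.mulVec ((V.submatrix id Fin.castSucc).mulVec y') = V.mulVec (Hb.mulVec y') := by
      rw [mulVec_mulVec, mulVec_mulVec, hAV]
    rw [mulVec_sub, ← hbV, hc]
  set g : Fin (m+1) → ℂ := be - Hb.mulVec y with hg
  have hrmg : rm = V.mulVec g := by rw [hrm, hkey]
  -- orthogonality of g to the range of Hb
  have hperp : ∀ d : Fin m → ℂ, star g ⬝ᵥ Hb.mulVec d = 0 := by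
    intro d
    have key := orth_of_min ((WithLp.equiv 2 (Fin (m+1) → ℂ)).symm g)
      ((WithLp.equiv 2 (Fin (m+1) → ℂ)).symm (Hb.mulVec d)) ?_
    · rw [← key]
      simp only [PiLp.inner_apply, RCLike.inner_apply', WithLp.equiv_symm_apply]
      rfl
    · intro t
      rw [WithLp.equiv_symm_apply, ← WithLp.toLp_smul, ← WithLp.toLp_sub]
      have h1 : g - t • Hb.mulVec d = be - Hb.mulVec (y + t • d) := by
        rw [hg, mulVec_add, mulVec_smul]
        abel
      calc ‖(WithLp.equiv 2 (Fin (m+1) → ℂ)).symm g‖ = norm2 g := rfl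
        _ = norm2 (V.mulVec g) := (hnorm2V g).symm
        _ = norm2 rm := by rw [hrmg]
        _ ≤ norm2 (b - A.mulVec ((V.submatrix id Fin.castSucc).mulVec (y + t • d))) :=
            hmin _
        _ = norm2 (V.mulVec (be - Hb.mulVec (y + t • d))) := by rw [hkey]
        _ = norm2 (be - Hb.mulVec (y + t • d)) := hnorm2V _
        _ = ‖(WithLp.equiv 2 (Fin (m+1) → ℂ)).symm (g - t • Hb.mulVec d)‖ := by
            rw [h1]; rfl
  -- coefficients for xF
  obtain ⟨a, ha⟩ : ∃ a : {c : Fin (m+1) // (c : ℕ) < i} → ℂ,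
      (∑ j, a j • fun r => V r j.1) = xF := by
    have hset : {w : Fin n → ℂ | ∃ c : Fin (m + 1), (c : ℕ) < i ∧ w = fun r => V r c}
        = Set.range (fun c : {c : Fin (m+1) // (c : ℕ) < i} => fun r => V r c.1) := by
      ext w
      constructor
      · rintro ⟨c, hc, rfl⟩; exact ⟨⟨c, hc⟩, rfl⟩
      · rintro ⟨⟨c, hc⟩, rfl⟩; exact ⟨c, hc, rfl⟩
    rw [hset] at hxF
    exact (Submodule.mem_span_range_iff_exists_fun ℂ).mp hxF
  -- the coefficient vector t
  set t : Fin (m+1) → ℂ :=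
    ∑ j : {c : Fin (m+1) // (c : ℕ) < i}, a j • (Pi.single j.1 1 : Fin (m+1) → ℂ) with ht
  have ht0 : ∀ c : Fin (m+1), ¬((c : ℕ) < i) → t c = 0 := by
    intro c hc
    rw [ht, Finset.sum_apply]
    refine Finset.sum_eq_zero fun j _ => ?_
    have hne : ¬(c = (j.1 : Fin (m+1))) := by
      intro h
      exact hc (h ▸ j.2)
    simp only [Pi.smul_apply, smul_eq_mul, Pi.single_apply, if_neg hne, mul_zero]
  have hxFt : xF = V.mulVec t := by
    rw [← ha]
    have h1 : V.mulVec t = ∑ j : {c : Fin (m+1) // (c : ℕ) < i},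
        a j • V.mulVec (Pi.single j.1 1 : Fin (m+1) → ℂ) := by
      rw [show V.mulVec t = V.mulVecLin t from rfl, ht, map_sum]
      simp only [_root_.map_smul]
      rfl
    rw [h1]
    refine (Finset.sum_congr rfl fun j _ => ?_)
    rw [mulVec_single]
    simp
    rfl
  set t' : Fin m → ℂ := fun j => t j.castSucc with ht'
  have ht'0 : ∀ j : Fin m, i ≤ (j : ℕ) → t' j = 0 := by
    intro j hj
    exact ht0 _ (by simp only [Fin.coe_castSucc]; omega)
  have hsubt : V.mulVec t = (V.submatrix id Fin.castSucc).mulVec t' := by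
    funext r
    show (∑ c, V r c * t c) = ∑ j, V.submatrix id Fin.castSucc r j * t' j
    rw [Fin.sum_univ_castSucc]
    have hlast : t (Fin.last m) = 0 := ht0 _ (by simp only [Fin.val_last]; omega)
    rw [hlast, mul_zero, add_zero]
    rfl
  set u : Fin (m+1) → ℂ := be - Hb.mulVec t' with hu
  have hrFu : rF = V.mulVec u := by
    rw [hrF, hxFt, hsubt, hkey]
  set I : Fin (m+1) := ⟨i, by omega⟩ with hI
  have hstar1 : ∀ c : Fin (m+1), star (Pi.single c 1 : Fin (m+1) → ℂ) = (Pi.single c 1 : Fin (m+1) → ℂ) := by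
    intro c
    funext d
    simp [Pi.single_apply, apply_ite (star : ℂ → ℂ)]
  have hcol : ∀ c : Fin (m+1), (fun r => V r c) = V.mulVec (Pi.single c 1 : Fin (m+1) → ℂ) := by
    intro c
    funext r
    rw [mulVec_single]
    show V r c = V r c * 1
    rw [mul_one]
  have hu_lt : ∀ c : Fin (m+1), (c : ℕ) < i → u c = 0 := by
    intro c hc
    have h := horth c hc
    rw [hrFu, hcol c, hdot, hstar1, single_dotProduct, one_mul] at h
    exact h
  have hu_gt : ∀ c : Fin (m+1), i < (c : ℕ) → u c = 0 := by
    intro c hc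
    have h1 : be c = 0 := by
      rw [hbe]
      refine Pi.single_eq_of_ne ?_ _
      intro h
      rw [h] at hc
      simp at hc
    have h2 : Hb.mulVec t' c = 0 := by
      show (∑ j, Hb c j * t' j) = 0
      refine Finset.sum_eq_zero fun j _ => ?_
      by_cases hj : (j : ℕ) < i
      · rw [hHess c j (by omega), zero_mul]
      · rw [ht'0 j (by omega), mul_zero]
    show be c - Hb.mulVec t' c = 0
    rw [h1, h2, sub_zero]
  have hune : ∀ c : Fin (m+1), c ≠ I → u c = 0 := by
    intro c hc
    rcases lt_trichotomy ((c : ℕ)) i with h | h | h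
    · exact hu_lt c h
    · exact absurd (Fin.ext h : c = I) hc
    · exact hu_gt c h
  have hgI : star (fun r => V r I) ⬝ᵥ rm = g I := by
    rw [hrmg, hcol I, hdot, hstar1, single_dotProduct, one_mul]
  have hsum1 : star g ⬝ᵥ u = (starRingEnd ℂ) (g I) * u I := by
    rw [dotProduct, Finset.sum_eq_single I]
    · rfl
    · intro c _ hc
      rw [hune c hc, mul_zero]
    · intro h
      exact absurd (Finset.mem_univ I) h
  have hsum2 : star g ⬝ᵥ u = star g ⬝ᵥ g := by
    rw [hu, hg, dotProduct_sub, dotProduct_sub, hperp t', hperp y]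
  have hgu : (starRingEnd ℂ) (g I) * u I = ((∑ c, Complex.normSq (g c) : ℝ) : ℂ) := by
    rw [← hsum1, hsum2, dot_self_eq]
  have habs : ‖(starRingEnd ℂ) (g I) * u I‖ = ‖((∑ c, Complex.normSq (g c) : ℝ) : ℂ)‖ :=
    congrArg _ hgu
  rw [norm_mul, Complex.norm_conj, Complex.norm_real, Real.norm_eq_abs,
    abs_of_nonneg (Finset.sum_nonneg fun c _ => Complex.normSq_nonneg _)] at habs
  have hnrF : norm2 rF = ‖u I‖ := by
    rw [hrFu, hnorm2V, norm2_eq_sqrt, Finset.sum_eq_single I]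
    · rw [Complex.norm_def]
    · intro c _ hc
      rw [hune c hc, Complex.normSq_zero]
    · intro h
      exact absurd (Finset.mem_univ I) h
  have hfin : ‖star (fun r => V r I) ⬝ᵥ rm‖ * norm2 rF = (norm2 rm) ^ 2 := by
    rw [hgI, hnrF, habs, hrmg, hnorm2V, norm2_sq]
  exact hfin
end

section
/- Partial stagnation as singularity of the difference of inverse residual Gram matrices: Let P, Q ∈ ℂ^{p×p} be Hermitian positive definite matrices such that P − Q is positive semidefinite. Then there exists a nonzero vector u ∈ ℂ^p with u* P u = u* Q u if and only if the matrix Q^{-1} − P^{-1} is singular. (Applied with P = ⟨R_{m−s}, R_{m−s}⟩ and Q = ⟨R_m, R_m⟩ for block GMRES residuals, this characterizes stagnation with respect to a direction u as singularity of ⟨R_m,R_m⟩^{-1} − ⟨R_{m−s},R_{m−s}⟩^{-1}, equivalently as non-existence of the corresponding block FOM solution.) -/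
open Matrix ComplexOrder

/-- **Partial stagnation as singularity of the difference of inverse residual Gram matrices.**
Let `P, Q ∈ ℂ^{p×p}` be Hermitian positive definite with `P - Q` positive semidefinite.  Then
there exists a nonzero `u ∈ ℂ^p` with `u^* P u = u^* Q u` if and only if `Q⁻¹ - P⁻¹` is
singular. -/
theorem partial_stagnation_iff_singular_inverse_difference
    {p : ℕ} (P Q : Matrix (Fin p) (Fin p) ℂ)
    (hP : P.PosDef) (hQ : Q.PosDef) (hPQ : (P - Q).PosSemidef) :
    (∃ u : Fin p → ℂ, u ≠ 0 ∧ star u ⬝ᵥ P *ᵥ u = star u ⬝ᵥ Q *ᵥ u) ↔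
      (Q⁻¹ - P⁻¹).det = 0 := by
  have hPdet : IsUnit P.det := isUnit_iff_ne_zero.mpr (ne_of_gt hP.det_pos)
  have hQdet : IsUnit Q.det := isUnit_iff_ne_zero.mpr (ne_of_gt hQ.det_pos)
  have key : Q⁻¹ - P⁻¹ = Q⁻¹ * (P - Q) * P⁻¹ := by
    rw [Matrix.mul_sub, Matrix.sub_mul, Matrix.mul_nonsing_inv_cancel_right _ _ hPdet,
      Matrix.nonsing_inv_mul _ hQdet, Matrix.one_mul]
  have hdet : (Q⁻¹ - P⁻¹).det = 0 ↔ (P - Q).det = 0 := by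
    rw [key, det_mul, det_mul, mul_eq_zero, mul_eq_zero]
    simp [Matrix.det_nonsing_inv, Ring.inverse_eq_inv',
      inv_eq_zero, ne_of_gt hP.det_pos, ne_of_gt hQ.det_pos]
  rw [hdet, ← Matrix.exists_mulVec_eq_zero_iff]
  constructor
  · rintro ⟨u, hu, h⟩
    refine ⟨u, hu, (hPQ.dotProduct_mulVec_zero_iff u).mp ?_⟩
    rw [sub_mulVec, dotProduct_sub, h, sub_self]
  · rintro ⟨u, hu, h⟩
    refine ⟨u, hu, ?_⟩
    have := (hPQ.dotProduct_mulVec_zero_iff u).mpr h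
    rw [sub_mulVec, dotProduct_sub, sub_eq_zero] at this
    exact this
end
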